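/- arXiv:1010.0588 — 10 statements merged into one kernel-verified Lean document; each statement's English description precedes it below -/
import Mathlib

section
/- The map F(τ,σ) = (t(τ,σ), χ(τ,σ)) is a bijection from U₁ = {(τ,σ) : τ > 0 and 1 ≤ σ < σ∞(τ)} onto (0,∞) × [0,∞). -/
open Real MeasureTheory Filter Set intervalIntegral

noncomputable section

/-- Synchronous time along the orthogonal spacelike geodesic: t(τ,σ) = b(a(τ)/√σ). -/
def tF (a b : ℝ → ℝ) (τ σ : ℝ) : ℝ := b (a τ / Real.sqrt σ)

/-- Comoving coordinate along the orthogonal spacelike geodesic: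
χ(τ,σ) = (1/2)∫₁^σ ḃ(a(τ)/√s) s^{-1/2}(s-1)^{-1/2} ds. -/
def chiF (a b : ℝ → ℝ) (τ σ : ℝ) : ℝ :=
  (1 / 2) * ∫ s in (1:ℝ)..σ, deriv b (a τ / Real.sqrt s) / (Real.sqrt s * Real.sqrt (s - 1))

/-- Proper arc length along the orthogonal spacelike geodesic:
ρ_τ(σ) = (a(τ)/2)∫₁^σ ḃ(a(τ)/√s) s^{-3/2}(s-1)^{-1/2} ds. -/
def rhoF (a b : ℝ → ℝ) (τ σ : ℝ) : ℝ :=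
  (a τ / 2) *
    ∫ s in (1:ℝ)..σ, deriv b (a τ / Real.sqrt s) / (s * Real.sqrt s * Real.sqrt (s - 1))


def G (f : ℝ → ℝ) (c m w : ℝ) : ℝ :=
  f (c / Real.sqrt (m + (1 - m) * w)) / Real.sqrt (m + (1 - m) * w) / Real.sqrt w

def J (f : ℝ → ℝ) (c m : ℝ) : ℝ :=
  Real.sqrt (1 - m) / 2 * ∫ w in (0:ℝ)..1, G f c m w

lemma chi_eq_J (f : ℝ → ℝ) (c σ : ℝ) (hσ : 1 ≤ σ) :
    (1/2) * (∫ s in (1:ℝ)..σ, f (c * Real.sqrt σ / Real.sqrt s) / (Real.sqrt s * Real.sqrt (s-1)))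
      = J f c (1/σ) := by
  rcases eq_or_lt_of_le hσ with h1 | h1
  · rw [← h1]
    simp [J, G]
  have hσ0 : (0:ℝ) < σ := by linarith
  set m : ℝ := 1/σ with hm
  have hm0 : 0 < m := by positivity
  have hm1 : m < 1 := by rw [hm]; rw [div_lt_one hσ0]; exact h1
  set φ : ℝ → ℝ := fun s => f (c * Real.sqrt σ / Real.sqrt s) / (Real.sqrt s * Real.sqrt (s-1))
    with hφ
  set ψ : ℝ → ℝ := fun u => f (c / Real.sqrt u) / (Real.sqrt u * Real.sqrt (u - m)) with hψ
  have hS : Real.sqrt σ ≠ 0 := (Real.sqrt_pos.2 hσ0).ne'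
  have h4 : (Real.sqrt σ) ^ 2 = σ := Real.sq_sqrt hσ0.le
  -- step 1 : ∫_1^σ φ = ∫_m^1 (σ * φ (σ u)) du
  have step1 : (∫ s in (1:ℝ)..σ, φ s) = ∫ u in m..(1:ℝ), σ * φ (σ * u) := by
    rw [intervalIntegral.integral_const_mul]
    have := intervalIntegral.smul_integral_comp_mul_left φ (a := m) (b := 1) σ
    rw [smul_eq_mul] at this
    rw [this]
    congr 1
    · rw [hm, mul_one_div_cancel hσ0.ne']
    · ring
  -- pointwise identity : σ * φ (σ u) = ψ u on [m,1]
  have hpt : ∀ u ∈ Set.uIcc m (1:ℝ), σ * φ (σ * u) = ψ u := by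
    intro u hu
    rw [Set.uIcc_of_le hm1.le] at hu
    have hu0 : 0 < u := lt_of_lt_of_le hm0 hu.1
    have hA : Real.sqrt u ≠ 0 := (Real.sqrt_pos.2 hu0).ne'
    have h1 : Real.sqrt (σ * u) = Real.sqrt σ * Real.sqrt u := Real.sqrt_mul hσ0.le u
    have h2 : Real.sqrt (σ * u - 1) = Real.sqrt σ * Real.sqrt (u - m) := by
      rw [← Real.sqrt_mul hσ0.le]
      congr 1
      rw [mul_sub, hm, mul_one_div_cancel hσ0.ne']
    have h3 : c * Real.sqrt σ / Real.sqrt (σ * u) = c / Real.sqrt u := by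
      rw [h1]
      field_simp
    show σ * (f (c * Real.sqrt σ / Real.sqrt (σ*u)) / (Real.sqrt (σ*u) * Real.sqrt (σ*u-1)))
        = f (c / Real.sqrt u) / (Real.sqrt u * Real.sqrt (u - m))
    rw [h3, h1, h2]
    have key : ∀ X S A B : ℝ, S ≠ 0 → S^2 * (X/(S*A*(S*B))) = X/(A*B) := by
      intro X S A B hs
      rw [show S*A*(S*B) = S^2*(A*B) by ring, ← mul_div_assoc]
      exact mul_div_mul_left X (A*B) (pow_ne_zero 2 hs)
    have := key (f (c / Real.sqrt u)) (Real.sqrt σ) (Real.sqrt u) (Real.sqrt (u-m)) hS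
    rw [h4] at this
    exact this
  have step2 : (∫ s in (1:ℝ)..σ, φ s) = ∫ u in m..(1:ℝ), ψ u := by
    rw [step1]; exact intervalIntegral.integral_congr hpt
  -- step 3 : second substitution u = (1-m) w + m
  have step3 : (∫ u in m..(1:ℝ), ψ u) = (1-m) • ∫ w in (0:ℝ)..1, ψ ((1-m) * w + m) := by
    rw [intervalIntegral.smul_integral_comp_mul_add ψ (1-m) m]
    norm_num
  -- pointwise identity : (ψ ((1-m) w + m)) = (√(1-m))⁻¹ * G f c m w
  have hpt2 : ∀ w ∈ Set.uIcc (0:ℝ) 1, ψ ((1-m) * w + m) = (Real.sqrt (1-m))⁻¹ * G f c m w := by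
    intro w hw
    rw [Set.uIcc_of_le (by norm_num : (0:ℝ) ≤ 1)] at hw
    have hw0 : 0 ≤ w := hw.1
    have h7 : (1-m) * w + m = m + (1-m) * w := by ring
    have hu0 : 0 < m + (1-m) * w := by nlinarith
    have hU : Real.sqrt (m + (1-m)*w) ≠ 0 := (Real.sqrt_pos.2 hu0).ne'
    have hC : Real.sqrt (1-m) ≠ 0 := (Real.sqrt_pos.2 (by linarith)).ne'
    have h5 : m + (1-m)*w - m = (1-m) * w := by ring
    have h6 : Real.sqrt ((1-m) * w) = Real.sqrt (1-m) * Real.sqrt w :=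
      Real.sqrt_mul (by linarith) w
    show f (c / Real.sqrt ((1-m)*w+m)) / (Real.sqrt ((1-m)*w+m) * Real.sqrt ((1-m)*w+m - m))
        = (Real.sqrt (1-m))⁻¹ * G f c m w
    rw [h7, h5, h6, G]
    have key : ∀ X A B C : ℝ, X/(A*(B*C)) = B⁻¹ * (X/A/C) := by
      intro X A B C
      rw [div_div, inv_mul_eq_div, div_div]
      ring
    exact key _ _ _ _
  have step4 : (∫ w in (0:ℝ)..1, ψ ((1-m) * w + m))
      = (Real.sqrt (1-m))⁻¹ * ∫ w in (0:ℝ)..1, G f c m w := by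
    rw [intervalIntegral.integral_congr hpt2, intervalIntegral.integral_const_mul]
  rw [step2, step3, step4, smul_eq_mul, J]
  rw [show (1-m) * ((Real.sqrt (1-m))⁻¹ * ∫ w in (0:ℝ)..1, G f c m w)
      = ((1-m) / Real.sqrt (1-m)) * ∫ w in (0:ℝ)..1, G f c m w by
        rw [div_eq_mul_inv]; ring]
  rw [Real.div_sqrt]
  ring


lemma sqrtinv_int : IntervalIntegrable (fun w : ℝ => (Real.sqrt w)⁻¹) volume 0 1 := by
  have h := intervalIntegral.intervalIntegrable_rpow' (a := (0:ℝ)) (b := 1)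
    (r := -(1/2)) (by norm_num)
  rw [intervalIntegrable_iff] at h ⊢
  refine h.congr_fun ?_ measurableSet_uIoc
  intro w hw
  rw [Set.uIoc_of_le (by norm_num : (0:ℝ) ≤ 1)] at hw
  show w ^ (-(1/2) : ℝ) = (Real.sqrt w)⁻¹
  rw [Real.sqrt_eq_rpow, ← Real.rpow_neg hw.1.le]

-- u facts
lemma u_mem {m w : ℝ} (hm0 : 0 < m) (hm1 : m ≤ 1) (hw0 : 0 ≤ w) (hw1 : w ≤ 1) :
    0 < m + (1-m)*w ∧ m ≤ m + (1-m)*w ∧ m + (1-m)*w ≤ 1 :=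
  ⟨by nlinarith, by nlinarith, by nlinarith⟩

lemma arg_facts {ainf c u : ℝ} (h0 : 0 ≤ ainf) (hc : ainf < c) (hu0 : 0 < u) (hu1 : u ≤ 1) :
    ainf < c / Real.sqrt u ∧ c ≤ c / Real.sqrt u := by
  have hcpos : 0 < c := lt_of_le_of_lt h0 hc
  have hs0 : 0 < Real.sqrt u := Real.sqrt_pos.2 hu0
  have hs1 : Real.sqrt u ≤ 1 := by
    rw [show (1:ℝ) = Real.sqrt 1 by simp]
    exact Real.sqrt_le_sqrt hu1
  have h2 : c ≤ c / Real.sqrt u := by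
    rw [le_div_iff₀ hs0]
    nlinarith
  exact ⟨lt_of_lt_of_le hc h2, h2⟩

lemma G_nonneg {f : ℝ → ℝ} {ainf c m : ℝ} (h0 : 0 ≤ ainf) (hc : ainf < c)
    (hf_pos : ∀ y, ainf < y → 0 < f y)
    (hm0 : 0 < m) (hm1 : m ≤ 1) {w : ℝ} (hw0 : 0 ≤ w) (hw1 : w ≤ 1) :
    0 ≤ G f c m w := by
  obtain ⟨hu0, _, hu1⟩ := u_mem hm0 hm1 hw0 hw1
  obtain ⟨ha1, _⟩ := arg_facts h0 hc hu0 hu1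
  exact div_nonneg (div_nonneg (hf_pos _ ha1).le (Real.sqrt_nonneg _)) (Real.sqrt_nonneg _)

lemma G_pos {f : ℝ → ℝ} {ainf c m : ℝ} (h0 : 0 ≤ ainf) (hc : ainf < c)
    (hf_pos : ∀ y, ainf < y → 0 < f y)
    (hm0 : 0 < m) (hm1 : m ≤ 1) {w : ℝ} (hw0 : 0 < w) (hw1 : w ≤ 1) :
    0 < G f c m w := by
  obtain ⟨hu0, _, hu1⟩ := u_mem hm0 hm1 hw0.le hw1
  obtain ⟨ha1, _⟩ := arg_facts h0 hc hu0 hu1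
  exact div_pos (div_pos (hf_pos _ ha1) (Real.sqrt_pos.2 hu0)) (Real.sqrt_pos.2 hw0)

lemma G_mono {f : ℝ → ℝ} {ainf c m m' : ℝ} (h0 : 0 ≤ ainf) (hc : ainf < c)
    (hf_pos : ∀ y, ainf < y → 0 < f y) (hf_mono : MonotoneOn f (Set.Ioi ainf))
    (hm'0 : 0 < m') (hmm : m' ≤ m) (hm1 : m ≤ 1) {w : ℝ} (hw0 : 0 ≤ w) (hw1 : w ≤ 1) :
    G f c m w ≤ G f c m' w := by
  have hm0 : 0 < m := lt_of_lt_of_le hm'0 hmm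
  obtain ⟨hu0, _, hu1⟩ := u_mem hm0 hm1 hw0 hw1
  obtain ⟨hu'0, _, hu'1⟩ := u_mem hm'0 (le_trans hmm hm1) hw0 hw1
  obtain ⟨ha1, _⟩ := arg_facts h0 hc hu0 hu1
  obtain ⟨ha'1, _⟩ := arg_facts h0 hc hu'0 hu'1
  have huu : m' + (1-m')*w ≤ m + (1-m)*w := by nlinarith
  have hsu : Real.sqrt (m' + (1-m')*w) ≤ Real.sqrt (m + (1-m)*w) := Real.sqrt_le_sqrt huu
  have hsu' : 0 < Real.sqrt (m' + (1-m')*w) := Real.sqrt_pos.2 hu'0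
  have hargle : c / Real.sqrt (m + (1-m)*w) ≤ c / Real.sqrt (m' + (1-m')*w) :=
    div_le_div_of_nonneg_left (le_of_lt (lt_of_le_of_lt h0 hc)) hsu' hsu
  have hfle : f (c / Real.sqrt (m + (1-m)*w)) ≤ f (c / Real.sqrt (m' + (1-m')*w)) :=
    hf_mono (Set.mem_Ioi.2 ha1) (Set.mem_Ioi.2 ha'1) hargle
  have h1 : f (c / Real.sqrt (m + (1-m)*w)) / Real.sqrt (m + (1-m)*w)
      ≤ f (c / Real.sqrt (m' + (1-m')*w)) / Real.sqrt (m' + (1-m')*w) :=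
    div_le_div₀ (le_trans (hf_pos _ ha1).le hfle) hfle hsu' hsu
  rcases eq_or_lt_of_le hw0 with rfl | hw0'
  · simp [G]
  · simp only [G]
    exact (div_le_div_iff_of_pos_right (Real.sqrt_pos.2 hw0')).2 h1

lemma hcont_aux {f : ℝ → ℝ} {ainf c m : ℝ} (h0 : 0 ≤ ainf) (hc : ainf < c)
    (hf_cont : ContinuousOn f (Set.Ioi ainf)) (hm0 : 0 < m) (hm1 : m ≤ 1)
    {s : Set ℝ} (hs : s ⊆ Set.Icc 0 1) :
    ContinuousOn (fun w => f (c / Real.sqrt (m + (1-m)*w)) / Real.sqrt (m + (1-m)*w)) s := by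
  have hsq : ContinuousOn (fun w : ℝ => Real.sqrt (m + (1-m)*w)) s :=
    (Real.continuous_sqrt.comp (by continuity)).continuousOn
  have hsqne : ∀ w ∈ s, Real.sqrt (m + (1-m)*w) ≠ 0 := by
    intro w hw
    obtain ⟨hu0, _, _⟩ := u_mem hm0 hm1 (hs hw).1 (hs hw).2
    exact (Real.sqrt_pos.2 hu0).ne'
  have harg : ContinuousOn (fun w : ℝ => c / Real.sqrt (m + (1-m)*w)) s :=
    continuousOn_const.div hsq hsqne
  have hmaps : Set.MapsTo (fun w : ℝ => c / Real.sqrt (m + (1-m)*w)) s (Set.Ioi ainf) := by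
    intro w hw
    obtain ⟨hu0, _, hu1⟩ := u_mem hm0 hm1 (hs hw).1 (hs hw).2
    exact Set.mem_Ioi.2 (arg_facts h0 hc hu0 hu1).1
  exact (hf_cont.comp harg hmaps).div hsq hsqne

lemma G_eq_mul (f : ℝ → ℝ) (c m : ℝ) : G f c m = fun w =>
    (f (c / Real.sqrt (m + (1-m)*w)) / Real.sqrt (m + (1-m)*w)) * (Real.sqrt w)⁻¹ := by
  funext w; rw [G, div_eq_mul_inv]

lemma G_intable {f : ℝ → ℝ} {ainf c m : ℝ} (h0 : 0 ≤ ainf) (hc : ainf < c)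
    (hf_cont : ContinuousOn f (Set.Ioi ainf)) (hm0 : 0 < m) (hm1 : m ≤ 1) :
    IntervalIntegrable (G f c m) volume 0 1 := by
  rw [G_eq_mul]
  refine IntervalIntegrable.continuousOn_mul sqrtinv_int ?_
  rw [Set.uIcc_of_le (by norm_num : (0:ℝ) ≤ 1)]
  exact hcont_aux h0 hc hf_cont hm0 hm1 (le_refl _)

lemma J_one (f : ℝ → ℝ) (c : ℝ) : J f c 1 = 0 := by simp [J]

lemma J_nonneg {f : ℝ → ℝ} {ainf c m : ℝ} (h0 : 0 ≤ ainf) (hc : ainf < c)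
    (hf_pos : ∀ y, ainf < y → 0 < f y) (hm0 : 0 < m) (hm1 : m ≤ 1) :
    0 ≤ J f c m := by
  refine mul_nonneg (by positivity) ?_
  exact intervalIntegral.integral_nonneg (by norm_num)
    (fun w hw => G_nonneg h0 hc hf_pos hm0 hm1 hw.1 hw.2)

lemma I_pos {f : ℝ → ℝ} {ainf c m : ℝ} (h0 : 0 ≤ ainf) (hc : ainf < c)
    (hf_pos : ∀ y, ainf < y → 0 < f y) (hf_cont : ContinuousOn f (Set.Ioi ainf))
    (hm0 : 0 < m) (hm1 : m ≤ 1) :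
    0 < ∫ w in (0:ℝ)..1, G f c m w := by
  refine intervalIntegral_pos_of_pos_on (G_intable h0 hc hf_cont hm0 hm1) ?_ (by norm_num)
  exact fun w hw => G_pos h0 hc hf_pos hm0 hm1 hw.1 hw.2.le

lemma J_strictAnti {f : ℝ → ℝ} {ainf c m m' : ℝ} (h0 : 0 ≤ ainf) (hc : ainf < c)
    (hf_pos : ∀ y, ainf < y → 0 < f y) (hf_mono : MonotoneOn f (Set.Ioi ainf))
    (hf_cont : ContinuousOn f (Set.Ioi ainf))
    (hm'0 : 0 < m') (hmm : m' < m) (hm1 : m ≤ 1) :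
    J f c m < J f c m' := by
  have hm0 : 0 < m := lt_trans hm'0 hmm
  have hm'1 : m' ≤ 1 := le_trans hmm.le hm1
  have hI' : 0 < ∫ w in (0:ℝ)..1, G f c m' w := I_pos h0 hc hf_pos hf_cont hm'0 hm'1
  have hII : (∫ w in (0:ℝ)..1, G f c m w) ≤ ∫ w in (0:ℝ)..1, G f c m' w :=
    intervalIntegral.integral_mono_on (by norm_num)
      (G_intable h0 hc hf_cont hm0 hm1) (G_intable h0 hc hf_cont hm'0 hm'1)
      (fun w hw => G_mono h0 hc hf_pos hf_mono hm'0 hmm.le hm1 hw.1 hw.2)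
  have hsq : Real.sqrt (1-m) / 2 < Real.sqrt (1-m') / 2 := by
    have := Real.sqrt_lt_sqrt (by linarith : (0:ℝ) ≤ 1 - m) (by linarith : 1 - m < 1 - m')
    linarith
  calc J f c m = Real.sqrt (1-m)/2 * ∫ w in (0:ℝ)..1, G f c m w := rfl
    _ ≤ Real.sqrt (1-m)/2 * ∫ w in (0:ℝ)..1, G f c m' w :=
        mul_le_mul_of_nonneg_left hII (by positivity)
    _ < Real.sqrt (1-m')/2 * ∫ w in (0:ℝ)..1, G f c m' w :=
        mul_lt_mul_of_pos_right hsq hI'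
    _ = J f c m' := rfl

lemma J_contOn {f : ℝ → ℝ} {ainf c m₁ : ℝ} (h0 : 0 ≤ ainf) (hc : ainf < c)
    (hf_pos : ∀ y, ainf < y → 0 < f y) (hf_mono : MonotoneOn f (Set.Ioi ainf))
    (hf_cont : ContinuousOn f (Set.Ioi ainf)) (hm₁0 : 0 < m₁) (hm₁1 : m₁ < 1) :
    ContinuousOn (J f c) (Set.Icc m₁ 1) := by
  have hI : ContinuousOn (fun m => ∫ w in (0:ℝ)..1, G f c m w) (Set.Icc m₁ 1) := by
    intro m₀ hm₀
    have hC : (0:ℝ) ≤ f (c / Real.sqrt m₁) / Real.sqrt m₁ := by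
      have := (arg_facts h0 hc hm₁0 hm₁1.le).1
      exact div_nonneg (hf_pos _ this).le (Real.sqrt_nonneg _)
    refine intervalIntegral.continuousWithinAt_of_dominated_interval
      (bound := fun w => (f (c / Real.sqrt m₁) / Real.sqrt m₁) * (Real.sqrt w)⁻¹)
      ?_ ?_ ?_ ?_
    · filter_upwards [self_mem_nhdsWithin] with m hm
      rw [Set.uIoc_of_le (by norm_num : (0:ℝ) ≤ 1)]
      rw [G_eq_mul]
      refine ContinuousOn.aestronglyMeasurable ?_ measurableSet_Ioc
      refine ContinuousOn.mul (hcont_aux h0 hc hf_cont (lt_of_lt_of_le hm₁0 hm.1) hm.2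
        (Set.Ioc_subset_Icc_self.trans (Set.Icc_subset_Icc_left (by norm_num)))) ?_
      · exact Real.continuous_sqrt.continuousOn.inv₀
          (fun w hw => (Real.sqrt_pos.2 hw.1).ne')
    · filter_upwards [self_mem_nhdsWithin] with m hm
      refine Filter.Eventually.of_forall (fun w => ?_)
      intro hw
      rw [Set.uIoc_of_le (by norm_num : (0:ℝ) ≤ 1)] at hw
      have hm0 : 0 < m := lt_of_lt_of_le hm₁0 hm.1
      obtain ⟨hu0, hum, hu1⟩ := u_mem hm0 hm.2 hw.1.le hw.2
      obtain ⟨ha1, _⟩ := arg_facts h0 hc hu0 hu1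
      obtain ⟨ha1', _⟩ := arg_facts h0 hc hm₁0 hm₁1.le
      have hle1 : f (c / Real.sqrt (m + (1-m)*w)) / Real.sqrt (m + (1-m)*w)
          ≤ f (c / Real.sqrt m₁) / Real.sqrt m₁ := by
        have hum₁ : m₁ ≤ m + (1-m)*w := le_trans hm.1 hum
        have hsle : Real.sqrt m₁ ≤ Real.sqrt (m + (1-m)*w) := Real.sqrt_le_sqrt hum₁
        have hsp : 0 < Real.sqrt m₁ := Real.sqrt_pos.2 hm₁0
        have hargle : c / Real.sqrt (m + (1-m)*w) ≤ c / Real.sqrt m₁ :=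
          div_le_div_of_nonneg_left (le_of_lt (lt_of_le_of_lt h0 hc)) hsp hsle
        exact div_le_div₀ (hf_pos _ ha1').le
          (hf_mono (Set.mem_Ioi.2 ha1) (Set.mem_Ioi.2 ha1') hargle) hsp hsle
      rw [Real.norm_eq_abs, abs_of_nonneg (G_nonneg h0 hc hf_pos hm0 hm.2 hw.1.le hw.2)]
      rw [G_eq_mul]
      exact mul_le_mul_of_nonneg_right hle1 (by positivity)
    · exact sqrtinv_int.const_mul _
    · refine Filter.Eventually.of_forall (fun w => ?_)
      intro hw
      rw [Set.uIoc_of_le (by norm_num : (0:ℝ) ≤ 1)] at hw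
      obtain ⟨hu0, hum, hu1⟩ := u_mem (lt_of_lt_of_le hm₁0 hm₀.1) hm₀.2 hw.1.le hw.2
      obtain ⟨ha1, _⟩ := arg_facts h0 hc hu0 hu1
      have hsqne : Real.sqrt (m₀ + (1-m₀)*w) ≠ 0 := (Real.sqrt_pos.2 hu0).ne'
      have hinner : ContinuousAt (fun m : ℝ => m + (1-m)*w) m₀ := by fun_prop
      have hsq : ContinuousAt (fun m : ℝ => Real.sqrt (m + (1-m)*w)) m₀ :=
        Real.continuous_sqrt.continuousAt.comp hinner
      have harg : ContinuousAt (fun m : ℝ => c / Real.sqrt (m + (1-m)*w)) m₀ :=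
        continuousAt_const.div hsq hsqne
      have hfc : ContinuousAt f (c / Real.sqrt (m₀ + (1-m₀)*w)) :=
        hf_cont.continuousAt (isOpen_Ioi.mem_nhds ha1)
      have hcomp : ContinuousAt (fun m : ℝ => f (c / Real.sqrt (m + (1-m)*w))) m₀ :=
        ContinuousAt.comp (g := f) (f := fun m : ℝ => c / Real.sqrt (m + (1-m)*w)) hfc harg
      have : ContinuousAt (fun m : ℝ => G f c m w) m₀ := by
        rw [show (fun m : ℝ => G f c m w) = fun m : ℝ =>
          f (c / Real.sqrt (m + (1-m)*w)) / Real.sqrt (m + (1-m)*w) / Real.sqrt w from rfl]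
        exact (hcomp.div hsq hsqne).div continuousAt_const (Real.sqrt_pos.2 hw.1).ne'
      exact this.continuousWithinAt
  have hpre : ContinuousOn (fun m : ℝ => Real.sqrt (1-m) / 2) (Set.Icc m₁ 1) := by
    fun_prop
  exact hpre.mul hI

lemma J_large {f : ℝ → ℝ} {ainf c : ℝ} (h0 : 0 ≤ ainf) (hc : ainf < c)
    (hf_pos : ∀ y, ainf < y → 0 < f y) (hf_mono : MonotoneOn f (Set.Ioi ainf))
    (hf_cont : ContinuousOn f (Set.Ioi ainf)) (X : ℝ) :
    ∃ m : ℝ, 0 < m ∧ m < 1 ∧ X < J f c m := by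
  have hfc : 0 < f c := hf_pos c hc
  set K : ℝ := 8 * (|X| + 1) / f c with hK
  have hKpos : 0 < K := by positivity
  set m : ℝ := min (1/2) (Real.exp (-K)) with hm
  have hm0 : 0 < m := lt_min (by norm_num) (Real.exp_pos _)
  have hm1 : m < 1 := lt_of_le_of_lt (min_le_left _ _) (by norm_num)
  have hmhalf : m ≤ 1/2 := min_le_left _ _
  refine ⟨m, hm0, hm1, ?_⟩
  -- -log m ≥ K
  have hlog : K ≤ -Real.log m := by
    have : Real.log m ≤ Real.log (Real.exp (-K)) :=
      Real.log_le_log hm0 (min_le_right _ _)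
    rw [Real.log_exp] at this
    linarith
  -- I(m) ≥ ∫_m^1 G ≥ (f c/2) * (-log m)
  have hint1 : IntervalIntegrable (G f c m) volume 0 1 := G_intable h0 hc hf_cont hm0 hm1.le
  have hsub1 : Set.uIcc (0:ℝ) m ⊆ Set.uIcc (0:ℝ) 1 := by
    rw [Set.uIcc_of_le hm0.le, Set.uIcc_of_le (by norm_num : (0:ℝ) ≤ 1)]
    exact Set.Icc_subset_Icc_right hm1.le
  have hsub2 : Set.uIcc m (1:ℝ) ⊆ Set.uIcc (0:ℝ) 1 := by
    rw [Set.uIcc_of_le hm1.le, Set.uIcc_of_le (by norm_num : (0:ℝ) ≤ 1)]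
    exact Set.Icc_subset_Icc_left hm0.le
  have hint_left : IntervalIntegrable (G f c m) volume 0 m := hint1.mono_set hsub1
  have hint_right : IntervalIntegrable (G f c m) volume m 1 := hint1.mono_set hsub2
  have hsplit : (∫ w in (0:ℝ)..1, G f c m w)
      = (∫ w in (0:ℝ)..m, G f c m w) + ∫ w in m..(1:ℝ), G f c m w :=
    (intervalIntegral.integral_add_adjacent_intervals hint_left hint_right).symm
  have hleft_nonneg : 0 ≤ ∫ w in (0:ℝ)..m, G f c m w :=
    intervalIntegral.integral_nonneg hm0.le
      (fun w hw => G_nonneg h0 hc hf_pos hm0 hm1.le hw.1 (le_trans hw.2 hm1.le))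
  have hlow : ∀ w ∈ Set.Icc m 1, f c / Real.sqrt 2 * (1/w) ≤ G f c m w := by
    intro w hw
    have hw0 : 0 < w := lt_of_lt_of_le hm0 hw.1
    obtain ⟨hu0, hum, hu1⟩ := u_mem hm0 hm1.le hw0.le hw.2
    obtain ⟨ha1, ha2⟩ := arg_facts h0 hc hu0 hu1
    have hfle : f c ≤ f (c / Real.sqrt (m + (1-m)*w)) :=
      hf_mono (Set.mem_Ioi.2 hc) (Set.mem_Ioi.2 ha1) ha2
    have huw : m + (1-m)*w ≤ 2*w := by nlinarith [hw.1]
    have hden : Real.sqrt (m + (1-m)*w) * Real.sqrt w ≤ Real.sqrt 2 * w := by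
      have h1 : Real.sqrt (m + (1-m)*w) ≤ Real.sqrt (2*w) := Real.sqrt_le_sqrt huw
      have h2 : Real.sqrt (2*w) = Real.sqrt 2 * Real.sqrt w := Real.sqrt_mul (by norm_num) w
      calc Real.sqrt (m + (1-m)*w) * Real.sqrt w ≤ Real.sqrt (2*w) * Real.sqrt w :=
            mul_le_mul_of_nonneg_right h1 (Real.sqrt_nonneg _)
        _ = Real.sqrt 2 * (Real.sqrt w * Real.sqrt w) := by rw [h2]; ring
        _ = Real.sqrt 2 * w := by rw [Real.mul_self_sqrt hw0.le]
    have hdenpos : 0 < Real.sqrt (m + (1-m)*w) * Real.sqrt w :=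
      mul_pos (Real.sqrt_pos.2 hu0) (Real.sqrt_pos.2 hw0)
    have : f c / (Real.sqrt 2 * w) ≤ f (c / Real.sqrt (m + (1-m)*w))
        / (Real.sqrt (m + (1-m)*w) * Real.sqrt w) :=
      div_le_div₀ (le_trans hfc.le hfle) hfle hdenpos hden
    calc f c / Real.sqrt 2 * (1/w) = f c / (Real.sqrt 2 * w) := by
          rw [div_mul_div_comm, mul_one]
      _ ≤ f (c / Real.sqrt (m + (1-m)*w)) / (Real.sqrt (m + (1-m)*w) * Real.sqrt w) := this
      _ = G f c m w := by rw [G, div_div]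
  have hint_low : IntervalIntegrable (fun w => f c / Real.sqrt 2 * (1/w)) volume m 1 := by
    apply ContinuousOn.intervalIntegrable
    rw [Set.uIcc_of_le hm1.le]
    exact (continuousOn_const.mul (continuousOn_const.div continuousOn_id
      (fun w hw => (lt_of_lt_of_le hm0 hw.1).ne')))
  have hlow_int : (∫ w in m..(1:ℝ), f c / Real.sqrt 2 * (1/w))
      ≤ ∫ w in m..(1:ℝ), G f c m w :=
    intervalIntegral.integral_mono_on hm1.le hint_low hint_right hlow
  have hval : (∫ w in m..(1:ℝ), f c / Real.sqrt 2 * (1/w)) = f c / Real.sqrt 2 * (-Real.log m) := by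
    rw [intervalIntegral.integral_const_mul, integral_one_div (by
      intro h
      rw [Set.uIcc_of_le hm1.le] at h
      exact absurd h.1 (not_le.2 hm0))]
    rw [Real.log_div (by norm_num) hm0.ne']
    norm_num
  -- combine
  have hIbig : f c / Real.sqrt 2 * (-Real.log m) ≤ ∫ w in (0:ℝ)..1, G f c m w := by
    rw [hsplit]
    have := le_trans (le_of_eq hval.symm) hlow_int
    linarith
  have hsq2 : Real.sqrt 2 ≤ 2 := by
    nlinarith [Real.sq_sqrt (show (0:ℝ) ≤ 2 by norm_num), Real.sqrt_nonneg 2]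
  have hlogpos : 0 < -Real.log m := lt_of_lt_of_le hKpos hlog
  have hI2 : f c / 2 * (-Real.log m) ≤ ∫ w in (0:ℝ)..1, G f c m w := by
    refine le_trans ?_ hIbig
    refine mul_le_mul_of_nonneg_right ?_ hlogpos.le
    exact div_le_div_of_nonneg_left hfc.le (by positivity) hsq2
  have hpre : (1:ℝ)/4 ≤ Real.sqrt (1-m) / 2 := by
    have h1 : (1:ℝ)/2 ≤ 1 - m := by linarith
    have h2 : (1:ℝ)/2 ≤ Real.sqrt (1-m) := by
      nlinarith [Real.sq_sqrt (show (0:ℝ) ≤ 1-m by linarith), Real.sqrt_nonneg (1-m)]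
    linarith
  have hIpos : 0 ≤ ∫ w in (0:ℝ)..1, G f c m w := le_trans (by positivity) hI2
  have : (1:ℝ)/4 * (f c / 2 * (-Real.log m)) ≤ J f c m := by
    rw [J]
    exact mul_le_mul hpre hI2 (by positivity) (by positivity)
  refine lt_of_lt_of_le ?_ this
  have h8 : f c / 8 * K = |X| + 1 := by
    rw [hK]; field_simp
  calc X ≤ |X| := le_abs_self X
    _ < |X| + 1 := by linarith
    _ = f c / 8 * K := h8.symm
    _ ≤ f c / 8 * (-Real.log m) := mul_le_mul_of_nonneg_left hlog (by positivity)
    _ = 1/4 * (f c / 2 * (-Real.log m)) := by ring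

/-- the map F(τ,σ) = (t(τ,σ), χ(τ,σ)) is a bijection from
U₁ = {(τ,σ) : τ > 0, 1 ≤ σ < σ∞(τ)} onto (0,∞) × [0,∞). -/
theorem fermi_map_bijective
    (a b : ℝ → ℝ) (ainf : ℝ)
    (ha_smooth : ContDiffOn ℝ (⊤ : ℕ∞) a (Set.Ioi 0))
    (ha_pos : ∀ t, 0 < t → 0 < a t)
    (ha_mono : StrictMonoOn a (Set.Ioi 0))
    (ha_deriv_pos : ∀ t, 0 < t → 0 < deriv a t)
    (ha_unbounded : Tendsto a atTop atTop)
    (hainf_nonneg : 0 ≤ ainf)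
    (hainf : Tendsto a (nhdsWithin 0 (Set.Ioi 0)) (nhds ainf))
    (hba : ∀ t, 0 < t → b (a t) = t)
    (hab : ∀ y, ainf < y → 0 < b y ∧ a (b y) = y)
    (hb_deriv : ∀ t, 0 < t → deriv b (a t) = 1 / deriv a t)
    (hb2_nonneg : ∀ t, 0 < t → 0 ≤ deriv (deriv b) t) :
    Set.BijOn (fun p : ℝ × ℝ => (tF a b p.1 p.2, chiF a b p.1 p.2))
      {p : ℝ × ℝ | 0 < p.1 ∧ 1 ≤ p.2 ∧ (0 < ainf → p.2 < (a p.1 / ainf) ^ 2)}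
      (Set.Ioi 0 ×ˢ Set.Ici 0) := by
  -- Step A: ainf < a t for all t > 0
  have hcpos0 : ∀ t, 0 < t → ainf < a t := by
    intro t ht
    have h2 : t/2 ∈ Set.Ioi (0:ℝ) := Set.mem_Ioi.2 (half_pos ht)
    have hle : ainf ≤ a (t/2) := by
      refine le_of_tendsto hainf ?_
      filter_upwards [Ioo_mem_nhdsGT_of_mem
        (show (0:ℝ) ∈ Set.Ico 0 (t/2) from ⟨le_refl 0, half_pos ht⟩)] with x hx
      exact (ha_mono (Set.mem_Ioi.2 hx.1) h2 hx.2).le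
    exact lt_of_le_of_lt hle (ha_mono h2 (Set.mem_Ioi.2 ht) (by linarith))
  -- Step B: continuity of b on (ainf, ∞)
  have hb_cont : ∀ y, ainf < y → ContinuousAt b y := by
    intro y hy
    have hby := hab y hy
    rw [ContinuousAt, tendsto_order]
    constructor
    · intro t' ht'
      rcases le_or_gt t' 0 with h | h
      · filter_upwards [isOpen_Ioi.mem_nhds (Set.mem_Ioi.2 hy)] with z hz
        exact lt_of_le_of_lt h (hab z hz).1
      · have hat' : a t' < y := by
          have := ha_mono (Set.mem_Ioi.2 h) (Set.mem_Ioi.2 hby.1) ht'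
          rwa [hby.2] at this
        filter_upwards [isOpen_Ioo.mem_nhds
          (show y ∈ Set.Ioo (max ainf (a t')) (y+1) from ⟨max_lt hy hat', by linarith⟩)]
          with z hz
        have hz1 : ainf < z := lt_of_le_of_lt (le_max_left _ _) hz.1
        have hz2 : a t' < z := lt_of_le_of_lt (le_max_right _ _) hz.1
        by_contra hcon
        push_neg at hcon
        have hle2 : a (b z) ≤ a t' :=
          ha_mono.monotoneOn (Set.mem_Ioi.2 (hab z hz1).1) (Set.mem_Ioi.2 h) hcon
        rw [(hab z hz1).2] at hle2
        exact absurd hz2 (not_lt.2 hle2)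
    · intro t' ht'
      have ht'0 : 0 < t' := lt_trans hby.1 ht'
      have hat' : y < a t' := by
        have := ha_mono (Set.mem_Ioi.2 hby.1) (Set.mem_Ioi.2 ht'0) ht'
        rwa [hby.2] at this
      filter_upwards [isOpen_Ioo.mem_nhds (show y ∈ Set.Ioo ainf (a t') from ⟨hy, hat'⟩)]
        with z hz
      by_contra hcon
      push_neg at hcon
      have hle2 : a t' ≤ a (b z) :=
        ha_mono.monotoneOn (Set.mem_Ioi.2 ht'0) (Set.mem_Ioi.2 (hab z hz.1).1) hcon
      rw [(hab z hz.1).2] at hle2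
      exact absurd hz.2 (not_lt.2 hle2)
  -- Step C: differentiability facts
  have ha_diff : ∀ t, 0 < t → HasDerivAt a (deriv a t) t := by
    intro t ht
    exact ((ha_smooth.contDiffAt (isOpen_Ioi.mem_nhds ht)).differentiableAt (by simp)).hasDerivAt
  have hb_diff : ∀ y, ainf < y → HasDerivAt b (deriv a (b y))⁻¹ y := by
    intro y hy
    have hby := hab y hy
    refine HasDerivAt.of_local_left_inverse (hb_cont y hy) (ha_diff _ hby.1)
      (ha_deriv_pos _ hby.1).ne' ?_
    filter_upwards [isOpen_Ioi.mem_nhds (Set.mem_Ioi.2 hy)] with z hz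
    exact (hab z hz).2
  have hdb_eq : ∀ y, ainf < y → deriv b y = (deriv a (b y))⁻¹ := by
    intro y hy
    have hby := hab y hy
    have h := hb_deriv (b y) hby.1
    rw [hby.2] at h
    rw [h, one_div]
  have hf_pos : ∀ y, ainf < y → 0 < deriv b y := by
    intro y hy
    rw [hdb_eq y hy]
    exact inv_pos.2 (ha_deriv_pos _ (hab y hy).1)
  have hb_contOn : ContinuousOn b (Set.Ioi ainf) := fun y hy => (hb_cont y hy).continuousWithinAt
  have hda_cont : ContinuousOn (deriv a) (Set.Ioi 0) :=
    ha_smooth.continuousOn_deriv_of_isOpen isOpen_Ioi (by simp)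
  have hda_diffOn : DifferentiableOn ℝ (deriv a) (Set.Ioi 0) :=
    (ha_smooth.deriv_of_isOpen (m := 1) isOpen_Ioi (WithTop.coe_le_coe.2 le_top)).differentiableOn (by norm_num)
  have hmaps : Set.MapsTo b (Set.Ioi ainf) (Set.Ioi 0) := fun y hy => Set.mem_Ioi.2 (hab y hy).1
  have hf_cont : ContinuousOn (deriv b) (Set.Ioi ainf) := by
    refine ContinuousOn.congr ?_ (fun y hy => hdb_eq y hy)
    exact (hda_cont.comp hb_contOn hmaps).inv₀
      (fun y hy => (ha_deriv_pos _ (hab y hy).1).ne')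
  have hf_diffOn : DifferentiableOn ℝ (deriv b) (Set.Ioi ainf) := by
    intro y hy
    have h1 : DifferentiableAt ℝ b y := (hb_diff y hy).differentiableAt
    have h2 : DifferentiableAt ℝ (deriv a) (b y) :=
      (hda_diffOn (b y) (hmaps hy)).differentiableAt (isOpen_Ioi.mem_nhds (hmaps hy))
    have hdiff : DifferentiableAt ℝ (fun z => (deriv a (b z))⁻¹) y :=
      (h2.comp y h1).inv (ha_deriv_pos _ (hab y hy).1).ne'
    have hEq : (fun z => deriv b z) =ᶠ[nhds y] fun z => (deriv a (b z))⁻¹ := by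
      filter_upwards [isOpen_Ioi.mem_nhds hy] with z hz
      exact hdb_eq z hz
    exact (hEq.differentiableAt_iff.2 hdiff).differentiableWithinAt
  have hf_mono : MonotoneOn (deriv b) (Set.Ioi ainf) := by
    refine monotoneOn_of_deriv_nonneg (convex_Ioi ainf) hf_cont (by rwa [interior_Ioi]) ?_
    intro x hx
    rw [interior_Ioi] at hx
    exact hb2_nonneg x (lt_of_le_of_lt hainf_nonneg hx)

  -- abbreviations
  set f : ℝ → ℝ := deriv b with hfdef
  set U : Set (ℝ × ℝ) :=
    {p : ℝ × ℝ | 0 < p.1 ∧ 1 ≤ p.2 ∧ (0 < ainf → p.2 < (a p.1 / ainf) ^ 2)} with hU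
  -- argument lies above ainf
  have hmem_facts : ∀ p : ℝ × ℝ, p ∈ U → ainf < a p.1 / Real.sqrt p.2 := by
    intro p hp
    obtain ⟨hτ, hσ, hcon⟩ := hp
    have hσ0 : (0:ℝ) < p.2 := lt_of_lt_of_le one_pos hσ
    have hsq : 0 < Real.sqrt p.2 := Real.sqrt_pos.2 hσ0
    rcases eq_or_lt_of_le hainf_nonneg with h0 | h0
    · rw [← h0]
      exact div_pos (ha_pos _ hτ) hsq
    · have hlt := hcon h0
      have h1 : Real.sqrt p.2 < a p.1 / ainf := by
        have h2 : Real.sqrt p.2 < Real.sqrt ((a p.1 / ainf)^2) := Real.sqrt_lt_sqrt hσ0.le hlt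
        rwa [Real.sqrt_sq (div_nonneg (ha_pos _ hτ).le h0.le)] at h2
      rw [lt_div_iff₀ hsq]
      calc ainf * Real.sqrt p.2 < ainf * (a p.1 / ainf) := mul_lt_mul_of_pos_left h1 h0
        _ = a p.1 := by field_simp
  -- chiF in terms of J
  have hchi : ∀ p : ℝ × ℝ, 1 ≤ p.2 →
      chiF a b p.1 p.2 = J f (a p.1 / Real.sqrt p.2) (1/p.2) := by
    intro p hσ
    have hsqne : Real.sqrt p.2 ≠ 0 := (Real.sqrt_pos.2 (lt_of_lt_of_le one_pos hσ)).ne'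
    have h := chi_eq_J f (a p.1 / Real.sqrt p.2) p.2 hσ
    rw [div_mul_cancel₀ (a p.1) hsqne] at h
    rw [chiF, ← h]
  constructor
  · -- MapsTo
    intro p hp
    have hc := hmem_facts p hp
    obtain ⟨hτ, hσ, _⟩ := hp
    have hσ0 : (0:ℝ) < p.2 := lt_of_lt_of_le one_pos hσ
    refine ⟨?_, ?_⟩
    · show tF a b p.1 p.2 ∈ Set.Ioi 0
      exact (hab _ hc).1
    · show chiF a b p.1 p.2 ∈ Set.Ici 0
      rw [Set.mem_Ici, hchi p hσ]
      exact J_nonneg hainf_nonneg hc hf_pos (by positivity) ((div_le_one hσ0).2 hσ)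
  constructor
  · -- InjOn
    intro p hp q hq heq
    have hcp := hmem_facts p hp
    have hcq := hmem_facts q hq
    obtain ⟨hτp, hσp, _⟩ := hp
    obtain ⟨hτq, hσq, _⟩ := hq
    have hσp0 : (0:ℝ) < p.2 := lt_of_lt_of_le one_pos hσp
    have hσq0 : (0:ℝ) < q.2 := lt_of_lt_of_le one_pos hσq
    have h1 : tF a b p.1 p.2 = tF a b q.1 q.2 := congrArg Prod.fst heq
    have h2 : chiF a b p.1 p.2 = chiF a b q.1 q.2 := congrArg Prod.snd heq
    rw [tF, tF] at h1
    have hceq : a p.1 / Real.sqrt p.2 = a q.1 / Real.sqrt q.2 := by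
      rw [← (hab _ hcp).2, ← (hab _ hcq).2, h1]
    rw [hchi p hσp, hchi q hσq, hceq] at h2
    have hmeq : 1/p.2 = 1/q.2 := by
      by_contra hne
      rcases lt_or_gt_of_ne hne with hlt | hlt
      · have := J_strictAnti (c := a q.1 / Real.sqrt q.2) hainf_nonneg hcq hf_pos hf_mono
          hf_cont (by positivity) hlt ((div_le_one hσq0).2 hσq)
        rw [h2] at this
        exact lt_irrefl _ this
      · have := J_strictAnti (c := a q.1 / Real.sqrt q.2) hainf_nonneg hcq hf_pos hf_mono
          hf_cont (by positivity) hlt ((div_le_one hσp0).2 hσp)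
        rw [h2] at this
        exact lt_irrefl _ this
    have hσeq : p.2 = q.2 := by
      rw [← one_div_one_div p.2, hmeq, one_div_one_div]
    have haeq : a p.1 = a q.1 := by
      rw [hσeq] at hceq
      have hsqne : Real.sqrt q.2 ≠ 0 := (Real.sqrt_pos.2 hσq0).ne'
      field_simp [hsqne] at hceq
      exact hceq
    have hτeq : p.1 = q.1 := ha_mono.injOn (Set.mem_Ioi.2 hτp) (Set.mem_Ioi.2 hτq) haeq
    exact Prod.ext hτeq hσeq
  · -- SurjOn
    intro q hq
    obtain ⟨ht, hx0⟩ := hq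
    rw [Set.mem_Ioi] at ht
    rw [Set.mem_Ici] at hx0
    set t : ℝ := q.1
    set x : ℝ := q.2
    have hc : ainf < a t := hcpos0 t ht
    have hcpos : 0 < a t := ha_pos t ht
    rcases eq_or_lt_of_le hx0 with hx | hx
    · -- x = 0 : take (t, 1)
      refine ⟨(t, 1), ⟨ht, le_refl 1, ?_⟩, ?_⟩
      · intro h0
        have h1 : 1 < a t / ainf := (one_lt_div h0).2 hc
        nlinarith
      · have htF : tF a b t 1 = t := by
          rw [tF, Real.sqrt_one, div_one]
          exact hba t ht
        have hchi1 : chiF a b t 1 = 0 := by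
          rw [chiF, intervalIntegral.integral_same, mul_zero]
        show (tF a b t 1, chiF a b t 1) = q
        rw [htF, hchi1, hx]
    · -- x > 0
      obtain ⟨m₁, hm₁0, hm₁1, hm₁big⟩ := J_large (c := a t) hainf_nonneg hc hf_pos hf_mono
        hf_cont x
      have hIVT := intermediate_value_Icc' hm₁1.le
        (J_contOn (c := a t) hainf_nonneg hc hf_pos hf_mono hf_cont hm₁0 hm₁1)
      have hx_mem : x ∈ Set.Icc (J f (a t) 1) (J f (a t) m₁) := by
        rw [J_one]
        exact ⟨hx0, hm₁big.le⟩
      obtain ⟨m, hmIcc, hJm⟩ := hIVT hx_mem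
      have hm0 : 0 < m := lt_of_lt_of_le hm₁0 hmIcc.1
      have hm1 : m ≤ 1 := hmIcc.2
      have hsqm : 0 < Real.sqrt m := Real.sqrt_pos.2 hm0
      have hcm := arg_facts hainf_nonneg hc hm0 hm1
      have hτ : 0 < b (a t / Real.sqrt m) := (hab _ hcm.1).1
      have haτ : a (b (a t / Real.sqrt m)) = a t / Real.sqrt m := (hab _ hcm.1).2
      have hkey : a (b (a t / Real.sqrt m)) / Real.sqrt (1/m) = a t := by
        rw [haτ, one_div, Real.sqrt_inv, div_inv_eq_mul, div_mul_cancel₀ _ hsqm.ne']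
      refine ⟨(b (a t / Real.sqrt m), 1/m), ⟨hτ, ?_, ?_⟩, ?_⟩
      · exact one_le_one_div hm0 hm1
      · intro h0
        show 1/m < (a (b (a t / Real.sqrt m)) / ainf)^2
        rw [haτ, div_div, div_pow, mul_pow, Real.sq_sqrt hm0.le]
        rw [div_lt_div_iff₀ hm0 (by positivity)]
        have h1 : ainf^2 < (a t)^2 := by nlinarith
        nlinarith [mul_lt_mul_of_pos_left h1 hm0]
      · show (tF a b (b (a t / Real.sqrt m)) (1/m), chiF a b (b (a t / Real.sqrt m)) (1/m)) = q
        have h1 : tF a b (b (a t / Real.sqrt m)) (1/m) = t := by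
          rw [tF, hkey]
          exact hba t ht
        have h2 : chiF a b (b (a t / Real.sqrt m)) (1/m) = x := by
          rw [hchi (b (a t / Real.sqrt m), 1/m) (one_le_one_div hm0 hm1)]
          show J f (a (b (a t / Real.sqrt m)) / Real.sqrt (1/m)) (1/(1/m)) = x
          rw [hkey, one_div_one_div]
          exact hJm
        rw [h1, h2]
end
end

section
/- For every τ > 0 and every σ ∈ (1, σ∞(τ)), the following integral identity holds: √((σ−1)/σ)·ḃ(a(τ)/√σ) + (a(τ)/2)∫₁^σ b̈(a(τ)/√s)·s^{−1}(s−1)^{−1/2} ds − (1/2)∫₁^σ [ ḃ(a(τ)/√s)·√s + a(τ)·b̈(a(τ)/√s) ]·s^{−2}(s−1)^{−1/2} ds = 0. (This identity expresses the vanishing of the off-diagonal metric component g_{τρ} in Fermi polar coordinates, so the metric in these coordinates is diagonal.) -/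
open Real MeasureTheory Filter Set intervalIntegral

noncomputable section

open scoped Topology

lemma aux_integrable {σ : ℝ} (hσ : 1 ≤ σ) {c : ℝ → ℝ} (hc : ContinuousOn c (Set.Icc 1 σ)) :
    IntervalIntegrable (fun s => c s / Real.sqrt (s - 1)) MeasureTheory.volume 1 σ := by
  have h1 : IntervalIntegrable (fun x : ℝ => (x - 1) ^ (-(1/2) : ℝ)) volume 1 σ := by
    simpa using
      (intervalIntegral.intervalIntegrable_rpow' (a := 0) (b := σ - 1) (r := -(1/2))
        (by norm_num)).comp_sub_right 1
  have hc' : ContinuousOn c (Set.uIcc 1 σ) := by rwa [Set.uIcc_of_le hσ]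
  have h2 := h1.continuousOn_mul hc'
  rw [intervalIntegrable_iff_integrableOn_Ioc_of_le hσ] at h2 ⊢
  refine h2.congr_fun (fun s hs => ?_) measurableSet_Ioc
  have h1s : (0:ℝ) < s - 1 := by have := hs.1; linarith
  beta_reduce
  rw [Real.sqrt_eq_rpow, Real.rpow_neg h1s.le]; ring

lemma aux_hasDerivAt_b (a b : ℝ → ℝ) (ainf : ℝ)
    (ha_smooth : ContDiffOn ℝ (⊤ : ℕ∞) a (Set.Ioi 0))
    (ha_deriv_pos : ∀ t, 0 < t → 0 < deriv a t)
    (hba : ∀ t, 0 < t → b (a t) = t)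
    (hab : ∀ y, ainf < y → 0 < b y ∧ a (b y) = y)
    {y : ℝ} (hy : ainf < y) : HasDerivAt b (deriv a (b y))⁻¹ y := by
  obtain ⟨ht, hat⟩ := hab y hy
  have hca : ContDiffAt ℝ (⊤ : ℕ∞) a (b y) := ha_smooth.contDiffAt (isOpen_Ioi.mem_nhds ht)
  have hsa : HasStrictDerivAt a (deriv a (b y)) (b y) := hca.hasStrictDerivAt (by simp)
  have hev : ∀ᶠ x in 𝓝 (b y), b (a x) = x := by
    filter_upwards [isOpen_Ioi.mem_nhds ht] with x hx using hba x hx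
  have h := hsa.to_local_left_inverse (ha_deriv_pos _ ht).ne' hev
  rw [hat] at h
  exact h.hasDerivAt

lemma aux_b_props (a b : ℝ → ℝ) (ainf : ℝ)
    (ha_smooth : ContDiffOn ℝ (⊤ : ℕ∞) a (Set.Ioi 0))
    (ha_deriv_pos : ∀ t, 0 < t → 0 < deriv a t)
    (hba : ∀ t, 0 < t → b (a t) = t)
    (hab : ∀ y, ainf < y → 0 < b y ∧ a (b y) = y) :
    (∀ y, ainf < y → HasDerivAt (deriv b) (deriv (deriv b) y) y) ∧
      ContinuousOn (deriv b) (Set.Ioi ainf) ∧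
      ContinuousOn (deriv (deriv b)) (Set.Ioi ainf) := by
  have hb1 : ∀ y, ainf < y → HasDerivAt b (deriv a (b y))⁻¹ y := fun y hy =>
    aux_hasDerivAt_b a b ainf ha_smooth ha_deriv_pos hba hab hy
  have hbeq : ∀ y, ainf < y → deriv b y = (deriv a (b y))⁻¹ := fun y hy => (hb1 y hy).deriv
  have hbc : ContinuousOn b (Set.Ioi ainf) := fun y hy =>
    ((hb1 y hy).continuousAt).continuousWithinAt
  have hmaps : Set.MapsTo b (Set.Ioi ainf) (Set.Ioi 0) := fun y hy => (hab y hy).1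
  have hd1 : ContDiffOn ℝ (⊤ : ℕ∞) (deriv a) (Set.Ioi 0) :=
    ha_smooth.deriv_of_isOpen isOpen_Ioi (by simp)
  have hd2c : ContinuousOn (deriv (deriv a)) (Set.Ioi 0) :=
    (hd1.deriv_of_isOpen isOpen_Ioi (m := (⊤ : ℕ∞)) (by simp)).continuousOn (n := (⊤ : ℕ∞))
  have hne : ∀ y, ainf < y → deriv a (b y) ≠ 0 := fun y hy =>
    (ha_deriv_pos _ (hab y hy).1).ne'
  -- derivative of deriv b
  have key : ∀ y, ainf < y →
      HasDerivAt (deriv b)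
        (-(deriv (deriv a) (b y) * (deriv a (b y))⁻¹) / deriv a (b y) ^ 2) y := by
    intro y hy
    obtain ⟨ht, hat⟩ := hab y hy
    have hd1t : HasDerivAt (deriv a) (deriv (deriv a) (b y)) (b y) :=
      ((hd1.contDiffAt (isOpen_Ioi.mem_nhds ht)).differentiableAt (by simp)).hasDerivAt
    have hcomp : HasDerivAt (fun z => deriv a (b z))
        (deriv (deriv a) (b y) * (deriv a (b y))⁻¹) y := hd1t.comp y (hb1 y hy)
    have hinv := hcomp.inv (hne y hy)
    have heq : deriv b =ᶠ[𝓝 y] fun z => (deriv a (b z))⁻¹ := by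
      filter_upwards [isOpen_Ioi.mem_nhds hy] with z hz using hbeq z hz
    exact hinv.congr_of_eventuallyEq heq
  refine ⟨fun y hy => ?_, ?_, ?_⟩
  · have h := key y hy
    rwa [← h.deriv] at h
  · apply ContinuousOn.congr _ (fun y hy => hbeq y hy)
    exact ((hd1.continuousOn.comp hbc hmaps).inv₀ fun y hy => hne y hy)
  · apply ContinuousOn.congr
      (f := fun y => -(deriv (deriv a) (b y) * (deriv a (b y))⁻¹) / deriv a (b y) ^ 2)
    · apply ContinuousOn.div
      · exact ((hd2c.comp hbc hmaps).mul
          ((hd1.continuousOn.comp hbc hmaps).inv₀ fun y hy => hne y hy)).neg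
      · exact (hd1.continuousOn.comp hbc hmaps).pow 2
      · intro y hy
        exact pow_ne_zero 2 (hne y hy)
    · exact fun y hy => (key y hy).deriv

/-- the integral identity expressing the vanishing of the off-diagonal
metric component g_{τρ} in Fermi polar coordinates. -/
theorem fermi_offdiagonal_vanishes
    (a b : ℝ → ℝ) (ainf : ℝ)
    (ha_smooth : ContDiffOn ℝ (⊤ : ℕ∞) a (Set.Ioi 0))
    (ha_pos : ∀ t, 0 < t → 0 < a t)
    (ha_mono : StrictMonoOn a (Set.Ioi 0))
    (ha_deriv_pos : ∀ t, 0 < t → 0 < deriv a t)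
    (hainf_nonneg : 0 ≤ ainf)
    (hainf : Tendsto a (nhdsWithin 0 (Set.Ioi 0)) (nhds ainf))
    (hba : ∀ t, 0 < t → b (a t) = t)
    (hab : ∀ y, ainf < y → 0 < b y ∧ a (b y) = y)
    (hb_deriv : ∀ t, 0 < t → deriv b (a t) = 1 / deriv a t)
    (τ σ : ℝ) (hτ : 0 < τ) (hσ : 1 < σ) (hσ' : 0 < ainf → σ < (a τ / ainf) ^ 2) :
    Real.sqrt ((σ - 1) / σ) * deriv b (a τ / Real.sqrt σ) +
      (a τ / 2) *
        (∫ s in (1:ℝ)..σ, deriv (deriv b) (a τ / Real.sqrt s) / (s * Real.sqrt (s - 1))) -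
      (1 / 2) *
        (∫ s in (1:ℝ)..σ,
          (deriv b (a τ / Real.sqrt s) * Real.sqrt s + a τ * deriv (deriv b) (a τ / Real.sqrt s)) /
            (s ^ 2 * Real.sqrt (s - 1))) = 0 := by
  obtain ⟨hb2, hbc1, hbc2⟩ := aux_b_props a b ainf ha_smooth ha_deriv_pos hba hab
  have haτ : 0 < a τ := ha_pos τ hτ
  have hσ0 : (0:ℝ) < σ := by linarith
  have hsqσ : 0 < Real.sqrt σ := Real.sqrt_pos.mpr hσ0
  have hlow : ainf < a τ / Real.sqrt σ := by
    rcases eq_or_lt_of_le hainf_nonneg with h0 | h0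
    · rw [← h0]; positivity
    · have h1 : Real.sqrt σ < a τ / ainf := by
        have h2 := Real.sqrt_lt_sqrt hσ0.le (hσ' h0)
        rwa [Real.sqrt_sq (by positivity)] at h2
      rw [lt_div_iff₀ hsqσ]
      rw [lt_div_iff₀ h0] at h1
      nlinarith
  have hu_mem : ∀ s, s ∈ Set.Icc (1:ℝ) σ → ainf < a τ / Real.sqrt s := by
    intro s hs
    have hspos : (0:ℝ) < s := by have := hs.1; linarith
    have hle : a τ / Real.sqrt σ ≤ a τ / Real.sqrt s := by
      gcongr
      exact hs.2
    linarith
  -- the potential function and its derivative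
  set F : ℝ → ℝ := fun s => Real.sqrt ((s - 1) / s) * deriv b (a τ / Real.sqrt s) with hF
  set G : ℝ → ℝ := fun s =>
    (Real.sqrt s * deriv b (a τ / Real.sqrt s) / (2 * s ^ 2) -
      a τ * (s - 1) * deriv (deriv b) (a τ / Real.sqrt s) / (2 * s ^ 2)) / Real.sqrt (s - 1)
    with hG
  -- continuity facts
  have hcu : ContinuousOn (fun s : ℝ => a τ / Real.sqrt s) (Set.Icc 1 σ) := by
    apply continuousOn_const.div Real.continuous_sqrt.continuousOn
    intro s hs
    have h1 : (0:ℝ) < s := by have := hs.1; linarith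
    positivity
  have hmaps : Set.MapsTo (fun s : ℝ => a τ / Real.sqrt s) (Set.Icc 1 σ) (Set.Ioi ainf) :=
    fun s hs => hu_mem s hs
  have hcb1 : ContinuousOn (fun s : ℝ => deriv b (a τ / Real.sqrt s)) (Set.Icc 1 σ) :=
    hbc1.comp hcu hmaps
  have hcb2 : ContinuousOn (fun s : ℝ => deriv (deriv b) (a τ / Real.sqrt s)) (Set.Icc 1 σ) :=
    hbc2.comp hcu hmaps
  have hsne : ∀ s ∈ Set.Icc (1:ℝ) σ, s ≠ 0 := by
    intro s hs
    have : (0:ℝ) < s := by have := hs.1; linarith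
    exact this.ne'
  have hFcont : ContinuousOn F (Set.Icc 1 σ) := by
    apply ContinuousOn.mul _ hcb1
    exact Real.continuous_sqrt.comp_continuousOn
      (((continuous_id.sub continuous_const).continuousOn).div continuousOn_id hsne)
  have hc0 : ContinuousOn (fun s : ℝ =>
      Real.sqrt s * deriv b (a τ / Real.sqrt s) / (2 * s ^ 2) -
        a τ * (s - 1) * deriv (deriv b) (a τ / Real.sqrt s) / (2 * s ^ 2)) (Set.Icc 1 σ) := by
    have hden : ∀ s ∈ Set.Icc (1:ℝ) σ, (2 * s ^ 2 : ℝ) ≠ 0 := by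
      intro s hs
      have : (0:ℝ) < s := by have := hs.1; linarith
      positivity
    apply ContinuousOn.sub
    · exact (Real.continuous_sqrt.continuousOn.mul hcb1).div
        (continuousOn_const.mul (continuousOn_id.pow 2)) hden
    · exact ((continuousOn_const.mul ((continuous_id.sub continuous_const).continuousOn)).mul
        hcb2).div (continuousOn_const.mul (continuousOn_id.pow 2)) hden
  have hGint : IntervalIntegrable G volume 1 σ := aux_integrable hσ.le hc0
  -- F has derivative G on the interior
  have hFd : ∀ s ∈ Set.Ioo (1:ℝ) σ, HasDerivAt F (G s) s := by
    intro s hs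
    obtain ⟨hs1, hsσ⟩ := hs
    have hspos : (0:ℝ) < s := by linarith
    have hq0 : 0 < Real.sqrt s := Real.sqrt_pos.mpr hspos
    have hr0 : 0 < Real.sqrt (s - 1) := Real.sqrt_pos.mpr (by linarith)
    have husm : ainf < a τ / Real.sqrt s := hu_mem s ⟨hs1.le, hsσ.le⟩
    have h1 : HasDerivAt (fun x : ℝ => (x - 1) / x) (1 / s ^ 2) s := by
      have h : HasDerivAt (fun x : ℝ => (x - 1) / x) ((1 * s - (s - 1) * 1) / s ^ 2) s :=
        ((hasDerivAt_id' s).sub_const 1).div (hasDerivAt_id' s) hspos.ne'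
      convert h using 1
      ring
    have hne : ((s - 1) / s : ℝ) ≠ 0 := (div_pos (by linarith) hspos).ne'
    have h2 := HasDerivAt.comp (h := fun x : ℝ => (x - 1) / x) s (Real.hasDerivAt_sqrt hne) h1
    have h3 : HasDerivAt (fun x : ℝ => Real.sqrt x) (1 / (2 * Real.sqrt s)) s :=
      Real.hasDerivAt_sqrt hspos.ne'
    have h4 : HasDerivAt (fun x : ℝ => a τ / Real.sqrt x)
        (a τ * (-(1 / (2 * Real.sqrt s)) / Real.sqrt s ^ 2)) s := by
      simpa [div_eq_mul_inv] using (h3.inv hq0.ne').const_mul (a τ)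
    have h5 : HasDerivAt (fun x : ℝ => deriv b (a τ / Real.sqrt x))
        (deriv (deriv b) (a τ / Real.sqrt s) *
          (a τ * (-(1 / (2 * Real.sqrt s)) / Real.sqrt s ^ 2))) s :=
      by have := HasDerivAt.comp s (hb2 (a τ / Real.sqrt s) husm) h4; exact this
    have h6 : HasDerivAt F
        (1 / (2 * Real.sqrt ((s - 1) / s)) * (1 / s ^ 2) * deriv b (a τ / Real.sqrt s) +
          Real.sqrt ((s - 1) / s) *
            (deriv (deriv b) (a τ / Real.sqrt s) *
              (a τ * (-(1 / (2 * Real.sqrt s)) / Real.sqrt s ^ 2)))) s := by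
      have h := HasDerivAt.mul h2 h5
      exact h
    have hGs : G s =
        1 / (2 * Real.sqrt ((s - 1) / s)) * (1 / s ^ 2) * deriv b (a τ / Real.sqrt s) +
          Real.sqrt ((s - 1) / s) *
            (deriv (deriv b) (a τ / Real.sqrt s) *
              (a τ * (-(1 / (2 * Real.sqrt s)) / Real.sqrt s ^ 2))) := by
      have hGx : G s = (Real.sqrt s * deriv b (a τ / Real.sqrt s) / (2 * s ^ 2) -
          a τ * (s - 1) * deriv (deriv b) (a τ / Real.sqrt s) / (2 * s ^ 2)) /
            Real.sqrt (s - 1) := rfl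
      rw [hGx]
      rw [Real.sqrt_div (by linarith : (0:ℝ) ≤ s - 1) s]
      have hq2 : Real.sqrt s ^ 2 = s := Real.sq_sqrt hspos.le
      have hr2 : Real.sqrt (s - 1) ^ 2 = s - 1 := Real.sq_sqrt (by linarith)
      set q := Real.sqrt s with hqdef
      set r := Real.sqrt (s - 1) with hrdef
      clear_value q r
      have hr2q : r ^ 2 = q ^ 2 - 1 := by rw [hr2, ← hq2]
      rw [← hq2, ← hr2q]
      field_simp
      ring
    rw [hGs]
    exact h6
  -- FTC
  have hFTC : ∫ s in (1:ℝ)..σ, G s = F σ - F 1 :=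
    integral_eq_sub_of_hasDeriv_right_of_le hσ.le hFcont
      (fun x hx => (hFd x hx).hasDerivWithinAt) hGint
  have hF1 : F 1 = 0 := by norm_num [hF]
  -- integrability of the two integrands in the statement
  have hInt2 : IntervalIntegrable
      (fun s => deriv (deriv b) (a τ / Real.sqrt s) / (s * Real.sqrt (s - 1))) volume 1 σ := by
    have h := aux_integrable hσ.le (c := fun s => deriv (deriv b) (a τ / Real.sqrt s) / s)
      (hcb2.div continuousOn_id hsne)
    simpa [div_div] using h
  have hInt3 : IntervalIntegrable
      (fun s => (deriv b (a τ / Real.sqrt s) * Real.sqrt s +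
        a τ * deriv (deriv b) (a τ / Real.sqrt s)) / (s ^ 2 * Real.sqrt (s - 1))) volume 1 σ := by
    have hc : ContinuousOn (fun s : ℝ => (deriv b (a τ / Real.sqrt s) * Real.sqrt s +
        a τ * deriv (deriv b) (a τ / Real.sqrt s)) / s ^ 2) (Set.Icc 1 σ) := by
      apply ContinuousOn.div
      · exact (hcb1.mul Real.continuous_sqrt.continuousOn).add (continuousOn_const.mul hcb2)
      · exact continuousOn_id.pow 2
      · intro s hs; exact pow_ne_zero 2 (hsne s hs)
    have h := aux_integrable hσ.le hc
    simpa [div_div] using h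
  -- combining the two integrals
  have key2 : (a τ / 2) *
        (∫ s in (1:ℝ)..σ, deriv (deriv b) (a τ / Real.sqrt s) / (s * Real.sqrt (s - 1))) -
      (1 / 2) *
        (∫ s in (1:ℝ)..σ,
          (deriv b (a τ / Real.sqrt s) * Real.sqrt s + a τ * deriv (deriv b) (a τ / Real.sqrt s)) /
            (s ^ 2 * Real.sqrt (s - 1))) = -(F σ) := by
    rw [← intervalIntegral.integral_const_mul, ← intervalIntegral.integral_const_mul,
      ← intervalIntegral.integral_sub (hInt2.const_mul _) (hInt3.const_mul _)]
    have hcong : ∫ s in (1:ℝ)..σ,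
        ((a τ / 2) * (deriv (deriv b) (a τ / Real.sqrt s) / (s * Real.sqrt (s - 1))) -
          (1 / 2) * ((deriv b (a τ / Real.sqrt s) * Real.sqrt s +
            a τ * deriv (deriv b) (a τ / Real.sqrt s)) / (s ^ 2 * Real.sqrt (s - 1)))) =
        ∫ s in (1:ℝ)..σ, -(G s) := by
      apply intervalIntegral.integral_congr_ae
      filter_upwards [] with x hx
      rw [Set.uIoc_of_le hσ.le] at hx
      have hx1 : (1:ℝ) < x := hx.1
      have hxpos : (0:ℝ) < x := by linarith
      have hr0 : 0 < Real.sqrt (x - 1) := Real.sqrt_pos.mpr (by linarith)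
      have hGx : G x = (Real.sqrt x * deriv b (a τ / Real.sqrt x) / (2 * x ^ 2) -
          a τ * (x - 1) * deriv (deriv b) (a τ / Real.sqrt x) / (2 * x ^ 2)) /
            Real.sqrt (x - 1) := rfl
      rw [hGx]
      field_simp
      ring
    rw [hcong, intervalIntegral.integral_neg, hFTC, hF1]
    ring
  have hFσ : F σ = Real.sqrt ((σ - 1) / σ) * deriv b (a τ / Real.sqrt σ) := by rw [hF]
  linarith [key2]
end
end

section
/- For every τ > 0 and every σ ∈ (1, σ∞(τ)), the proper distance satisfies ρ_τ(σ) < ρ_{M_τ} ≤ a(τ)/ȧ(τ) = 1/H(τ), where H(τ) = ȧ(τ)/a(τ) is the Hubble parameter. In particular, at proper time τ of the Fermi observer, the proper distance to any spacetime point along a geodesic in the Fermi space slice M_τ is strictly less than ρ_{M_τ}, which is bounded above by the Hubble radius 1/H(τ). -/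
open Real MeasureTheory Filter Set intervalIntegral

noncomputable section

/-- The proper radius ρ_{M_τ} of the Fermi space slice M_τ:
the integral of the arc-length integrand over the whole parameter range [1, σ∞(τ)). -/
def rhoM (a b : ℝ → ℝ) (ainf τ : ℝ) : ℝ :=
  (a τ / 2) *
    ∫ s in {s : ℝ | 1 < s ∧ (0 < ainf → s < (a τ / ainf) ^ 2)},
      deriv b (a τ / Real.sqrt s) / (s * Real.sqrt s * Real.sqrt (s - 1))


private lemma hasDerivAt_G {s : ℝ} (hs : 1 < s) :
    HasDerivAt (fun s : ℝ => 2 * Real.sqrt (s - 1) / Real.sqrt s)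
      ((s * Real.sqrt s * Real.sqrt (s - 1))⁻¹) s := by
  have hs0 : 0 < s := by linarith
  have h1 : 0 < s - 1 := by linarith
  have hss : Real.sqrt s ≠ 0 := by positivity
  have h1s : Real.sqrt (s - 1) ≠ 0 := by positivity
  have hu : Real.sqrt s * Real.sqrt s = s := Real.mul_self_sqrt hs0.le
  have hv : Real.sqrt (s - 1) * Real.sqrt (s - 1) = s - 1 := Real.mul_self_sqrt h1.le
  have d1 : HasDerivAt (fun s : ℝ => Real.sqrt (s - 1)) (1 / (2 * Real.sqrt (s - 1))) s := by
    have := (Real.hasDerivAt_sqrt (ne_of_gt h1)).comp s ((hasDerivAt_id s).sub_const 1)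
    simpa [Function.comp_def] using this
  have d2 : HasDerivAt Real.sqrt (1 / (2 * Real.sqrt s)) s := Real.hasDerivAt_sqrt (ne_of_gt hs0)
  have : HasDerivAt (fun s : ℝ => 2 * Real.sqrt (s - 1) / Real.sqrt s) _ s := (d1.const_mul 2).div d2 hss
  convert this using 1
  field_simp
  linear_combination (1 - s) * hu + s * hv

private lemma g_integral :
    IntegrableOn (fun s : ℝ => (s * Real.sqrt s * Real.sqrt (s - 1))⁻¹) (Set.Ioi 1) volume ∧
    ∫ s in Set.Ioi (1:ℝ), (s * Real.sqrt s * Real.sqrt (s - 1))⁻¹ = 2 := by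
  set G : ℝ → ℝ := fun s => 2 * Real.sqrt (s - 1) / Real.sqrt s with hG
  have hcont : ContinuousWithinAt G (Set.Ici 1) 1 := by
    apply ContinuousAt.continuousWithinAt
    apply ContinuousAt.div
    · exact (continuousAt_const.mul ((Real.continuous_sqrt.continuousAt).comp
        ((continuous_id.sub continuous_const).continuousAt)))
    · exact Real.continuous_sqrt.continuousAt
    · simp
  have hderiv : ∀ x ∈ Set.Ioi (1:ℝ), HasDerivAt G ((x * Real.sqrt x * Real.sqrt (x - 1))⁻¹) x :=
    fun x hx => hasDerivAt_G hx
  have hpos : ∀ x ∈ Set.Ioi (1:ℝ), 0 ≤ (x * Real.sqrt x * Real.sqrt (x - 1))⁻¹ := by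
    intro x hx
    have : (0:ℝ) < x := lt_trans one_pos hx
    positivity
  have htend : Tendsto G atTop (nhds 2) := by
    have h1 : Tendsto (fun s : ℝ => 1 - 1/s) atTop (nhds 1) := by
      simpa using tendsto_const_nhds.sub (tendsto_inv_atTop_zero (𝕜 := ℝ))
    have h2 : Tendsto (fun s : ℝ => 2 * Real.sqrt (1 - 1/s)) atTop (nhds 2) := by
      have := (Real.continuous_sqrt.continuousAt (x := (1:ℝ))).tendsto.comp h1
      simpa using this.const_mul 2
    apply h2.congr'
    filter_upwards [eventually_gt_atTop (1:ℝ)] with s hs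
    have hs0 : (0:ℝ) < s := lt_trans one_pos hs
    have : 1 - 1/s = (s - 1)/s := by field_simp
    rw [this, Real.sqrt_div (by linarith : (0:ℝ) ≤ s - 1), hG]
    ring
  have hG1 : G 1 = 0 := by simp [hG]
  constructor
  · exact integrableOn_Ioi_deriv_of_nonneg hcont hderiv hpos htend
  · rw [integral_Ioi_of_hasDerivAt_of_nonneg hcont hderiv hpos htend, hG1]; ring


private lemma aux_inverse (a b : ℝ → ℝ) (ainf : ℝ)
    (ha_smooth : ContDiffOn ℝ (⊤ : ℕ∞) a (Set.Ioi 0))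
    (ha_mono : StrictMonoOn a (Set.Ioi 0))
    (ha_deriv_pos : ∀ t, 0 < t → 0 < deriv a t)
    (hainf_nonneg : 0 ≤ ainf)
    (hainf : Tendsto a (nhdsWithin 0 (Set.Ioi 0)) (nhds ainf))
    (hba : ∀ t, 0 < t → b (a t) = t)
    (hab : ∀ y, ainf < y → 0 < b y ∧ a (b y) = y)
    (hb2_nonneg : ∀ t, 0 < t → 0 ≤ deriv (deriv b) t) :
    AntitoneOn (deriv a) (Set.Ioi 0) := by
  -- a t > ainf for all t > 0
  have hgt : ∀ t, 0 < t → ainf < a t := by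
    intro t ht
    have hle : ainf ≤ a (t/2) := by
      apply le_of_tendsto hainf
      filter_upwards [Ioo_mem_nhdsGT_of_mem (⟨le_refl 0, half_pos ht⟩ :
        (0:ℝ) ∈ Set.Ico 0 (t/2))] with s hs
      exact (ha_mono hs.1 (Set.mem_Ioi.mpr (half_pos ht)) hs.2).le
    exact lt_of_le_of_lt hle (ha_mono (Set.mem_Ioi.mpr (half_pos ht)) (Set.mem_Ioi.mpr ht) (half_lt_self ht))
  -- b is strictly monotone on Ioi ainf
  have hbmono : StrictMonoOn b (Set.Ioi ainf) := by
    intro x hx y hy hxy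
    by_contra h
    push_neg at h
    have := ha_mono.monotoneOn (hab y hy).1 (hab x hx).1 h
    rw [(hab x hx).2, (hab y hy).2] at this
    exact absurd hxy (not_lt.2 this)
  -- b image
  have hbimg : Set.Ioi (0:ℝ) ⊆ b '' Set.Ioi ainf := by
    intro t ht
    exact ⟨a t, hgt t ht, hba t ht⟩
  -- b continuous on Ioi ainf
  have hbc : ∀ y, ainf < y → ContinuousAt b y := by
    intro y hy
    refine hbmono.continuousAt_of_image_mem_nhds (isOpen_Ioi.mem_nhds hy) ?_
    exact Filter.mem_of_superset (isOpen_Ioi.mem_nhds (hab y hy).1) hbimg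
  have hdiff : DifferentiableOn ℝ a (Set.Ioi 0) := ha_smooth.differentiableOn (by simp)
  have hda : ∀ t, 0 < t → HasDerivAt a (deriv a t) t := fun t ht =>
    ((hdiff.differentiableAt (isOpen_Ioi.mem_nhds ht)).hasDerivAt)
  -- b differentiable
  have hbd : ∀ y, ainf < y → HasDerivAt b ((deriv a (b y))⁻¹) y := by
    intro y hy
    have ht := (hab y hy).1
    have hfa : HasDerivAt a (deriv a (b y)) (b y) := hda (b y) ht
    refine HasDerivAt.of_local_left_inverse (f := a) (hbc y hy) hfa
      (ne_of_gt (ha_deriv_pos _ ht)) ?_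
    filter_upwards [isOpen_Ioi.eventually_mem hy] with x hx
    exact (hab x hx).2
  -- second derivative of a
  have hda2cd : ContDiffOn ℝ (⊤ : ℕ∞) (deriv a) (Set.Ioi 0) := ha_smooth.deriv_of_isOpen isOpen_Ioi (by simp)
  have hda2 : ∀ t, 0 < t → HasDerivAt (deriv a) (deriv (deriv a) t) t := fun t ht =>
    (((hda2cd.differentiableOn (by simp)).differentiableAt (isOpen_Ioi.mem_nhds ht)).hasDerivAt)
  -- deriv (deriv a) ≤ 0
  have hdd : ∀ t, 0 < t → deriv (deriv a) t ≤ 0 := by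
    intro t ht
    have hy : ainf < a t := hgt t ht
    have hbat : b (a t) = t := hba t ht
    have hev : deriv b =ᶠ[nhds (a t)] fun x => (deriv a (b x))⁻¹ := by
      filter_upwards [isOpen_Ioi.eventually_mem hy] with x hx
      exact (hbd x hx).deriv
    have h2 : HasDerivAt b (deriv a t)⁻¹ (a t) := by
      have := hbd (a t) hy; rwa [hbat] at this
    have h1' : HasDerivAt (deriv a) (deriv (deriv a) t) (b (a t)) := by rw [hbat]; exact hda2 t ht
    have hcomp : HasDerivAt (fun x => deriv a (b x))
        (deriv (deriv a) t * (deriv a t)⁻¹) (a t) := h1'.comp (a t) h2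
    have hinv : HasDerivAt (fun x => (deriv a (b x))⁻¹)
        (-(deriv (deriv a) t * (deriv a t)⁻¹) / (deriv a (b (a t))) ^ 2) (a t) :=
      hcomp.inv (by rw [hbat]; exact ne_of_gt (ha_deriv_pos t ht))
    have hval : deriv (deriv b) (a t)
        = -(deriv (deriv a) t * (deriv a t)⁻¹) / (deriv a t) ^ 2 := by
      rw [hev.deriv_eq]
      have := hinv.deriv
      rwa [hbat] at this
    have h0 := hb2_nonneg (a t) (lt_of_le_of_lt hainf_nonneg hy)
    rw [hval] at h0
    have hpos := ha_deriv_pos t ht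
    by_contra h
    push_neg at h
    have h2' : -(deriv (deriv a) t * (deriv a t)⁻¹) / (deriv a t) ^ 2 < 0 :=
      div_neg_of_neg_of_pos (neg_lt_zero.mpr (mul_pos h (inv_pos.2 hpos))) (by positivity)
    linarith
  -- antitone
  exact antitoneOn_of_deriv_nonpos (convex_Ioi 0)
    (hda2cd.continuousOn)
    (fun x hx => ((hda2cd.differentiableOn (by simp)).differentiableAt
      (isOpen_Ioi.mem_nhds (by rwa [interior_Ioi] at hx))).differentiableWithinAt)
    (fun x hx => hdd x (by rwa [interior_Ioi] at hx))

/-- ρ_τ(σ) < ρ_{M_τ} ≤ 1/H(τ), the Hubble radius. -/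
theorem fermi_radius_bounded_by_hubble
    (a b : ℝ → ℝ) (ainf : ℝ)
    (ha_smooth : ContDiffOn ℝ (⊤ : ℕ∞) a (Set.Ioi 0))
    (ha_pos : ∀ t, 0 < t → 0 < a t)
    (ha_mono : StrictMonoOn a (Set.Ioi 0))
    (ha_deriv_pos : ∀ t, 0 < t → 0 < deriv a t)
    (ha_unbounded : Tendsto a atTop atTop)
    (hainf_nonneg : 0 ≤ ainf)
    (hainf : Tendsto a (nhdsWithin 0 (Set.Ioi 0)) (nhds ainf))
    (hba : ∀ t, 0 < t → b (a t) = t)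
    (hab : ∀ y, ainf < y → 0 < b y ∧ a (b y) = y)
    (hb_deriv : ∀ t, 0 < t → deriv b (a t) = 1 / deriv a t)
    (hb2_nonneg : ∀ t, 0 < t → 0 ≤ deriv (deriv b) t)
    (τ : ℝ) (hτ : 0 < τ) :
    IntegrableOn
      (fun s : ℝ => deriv b (a τ / Real.sqrt s) / (s * Real.sqrt s * Real.sqrt (s - 1)))
      {s : ℝ | 1 < s ∧ (0 < ainf → s < (a τ / ainf) ^ 2)} ∧
    (∀ σ : ℝ, 1 < σ → (0 < ainf → σ < (a τ / ainf) ^ 2) →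
      rhoF a b τ σ < rhoM a b ainf τ) ∧
    rhoM a b ainf τ ≤ 1 / (deriv a τ / a τ) := by
  have hanti : AntitoneOn (deriv a) (Set.Ioi 0) :=
    aux_inverse a b ainf ha_smooth ha_mono ha_deriv_pos hainf_nonneg hainf hba hab hb2_nonneg
  have hA : 0 < a τ := ha_pos τ hτ
  have hdat : 0 < deriv a τ := ha_deriv_pos τ hτ
  set g : ℝ → ℝ := fun s => (s * Real.sqrt s * Real.sqrt (s - 1))⁻¹ with hgdef
  set f : ℝ → ℝ := fun s =>
    deriv b (a τ / Real.sqrt s) / (s * Real.sqrt s * Real.sqrt (s - 1)) with hfdef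
  set S : Set ℝ := {s : ℝ | 1 < s ∧ (0 < ainf → s < (a τ / ainf) ^ 2)} with hSdef
  have hSsub : S ⊆ Set.Ioi 1 := fun s hs => hs.1
  have hSmeas : MeasurableSet S := by
    by_cases h : 0 < ainf
    · have hS' : S = Set.Ioo 1 ((a τ / ainf) ^ 2) := by
        ext s; simp [hSdef, h, Set.mem_Ioo]
      rw [hS']; exact measurableSet_Ioo
    · have hS' : S = Set.Ioi 1 := by ext s; simp [hSdef, h]
      rw [hS']; exact measurableSet_Ioi
  have hy_mem : ∀ s ∈ S, ainf < a τ / Real.sqrt s ∧ a τ / Real.sqrt s < a τ := by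
    intro s hs
    have hs1 : 1 < s := hs.1
    have hsq : 1 < Real.sqrt s := by
      rw [show (1:ℝ) = Real.sqrt 1 by simp]
      exact Real.sqrt_lt_sqrt zero_le_one hs1
    constructor
    · rcases lt_or_eq_of_le hainf_nonneg with h0 | h0
      · have hL := hs.2 h0
        have h2 : Real.sqrt s < a τ / ainf := by
          rw [show a τ / ainf = Real.sqrt ((a τ / ainf) ^ 2) by
            rw [Real.sqrt_sq (le_of_lt (div_pos hA h0))]]
          exact Real.sqrt_lt_sqrt (by linarith) hL
        rw [lt_div_iff₀ (by linarith : (0:ℝ) < Real.sqrt s)]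
        calc ainf * Real.sqrt s < ainf * (a τ / ainf) := mul_lt_mul_of_pos_left h2 h0
          _ = a τ := by field_simp
      · rw [← h0]; positivity
    · exact div_lt_self hA hsq
  have hdb : ∀ y, ainf < y → y < a τ → 0 < deriv b y ∧ deriv b y ≤ (deriv a τ)⁻¹ := by
    intro y hy hyA
    obtain ⟨ht0, hay⟩ := hab y hy
    have hdby : deriv b y = 1 / deriv a (b y) := by
      conv_lhs => rw [← hay]
      exact hb_deriv (b y) ht0
    have htτ : b y < τ := by
      by_contra h
      push_neg at h
      have := ha_mono.monotoneOn (Set.mem_Ioi.mpr hτ) (Set.mem_Ioi.mpr ht0) h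
      rw [hay] at this; linarith
    have hmono := hanti (Set.mem_Ioi.mpr ht0) (Set.mem_Ioi.mpr hτ) htτ.le
    have hdap : 0 < deriv a (b y) := ha_deriv_pos _ ht0
    constructor
    · rw [hdby]; positivity
    · rw [hdby, one_div]
      exact inv_anti₀ hdat hmono
  have hfpos : ∀ s ∈ S, 0 < f s := by
    intro s hs
    have hs1 : 1 < s := hs.1
    have hs0 : (0:ℝ) < s := lt_trans one_pos hs1
    have h1 : (0:ℝ) < s - 1 := by linarith
    have hd : 0 < s * Real.sqrt s * Real.sqrt (s - 1) := by positivity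
    exact div_pos (hdb _ (hy_mem s hs).1 (hy_mem s hs).2).1 hd
  have hfle : ∀ s ∈ S, f s ≤ (deriv a τ)⁻¹ * g s := by
    intro s hs
    have hs1 : 1 < s := hs.1
    have hs0 : (0:ℝ) < s := lt_trans one_pos hs1
    have h1 : (0:ℝ) < s - 1 := by linarith
    have hd : 0 < s * Real.sqrt s * Real.sqrt (s - 1) := by positivity
    calc f s = deriv b (a τ / Real.sqrt s) / (s * Real.sqrt s * Real.sqrt (s - 1)) := rfl
      _ ≤ (deriv a τ)⁻¹ / (s * Real.sqrt s * Real.sqrt (s - 1)) :=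
          (div_le_div_iff_of_pos_right hd).mpr (hdb _ (hy_mem s hs).1 (hy_mem s hs).2).2
      _ = (deriv a τ)⁻¹ * g s := by rw [hgdef, div_eq_mul_inv]
  have hg0 : ∀ s : ℝ, 0 ≤ g s := by
    intro s
    rcases le_or_gt s 0 with h | h
    · simp [hgdef, Real.sqrt_eq_zero_of_nonpos h]
    · have : 0 ≤ s * Real.sqrt s * Real.sqrt (s - 1) := by positivity
      exact inv_nonneg.2 this
  have hfmeas : Measurable f := by
    apply Measurable.div
    · exact (measurable_deriv b).comp (measurable_const.div Real.continuous_sqrt.measurable)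
    · exact (measurable_id.mul Real.continuous_sqrt.measurable).mul
        ((Real.continuous_sqrt.comp (continuous_id.sub continuous_const)).measurable)
  have hgint : IntegrableOn g (Set.Ioi 1) := g_integral.1
  have hgval : ∫ s in Set.Ioi (1:ℝ), g s = 2 := g_integral.2
  have hCg_int : IntegrableOn (fun s => (deriv a τ)⁻¹ * g s) S :=
    (hgint.mono_set hSsub).const_mul _
  have hint : IntegrableOn f S := by
    refine hCg_int.mono' hfmeas.aestronglyMeasurable ?_
    rw [ae_restrict_iff' hSmeas]
    refine Filter.Eventually.of_forall fun s hs => ?_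
    rw [Real.norm_eq_abs, abs_of_pos (hfpos s hs)]
    exact hfle s hs
  have hSle : ∫ s in S, f s ≤ (deriv a τ)⁻¹ * 2 := by
    have step1 : ∫ s in S, f s ≤ ∫ s in S, (deriv a τ)⁻¹ * g s :=
      setIntegral_mono_on hint hCg_int hSmeas hfle
    have step2 : (∫ s in S, (deriv a τ)⁻¹ * g s)
        ≤ ∫ s in Set.Ioi 1, (deriv a τ)⁻¹ * g s := by
      apply setIntegral_mono_set (hgint.const_mul _)
      · exact Filter.Eventually.of_forall fun s => mul_nonneg (inv_nonneg.2 hdat.le) (hg0 s)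
      · exact HasSubset.Subset.eventuallyLE hSsub
    have step3 : (∫ s in Set.Ioi 1, (deriv a τ)⁻¹ * g s) = (deriv a τ)⁻¹ * 2 := by
      rw [MeasureTheory.integral_const_mul, hgval]
    linarith
  -- strict inequality part
  have hstrict : ∀ σ : ℝ, 1 < σ → (0 < ainf → σ < (a τ / ainf) ^ 2) →
      (∫ s in Set.Ioc 1 σ, f s) < ∫ s in S, f s := by
    intro σ hσ1 hσL
    obtain ⟨c, hσc, hcS⟩ : ∃ c, σ < c ∧ Set.Ioc σ c ⊆ S := by
      by_cases h : 0 < ainf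
      · refine ⟨(σ + (a τ / ainf) ^ 2) / 2, by linarith [hσL h], fun s hs => ?_⟩
        exact ⟨lt_trans hσ1 hs.1, fun _ => by nlinarith [hs.2, hσL h]⟩
      · exact ⟨σ + 1, by linarith, fun s hs => ⟨lt_trans hσ1 hs.1, fun h' => absurd h' h⟩⟩
    have hIocS : Set.Ioc 1 σ ⊆ S := fun s hs => ⟨hs.1, fun h => lt_of_le_of_lt hs.2 (hσL h)⟩
    have hint1 : IntegrableOn f (Set.Ioc 1 σ) := hint.mono_set hIocS
    have hint2 : IntegrableOn f (S \ Set.Ioc 1 σ) := hint.mono_set Set.diff_subset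
    have hsplit : (∫ s in S, f s)
        = (∫ s in Set.Ioc 1 σ, f s) + ∫ s in S \ Set.Ioc 1 σ, f s := by
      rw [← setIntegral_union disjoint_sdiff_self_right (hSmeas.diff measurableSet_Ioc)
        hint1 hint2, Set.union_diff_cancel hIocS]
    have hsub2 : Set.Ioo σ c ⊆ S \ Set.Ioc 1 σ := fun s hs =>
      ⟨hcS ⟨hs.1, hs.2.le⟩, fun h => absurd hs.1 (not_lt.2 h.2)⟩
    have hIoo : 0 < ∫ s in Set.Ioo σ c, f s := by
      have heq : (∫ s in Set.Ioo σ c, f s) = ∫ s in σ..c, f s := by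
        rw [intervalIntegral.integral_of_le hσc.le, MeasureTheory.integral_Ioc_eq_integral_Ioo]
      rw [heq]
      apply intervalIntegral.intervalIntegral_pos_of_pos_on
      · rw [intervalIntegrable_iff_integrableOn_Ioc_of_le hσc.le]
        exact hint.mono_set hcS
      · exact fun x hx => hfpos x (hcS ⟨hx.1, hx.2.le⟩)
      · exact hσc
    have hge : (∫ s in Set.Ioo σ c, f s) ≤ ∫ s in S \ Set.Ioc 1 σ, f s := by
      refine setIntegral_mono_set hint2 ?_ (HasSubset.Subset.eventuallyLE hsub2)
      exact (ae_restrict_iff' (hSmeas.diff measurableSet_Ioc)).mpr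
        (Filter.Eventually.of_forall fun s hs => (hfpos s hs.1).le)
    linarith
  refine ⟨hint, ?_, ?_⟩
  · intro σ hσ1 hσL
    have h1 : rhoF a b τ σ = (a τ / 2) * ∫ s in Set.Ioc 1 σ, f s := by
      rw [rhoF, intervalIntegral.integral_of_le (le_of_lt hσ1)]
    have h2 : rhoM a b ainf τ = (a τ / 2) * ∫ s in S, f s := rfl
    rw [h1, h2]
    exact mul_lt_mul_of_pos_left (hstrict σ hσ1 hσL) (by positivity)
  · have h2 : rhoM a b ainf τ = (a τ / 2) * ∫ s in S, f s := rfl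
    rw [h2, one_div_div]
    calc (a τ / 2) * ∫ s in S, f s ≤ (a τ / 2) * ((deriv a τ)⁻¹ * 2) :=
          mul_le_mul_of_nonneg_left hSle (by positivity)
      _ = a τ / deriv a τ := by field_simp
end
end

section
/- The proper radius of the Fermi space slice, τ ↦ ρ_{M_τ}, is a monotone increasing function of the Fermi observer's proper time τ on (0,∞). -/
open Real MeasureTheory Filter Set intervalIntegral

set_option maxHeartbeats 2000000

noncomputable section

/-- The integrand in the `w = 1/√s` variable. -/
def Fw (b : ℝ → ℝ) (A w : ℝ) : ℝ := A * deriv b (A * w) * w / Real.sqrt (1 - w ^ 2)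

lemma Fw_measurable (b : ℝ → ℝ) (A : ℝ) : Measurable (Fw b A) := by
  unfold Fw
  exact ((((measurable_deriv b).comp (measurable_id.const_mul A)).const_mul A).mul
    measurable_id).div ((Real.continuous_sqrt.comp (continuous_const.sub
      (continuous_pow 2))).measurable)

lemma rhoM_eq_w (a b : ℝ → ℝ) (ainf τ : ℝ) (h0 : 0 ≤ ainf) (hA : ainf < a τ) (hA0 : 0 < a τ) :
    rhoM a b ainf τ = ∫ w in Set.Ioo (ainf / a τ) 1, Fw b (a τ) w := by
  set A := a τ with hAdef
  set r := ainf / A with hrdef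
  have hr0 : 0 ≤ r := div_nonneg h0 hA0.le
  have hr1 : r < 1 := (div_lt_one hA0).2 hA
  have himg : {s : ℝ | 1 < s ∧ (0 < ainf → s < (A / ainf) ^ 2)}
      = (fun w : ℝ => (w ^ 2)⁻¹) '' Set.Ioo r 1 := by
    ext s
    simp only [Set.mem_setOf_eq, Set.mem_image, Set.mem_Ioo]
    constructor
    · rintro ⟨hs1, hs2⟩
      have hs0 : 0 < s := lt_trans one_pos hs1
      have hsq : 1 < Real.sqrt s := by
        rw [show (1:ℝ) = Real.sqrt 1 by rw [Real.sqrt_one]]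
        exact Real.sqrt_lt_sqrt (by norm_num) hs1
      refine ⟨(Real.sqrt s)⁻¹, ⟨?_, ?_⟩, ?_⟩
      · rcases eq_or_lt_of_le h0 with h | h
        · rw [hrdef, ← h, zero_div]
          positivity
        · have h2 := hs2 h
          have hAainf : 0 < A / ainf := div_pos hA0 h
          have hlt : Real.sqrt s < A / ainf := by
            calc Real.sqrt s < Real.sqrt ((A / ainf) ^ 2) := Real.sqrt_lt_sqrt hs0.le h2
              _ = A / ainf := Real.sqrt_sq hAainf.le
          rw [hrdef, show ainf / A = (A / ainf)⁻¹ by rw [inv_div]]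
          exact inv_strictAnti₀ (Real.sqrt_pos.2 hs0) hlt
      · exact inv_lt_one_of_one_lt₀ hsq
      · rw [inv_pow, inv_inv, Real.sq_sqrt hs0.le]
    · rintro ⟨w, ⟨hw1, hw2⟩, rfl⟩
      have hw0 : 0 < w := lt_of_le_of_lt hr0 hw1
      have hwsq : w ^ 2 < 1 := by nlinarith
      have hwsq0 : 0 < w ^ 2 := by positivity
      refine ⟨(one_lt_inv₀ hwsq0).2 hwsq, fun hainf0 => ?_⟩
      have hra : 0 < ainf / A := div_pos hainf0 hA0
      have : (ainf / A) ^ 2 < w ^ 2 := by nlinarith [hw1]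
      calc (w ^ 2)⁻¹ < ((ainf / A) ^ 2)⁻¹ := inv_strictAnti₀ (by positivity) this
        _ = (A / ainf) ^ 2 := by rw [← inv_pow, inv_div]
  have hderiv : ∀ x ∈ Set.Ioo r 1, HasDerivWithinAt (fun w : ℝ => (w ^ 2)⁻¹)
      (-(2 * x) / (x ^ 2) ^ 2) (Set.Ioo r 1) x := by
    intro x hx
    have hx0 : 0 < x := lt_of_le_of_lt hr0 hx.1
    have := ((hasDerivAt_pow 2 x).inv (by positivity)).hasDerivWithinAt
      (s := Set.Ioo r 1)
    simp at this; exact this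
  have hinj : Set.InjOn (fun w : ℝ => (w ^ 2)⁻¹) (Set.Ioo r 1) := by
    intro x hx y hy h
    have hx0 : 0 < x := lt_of_le_of_lt hr0 hx.1
    have hy0 : 0 < y := lt_of_le_of_lt hr0 hy.1
    have h2 : x ^ 2 = y ^ 2 := inv_injective h
    refine le_antisymm ?_ ?_ <;> nlinarith
  rw [rhoM]
  rw [himg, integral_image_eq_integral_abs_deriv_smul measurableSet_Ioo hderiv hinj]
  have heq : Set.EqOn
      (fun x => |(-(2 * x) / (x ^ 2) ^ 2)| •
        (deriv b (A / Real.sqrt ((x ^ 2)⁻¹)) /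
          ((x ^ 2)⁻¹ * Real.sqrt ((x ^ 2)⁻¹) * Real.sqrt ((x ^ 2)⁻¹ - 1))))
      (fun w => (2 / A) * Fw b A w) (Set.Ioo r 1) := by
    intro w hw
    have hw0 : 0 < w := lt_of_le_of_lt hr0 hw.1
    have hw1 : w < 1 := hw.2
    have h1 : Real.sqrt ((w ^ 2)⁻¹) = w⁻¹ := by rw [Real.sqrt_inv, Real.sqrt_sq hw0.le]
    have h2 : A / w⁻¹ = A * w := by field_simp
    have h3 : (w ^ 2)⁻¹ - 1 = (1 - w ^ 2) / w ^ 2 := by field_simp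
    have h4 : Real.sqrt ((1 - w ^ 2) / w ^ 2) = Real.sqrt (1 - w ^ 2) / w := by
      rw [Real.sqrt_div (by nlinarith), Real.sqrt_sq hw0.le]
    have hS : 0 < Real.sqrt (1 - w ^ 2) := Real.sqrt_pos.2 (by nlinarith)
    have habs : |(-(2 * w) / (w ^ 2) ^ 2)| = (2 * w) / (w ^ 2) ^ 2 := by
      rw [abs_div, abs_neg, abs_of_pos (by positivity), abs_of_pos (by positivity)]
    simp only [smul_eq_mul]
    rw [h1, h2, h3, h4, habs]
    unfold Fw
    field_simp
  rw [setIntegral_congr_fun measurableSet_Ioo heq, MeasureTheory.integral_const_mul]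
  rw [← hAdef]
  field_simp

/-- τ ↦ ρ_{M_τ} is a monotone increasing function on (0,∞). -/
theorem fermi_radius_monotone
    (a b : ℝ → ℝ) (ainf : ℝ)
    (ha_smooth : ContDiffOn ℝ (⊤ : ℕ∞) a (Set.Ioi 0))
    (ha_pos : ∀ t, 0 < t → 0 < a t)
    (ha_mono : StrictMonoOn a (Set.Ioi 0))
    (ha_deriv_pos : ∀ t, 0 < t → 0 < deriv a t)
    (ha_unbounded : Tendsto a atTop atTop)
    (hainf_nonneg : 0 ≤ ainf)
    (hainf : Tendsto a (nhdsWithin 0 (Set.Ioi 0)) (nhds ainf))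
    (hba : ∀ t, 0 < t → b (a t) = t)
    (hab : ∀ y, ainf < y → 0 < b y ∧ a (b y) = y)
    (hb_deriv : ∀ t, 0 < t → deriv b (a t) = 1 / deriv a t)
    (hb2_nonneg : ∀ t, 0 < t → 0 ≤ deriv (deriv b) t) :
    MonotoneOn (rhoM a b ainf) (Set.Ioi 0) := by
  -- ainf is a strict lower bound for the values of `a`
  have hainf_lt : ∀ t : ℝ, 0 < t → ainf < a t := by
    intro t ht
    have h2 : a (t / 2) < a t := ha_mono (by simp; positivity) (by simpa using ht) (by linarith)
    have h1 : ainf ≤ a (t / 2) := by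
      refine le_of_tendsto hainf ?_
      filter_upwards [Ioo_mem_nhdsGT (by positivity : (0:ℝ) < t / 2)] with x hx
      exact (ha_mono (by simpa using hx.1) (by simp; positivity) hx.2).le
    linarith
  have hb_pos : ∀ y, ainf < y → 0 < b y := fun y hy => (hab y hy).1
  have hab' : ∀ y, ainf < y → a (b y) = y := fun y hy => (hab y hy).2
  have ha_hasDeriv : ∀ t : ℝ, 0 < t → HasDerivAt a (deriv a t) t := by
    intro t ht
    exact ((ha_smooth.differentiableOn (by simp)).differentiableAt
      (Ioi_mem_nhds ht)).hasDerivAt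
  -- continuity of the inverse function b on (ainf, ∞)
  have hb_contAt : ∀ y, ainf < y → ContinuousAt b y := by
    intro y hy
    rw [ContinuousAt]
    refine tendsto_order.2 ⟨?_, ?_⟩
    · intro c hc
      rcases le_or_gt c 0 with h0 | h0
      · filter_upwards [Ioi_mem_nhds hy] with z hz
        exact lt_of_le_of_lt h0 (hb_pos z hz)
      · have hac : a c < y := by
          have := ha_mono (Set.mem_Ioi.2 h0) (Set.mem_Ioi.2 (hb_pos y hy)) hc
          rwa [hab' y hy] at this
        filter_upwards [Ioi_mem_nhds hac] with z hz
        rw [Set.mem_Ioi] at hz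
        have hz' : ainf < z := lt_trans (hainf_lt c h0) hz
        by_contra hle
        push_neg at hle
        have : a (b z) ≤ a c := ha_mono.monotoneOn (Set.mem_Ioi.2 (hb_pos z hz'))
          (Set.mem_Ioi.2 h0) hle
        rw [hab' z hz'] at this; linarith
    · intro c hc
      have hc0 : 0 < c := lt_trans (hb_pos y hy) hc
      have hya : y < a c := by
        have := ha_mono (Set.mem_Ioi.2 (hb_pos y hy)) (Set.mem_Ioi.2 hc0) hc
        rwa [hab' y hy] at this
      filter_upwards [Iio_mem_nhds hya, Ioi_mem_nhds hy] with z hz1 hz2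
      rw [Set.mem_Iio] at hz1
      rw [Set.mem_Ioi] at hz2
      by_contra hle
      push_neg at hle
      have : a c ≤ a (b z) := ha_mono.monotoneOn (Set.mem_Ioi.2 hc0)
        (Set.mem_Ioi.2 (hb_pos z hz2)) hle
      rw [hab' z hz2] at this; linarith
  have hb_hasDeriv : ∀ y, ainf < y → HasDerivAt b (deriv a (b y))⁻¹ y := by
    intro y hy
    refine HasDerivAt.of_local_left_inverse (hb_contAt y hy)
      (ha_hasDeriv (b y) (hb_pos y hy)) (ne_of_gt (ha_deriv_pos _ (hb_pos y hy))) ?_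
    filter_upwards [Ioi_mem_nhds hy] with z hz using hab' z hz
  have hb_deriv_eq : ∀ y, ainf < y → deriv b y = (deriv a (b y))⁻¹ := by
    intro y hy
    have := hb_deriv (b y) (hb_pos y hy)
    rwa [hab' y hy, one_div] at this
  have hdb_pos : ∀ y, ainf < y → 0 < deriv b y := by
    intro y hy
    rw [hb_deriv_eq y hy]
    exact inv_pos.2 (ha_deriv_pos _ (hb_pos y hy))
  -- monotonicity of deriv b on (ainf, ∞)
  have hda_cd : ContDiffOn ℝ (⊤ : ℕ∞) (deriv a) (Set.Ioi 0) :=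
    ha_smooth.deriv_of_isOpen isOpen_Ioi (by simp)
  have hb_diffOn : DifferentiableOn ℝ b (Set.Ioi ainf) := fun y hy =>
    (hb_hasDeriv y hy).differentiableAt.differentiableWithinAt
  have hmaps : Set.MapsTo b (Set.Ioi ainf) (Set.Ioi 0) := fun y hy => hb_pos y hy
  have hG_diff : DifferentiableOn ℝ (fun y => (deriv a (b y))⁻¹) (Set.Ioi ainf) := by
    apply DifferentiableOn.inv
    · exact (hda_cd.differentiableOn (by simp)).comp hb_diffOn hmaps
    · intro y hy
      exact ne_of_gt (ha_deriv_pos _ (hb_pos y hy))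
  have heqOn : Set.EqOn (deriv b) (fun y => (deriv a (b y))⁻¹) (Set.Ioi ainf) :=
    fun y hy => hb_deriv_eq y hy
  have hdb_contOn : ContinuousOn (deriv b) (Set.Ioi ainf) :=
    hG_diff.continuousOn.congr heqOn
  have hdb_mono : MonotoneOn (deriv b) (Set.Ioi ainf) := by
    apply monotoneOn_of_deriv_nonneg (convex_Ioi ainf) hdb_contOn
    · rw [interior_Ioi]
      exact hG_diff.congr heqOn
    · intro x hx
      rw [interior_Ioi] at hx
      exact hb2_nonneg x (lt_of_le_of_lt hainf_nonneg hx)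
  -- nonnegativity of Fw
  have hF_nonneg : ∀ B : ℝ, 0 < B → ∀ w ∈ Set.Ioo (ainf / B) 1, 0 ≤ Fw b B w := by
    intro B hB w hw
    have hwnn : 0 ≤ w := le_trans (div_nonneg hainf_nonneg hB.le) hw.1.le
    have harg : ainf < B * w := by
      rw [mul_comm]; exact (div_lt_iff₀ hB).1 hw.1
    have hD := hdb_pos _ harg
    have hS : 0 ≤ Real.sqrt (1 - w ^ 2) := Real.sqrt_nonneg _
    exact div_nonneg (mul_nonneg (mul_nonneg hB.le hD.le) hwnn) hS
  -- main argument
  intro τ hτ' τ' hτ'' hle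
  have hτ : 0 < τ := hτ'
  have hτ2 : 0 < τ' := hτ''
  have hA0 : 0 < a τ := ha_pos τ hτ
  have hA'0 : 0 < a τ' := ha_pos τ' hτ2
  have hAle : a τ ≤ a τ' := ha_mono.monotoneOn hτ' hτ'' hle
  have hAinf : ainf < a τ := hainf_lt τ hτ
  have hA'inf : ainf < a τ' := lt_of_lt_of_le hAinf hAle
  rw [rhoM_eq_w a b ainf τ hainf_nonneg hAinf hA0,
    rhoM_eq_w a b ainf τ' hainf_nonneg hA'inf hA'0]
  set A := a τ with hA
  set A' := a τ' with hA'
  set r := ainf / A with hr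
  set r' := ainf / A' with hr'2
  clear_value A A' r r'
  have hr0 : 0 ≤ r := by rw [hr]; exact div_nonneg hainf_nonneg hA0.le
  have hr'0 : 0 ≤ r' := by rw [hr'2]; exact div_nonneg hainf_nonneg hA'0.le
  have hr'r : r' ≤ r := by rw [hr, hr'2]; gcongr
  have hr1 : r < 1 := by rw [hr]; exact (div_lt_one hA0).2 hAinf
  have hsub : Set.Ioo r 1 ⊆ Set.Ioo r' 1 := Set.Ioo_subset_Ioo hr'r le_rfl
  have hFmono : ∀ w ∈ Set.Ioo r 1, Fw b A w ≤ Fw b A' w := by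
    intro w hw
    have hw0 : 0 < w := lt_of_le_of_lt hr0 hw.1
    have harg : ainf < A * w := by
      rw [mul_comm]; exact (div_lt_iff₀ hA0).1 (hr ▸ hw.1)
    have harg2 : A * w ≤ A' * w := mul_le_mul_of_nonneg_right hAle hw0.le
    have hD := hdb_pos _ harg
    have hDle : deriv b (A * w) ≤ deriv b (A' * w) :=
      hdb_mono (Set.mem_Ioi.2 harg) (Set.mem_Ioi.2 (lt_of_lt_of_le harg harg2)) harg2
    have hnum : A * deriv b (A * w) * w ≤ A' * deriv b (A' * w) * w :=
      mul_le_mul_of_nonneg_right (mul_le_mul hAle hDle hD.le hA'0.le) hw0.le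
    have hSpos : 0 < Real.sqrt (1 - w ^ 2) := Real.sqrt_pos.2 (by nlinarith [hw.2])
    exact (div_le_div_iff_of_pos_right hSpos).2 hnum
  by_cases hInt : IntegrableOn (Fw b A') (Set.Ioo r' 1) volume
  · -- integrable case: pointwise comparison
    have hIntA : IntegrableOn (Fw b A) (Set.Ioo r 1) volume := by
      apply Integrable.mono' (hInt.mono_set hsub)
        ((Fw_measurable b A).aestronglyMeasurable)
      filter_upwards [ae_restrict_mem measurableSet_Ioo] with w hw
      rw [Real.norm_eq_abs, abs_of_nonneg (hF_nonneg A hA0 w (hr ▸ hw))]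
      exact hFmono w hw
    calc (∫ w in Set.Ioo r 1, Fw b A w)
        ≤ ∫ w in Set.Ioo r 1, Fw b A' w :=
          setIntegral_mono_on hIntA (hInt.mono_set hsub) measurableSet_Ioo hFmono
      _ ≤ ∫ w in Set.Ioo r' 1, Fw b A' w := by
          apply setIntegral_mono_set hInt
          · filter_upwards [ae_restrict_mem measurableSet_Ioo] with w hw
              using hF_nonneg A' hA'0 w (hr'2 ▸ hw)
          · exact HasSubset.Subset.eventuallyLE hsub
  · -- non-integrable case: both integrals are zero
    set c' : ℝ := (ainf + A) / (2 * A') with hc'def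
    clear_value c'
    have hc'1 : r' < c' := by
      rw [hr'2, hc'def, div_lt_div_iff₀ hA'0 (by positivity)]
      nlinarith
    have hc'2 : c' < 1 := by
      rw [hc'def, div_lt_one (by positivity)]
      nlinarith
    have hc'0 : 0 ≤ c' := le_trans hr'0 hc'1.le
    have hAc' : A' * c' = (ainf + A) / 2 := by
      rw [hc'def]; field_simp
    have hmid : ainf < A' * c' := by rw [hAc']; linarith
    have hIA : ¬ IntegrableOn (Fw b A) (Set.Ioo r 1) volume := by
      intro hIA
      apply hInt
      -- part 2 : integrability on [c', 1)
      have hIcc_sub : Set.Icc (A' * c') A' ⊆ Set.Ioi ainf := fun y hy =>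
        lt_of_lt_of_le hmid hy.1
      obtain ⟨M, hM⟩ := (isCompact_Icc :
        IsCompact (Set.Icc (A' * c') A')).exists_bound_of_continuousOn
          (hdb_contOn.mono hIcc_sub)
      have hM0 : 0 ≤ M := le_trans (norm_nonneg _)
        (hM A' ⟨by nlinarith, le_refl A'⟩)
      have hbase : IntegrableOn (fun w : ℝ => (1 - w) ^ (-(1/2) : ℝ))
          (Set.Ioo c' 1) volume := by
        have h1 : IntervalIntegrable (fun x : ℝ => x ^ (-(1/2) : ℝ)) volume 0 (1 - c') :=
          intervalIntegral.intervalIntegrable_rpow' (by norm_num)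
        have h2 := (h1.comp_sub_left 1).symm
        rw [sub_zero, sub_sub_cancel] at h2
        rwa [intervalIntegrable_iff_integrableOn_Ioo_of_le hc'2.le] at h2
      have hpart2 : IntegrableOn (Fw b A') (Set.Ico c' 1) volume := by
        rw [integrableOn_Ico_iff_integrableOn_Ioo]
        apply Integrable.mono' (hbase.const_mul (A' * M))
          ((Fw_measurable b A').aestronglyMeasurable)
        filter_upwards [ae_restrict_mem measurableSet_Ioo] with w hw
        obtain ⟨hwc, hw1⟩ := hw
        have hw0 : 0 < w := lt_of_le_of_lt hc'0 hwc
        have hargmem : A' * w ∈ Set.Icc (A' * c') A' :=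
          ⟨mul_le_mul_of_nonneg_left hwc.le hA'0.le, by nlinarith⟩
        have hDM : |deriv b (A' * w)| ≤ M := by
          have := hM _ hargmem; rwa [Real.norm_eq_abs] at this
        have hs1 : Real.sqrt (1 - w) ≤ Real.sqrt (1 - w ^ 2) :=
          Real.sqrt_le_sqrt (by nlinarith)
        have hs0 : 0 < Real.sqrt (1 - w) := Real.sqrt_pos.2 (by linarith)
        have hrpow : (1 - w) ^ (-(1/2) : ℝ) = (Real.sqrt (1 - w))⁻¹ := by
          rw [Real.rpow_neg (by linarith), ← Real.sqrt_eq_rpow]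
        calc ‖Fw b A' w‖ = |A' * deriv b (A' * w) * w| / Real.sqrt (1 - w ^ 2) := by
              rw [Fw, Real.norm_eq_abs, abs_div, abs_of_nonneg (Real.sqrt_nonneg _)]
          _ ≤ A' * M * 1 / Real.sqrt (1 - w) := by
              apply div_le_div₀ (by positivity) ?_ hs0 hs1
              rw [abs_mul, abs_mul, abs_of_pos hA'0, abs_of_pos hw0]
              exact mul_le_mul (mul_le_mul le_rfl hDM (abs_nonneg _) hA'0.le)
                hw1.le hw0.le (by positivity)
          _ = A' * M * (1 - w) ^ (-(1/2) : ℝ) := by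
              rw [hrpow, mul_one, div_eq_mul_inv]
      -- part 1 : integrability on (r', c') via rescaling from Fw b A
      set q : ℝ := (ainf + A) / (2 * A) with hqdef
      clear_value q
      have hq1 : r < q := by
        rw [hr, hqdef, div_lt_div_iff₀ hA0 (by positivity)]
        nlinarith
      have hq2 : q < 1 := by
        rw [hqdef, div_lt_one (by positivity)]
        nlinarith
      have hc : (0:ℝ) < A / A' := by positivity
      have hc1 : A / A' ≤ 1 := (div_le_one hA'0).2 hAle
      have hc' : (0:ℝ) < A' / A := by positivity
      have he1 : (A / A') * r = r' := by rw [hr, hr'2]; field_simp; try ring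
      have he2 : (A / A') * q = c' := by rw [hqdef, hc'def]; field_simp; try ring
      have he3 : (A' / A) * r' = r := by rw [hr, hr'2]; field_simp; try ring
      have he4 : (A' / A) * c' = q := by rw [hqdef, hc'def]; field_simp; try ring
      have himage : (fun v : ℝ => (A / A') * v) '' Set.Ioo r q = Set.Ioo r' c' := by
        ext x
        simp only [Set.mem_image, Set.mem_Ioo]
        constructor
        · rintro ⟨v, ⟨h1, h2⟩, rfl⟩
          exact ⟨he1 ▸ mul_lt_mul_of_pos_left h1 hc,
            he2 ▸ mul_lt_mul_of_pos_left h2 hc⟩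
        · rintro ⟨h1, h2⟩
          refine ⟨(A' / A) * x, ⟨?_, ?_⟩, by field_simp⟩
          · exact he3 ▸ mul_lt_mul_of_pos_left h1 hc'
          · exact he4 ▸ mul_lt_mul_of_pos_left h2 hc'
      have hders : ∀ x ∈ Set.Ioo r q, HasDerivWithinAt (fun v : ℝ => (A / A') * v)
          (A / A') (Set.Ioo r q) x := by
        intro x _
        simpa using ((hasDerivAt_id x).const_mul (A / A')).hasDerivWithinAt
          (s := Set.Ioo r q)
      have hinj2 : Set.InjOn (fun v : ℝ => (A / A') * v) (Set.Ioo r q) := by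
        intro x _ y _ h
        exact mul_left_cancel₀ (ne_of_gt hc) h
      have hpart1 : IntegrableOn (Fw b A') (Set.Ioo r' c') volume := by
        rw [← himage]
        rw [integrableOn_image_iff_integrableOn_abs_deriv_smul measurableSet_Ioo
          hders hinj2]
        have hsub2 : Set.Ioo r q ⊆ Set.Ioo r 1 := Set.Ioo_subset_Ioo le_rfl hq2.le
        apply Integrable.mono' (hIA.mono_set hsub2)
        · apply Measurable.aestronglyMeasurable
          have hmeas : Measurable fun x : ℝ => |A / A'| * Fw b A' (A / A' * x) :=
            ((Fw_measurable b A').comp (measurable_id.const_mul (A / A'))).const_mul _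
          simpa [smul_eq_mul] using hmeas
        · filter_upwards [ae_restrict_mem measurableSet_Ioo] with v hv
          obtain ⟨hv1, hv2⟩ := hv
          have hv0 : 0 < v := lt_of_le_of_lt hr0 hv1
          have hvlt1 : v < 1 := lt_trans hv2 hq2
          have hwmem : (A / A') * v ∈ Set.Ioo r' 1 := by
            refine ⟨he1 ▸ mul_lt_mul_of_pos_left hv1 hc, ?_⟩
            calc (A / A') * v ≤ 1 * v := mul_le_mul_of_nonneg_right hc1 hv0.le
              _ < 1 := by rw [one_mul]; exact hvlt1
          have hFnn : 0 ≤ Fw b A' ((A / A') * v) := hF_nonneg A' hA'0 _ (hr'2 ▸ hwmem)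
          rw [smul_eq_mul, Real.norm_eq_abs, abs_mul, abs_abs, abs_of_pos hc, abs_of_nonneg hFnn]
          -- key estimate
          have hargv : ainf < A * v := by
            rw [mul_comm]; exact (div_lt_iff₀ hA0).1 (hr ▸ hv1)
          have hDv := hdb_pos _ hargv
          have harg_eq : A' * ((A / A') * v) = A * v := by field_simp
          have hcv0 : 0 ≤ (A / A') * v := by positivity
          have hcvle : (A / A') * v ≤ v := mul_le_of_le_one_left hv0.le hc1
          have hsle : Real.sqrt (1 - v ^ 2) ≤ Real.sqrt (1 - ((A / A') * v) ^ 2) := by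
            apply Real.sqrt_le_sqrt
            have := pow_le_pow_left₀ hcv0 hcvle 2
            linarith
          have hspos : 0 < Real.sqrt (1 - v ^ 2) := Real.sqrt_pos.2 (by nlinarith)
          rw [Fw, Fw, harg_eq]
          rw [← mul_div_assoc]
          apply div_le_div₀ (by positivity) ?_ hspos hsle
          have : (A / A') * (A' * deriv b (A * v) * ((A / A') * v))
              = (A * deriv b (A * v) * v) * (A / A') := by field_simp
          rw [this]
          exact mul_le_of_le_one_right (by positivity) hc1
      have := hpart1.union hpart2
      rwa [Set.Ioo_union_Ico_eq_Ioo hc'1 hc'2.le] at this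
    rw [integral_undef hIA, integral_undef hInt]
end
end

section
/- Let χ₀ > 0 and suppose σ₀ : (0,∞) → ℝ is a differentiable function with 1 < σ₀(τ) < σ∞(τ) and χ(τ, σ₀(τ)) = χ₀ for all τ > 0 (the parameter of a comoving test particle with fixed coordinate χ₀). Then the Fermi relative speed v_F(χ₀) := d/dτ [ρ_τ(σ₀(τ))] exists and equals (ȧ(τ)/2)·[ ∫₁^{σ₀(τ)} ḃ(a(τ)/√σ)·σ^{−3/2}(σ−1)^{−1/2} dσ + a(τ)∫₁^{σ₀(τ)} b̈(a(τ)/√σ)·σ^{−2}(σ−1)^{−1/2} dσ − (a(τ)/σ₀(τ))∫₁^{σ₀(τ)} b̈(a(τ)/√σ)·σ^{−1}(σ−1)^{−1/2} dσ ]. -/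
open Real MeasureTheory Filter Set intervalIntegral
open scoped Topology

noncomputable section

/-- The general Fermi-speed expression of Theorem 4 (Eq. (40) of the paper). -/
def vFgen (a b : ℝ → ℝ) (τ σ₀ : ℝ) : ℝ :=
  (deriv a τ / 2) *
    ((∫ σ in (1:ℝ)..σ₀, deriv b (a τ / Real.sqrt σ) / (σ * Real.sqrt σ * Real.sqrt (σ - 1))) +
      a τ *
        (∫ σ in (1:ℝ)..σ₀, deriv (deriv b) (a τ / Real.sqrt σ) / (σ ^ 2 * Real.sqrt (σ - 1))) -
      (a τ / σ₀) *
        (∫ σ in (1:ℝ)..σ₀, deriv (deriv b) (a τ / Real.sqrt σ) / (σ * Real.sqrt (σ - 1))))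

/-! ### Auxiliary lemmas -/

private lemma aux_sqrt_rpow {s : ℝ} (hs : 1 < s) :
    (s - 1) ^ (-(1/2) : ℝ) = 1 / Real.sqrt (s - 1) := by
  rw [Real.rpow_neg (by linarith : (0:ℝ) ≤ s - 1), Real.sqrt_eq_rpow]
  exact (one_div _).symm

private lemma aux_rint (c₁ c₂ : ℝ) :
    IntervalIntegrable (fun s => (s - 1) ^ (-(1/2) : ℝ)) volume c₁ c₂ := by
  have h := (intervalIntegrable_rpow' (a := c₁ - 1) (b := c₂ - 1) (r := -(1/2))
    (by norm_num)).comp_sub_right 1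
  simpa using h

private lemma aux_ainf_lt (a : ℝ → ℝ) (ainf : ℝ)
    (ha_mono : StrictMonoOn a (Set.Ioi 0))
    (hainf : Tendsto a (nhdsWithin 0 (Set.Ioi 0)) (nhds ainf))
    {t : ℝ} (ht : 0 < t) : ainf < a t := by
  have h2 : a (t/2) < a t := ha_mono (by simp; positivity) (by simpa using ht) (by linarith)
  refine lt_of_le_of_lt ?_ h2
  refine le_of_tendsto hainf ?_
  filter_upwards [Ioo_mem_nhdsGT_of_mem
    (⟨le_refl 0, by positivity⟩ : (0:ℝ) ∈ Ico 0 (t/2))] with x hx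
  exact le_of_lt (ha_mono (by simpa using hx.1) (by simp; positivity) hx.2)

/-- Master lemma: derivative of `u ↦ ∫₁^{σ₀ u} ḃ(a u/√s) · φ s/√(s-1) ds`. -/
private lemma master
    (a b : ℝ → ℝ) (ainf : ℝ)
    (ha_smooth : ContDiffOn ℝ (⊤ : ℕ∞) a (Set.Ioi 0))
    (ha_mono : StrictMonoOn a (Set.Ioi 0))
    (hainf_nonneg : 0 ≤ ainf)
    (hb_smooth : ContDiffOn ℝ (⊤ : ℕ∞) b (Set.Ioi ainf))
    (σ₀ : ℝ → ℝ) (τ₀ : ℝ) (hτ₀ : 0 < τ₀)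
    (hσ₀_diff : DifferentiableAt ℝ σ₀ τ₀)
    (hσ₀_lb : 1 < σ₀ τ₀)
    (hub : ainf * Real.sqrt (σ₀ τ₀) < a τ₀)
    (φ : ℝ → ℝ) (hφ : ContinuousOn φ (Set.Ici 1)) :
    HasDerivAt (fun u => ∫ s in (1:ℝ)..σ₀ u,
        deriv b (a u / Real.sqrt s) * (φ s / Real.sqrt (s - 1)))
      ((∫ s in (1:ℝ)..σ₀ τ₀,
          deriv (deriv b) (a τ₀ / Real.sqrt s) * (deriv a τ₀ / Real.sqrt s) *
            (φ s / Real.sqrt (s - 1)))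
        + deriv b (a τ₀ / Real.sqrt (σ₀ τ₀)) * (φ (σ₀ τ₀) / Real.sqrt (σ₀ τ₀ - 1))
            * deriv σ₀ τ₀) τ₀ := by
  have hIoi : IsOpen (Set.Ioi (0:ℝ)) := isOpen_Ioi
  have hda_cont : ContinuousOn (deriv a) (Set.Ioi 0) :=
    ha_smooth.continuousOn_deriv_of_isOpen isOpen_Ioi (by simp)
  have hdb_smooth : ContDiffOn ℝ (⊤ : ℕ∞) (deriv b) (Set.Ioi ainf) :=
    hb_smooth.deriv_of_isOpen isOpen_Ioi (by simp)
  have hdb_cont : ContinuousOn (deriv b) (Set.Ioi ainf) := hdb_smooth.continuousOn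
  have hddb_cont : ContinuousOn (deriv (deriv b)) (Set.Ioi ainf) :=
    hdb_smooth.continuousOn_deriv_of_isOpen isOpen_Ioi (by simp)
  have haC : ContinuousAt a τ₀ := ha_smooth.continuousOn.continuousAt (hIoi.mem_nhds hτ₀)
  -- choose M
  have h1 : ∀ᶠ m in 𝓝 (σ₀ τ₀), ainf * Real.sqrt m < a τ₀ :=
    Filter.Tendsto.eventually_lt_const hub
      ((continuous_const.mul Real.continuous_sqrt).tendsto (σ₀ τ₀))
  obtain ⟨ε₁, hε₁, hM⟩ := Metric.eventually_nhds_iff.1 h1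
  set M := σ₀ τ₀ + ε₁ / 2 with hMdef
  have hMσ : σ₀ τ₀ < M := by rw [hMdef]; linarith
  have hMlt : ainf * Real.sqrt M < a τ₀ := by
    apply hM
    rw [Real.dist_eq, hMdef, add_sub_cancel_left, abs_of_pos (by linarith)]
    linarith
  -- choose δ
  have h2 : ∀ᶠ u in 𝓝 τ₀, ainf * Real.sqrt M < a u :=
    Filter.Tendsto.eventually_const_lt hMlt haC
  obtain ⟨ε₂, hε₂, hdom'⟩ := Metric.eventually_nhds_iff.1 h2
  set δ := min (ε₂ / 2) (τ₀ / 2) with hδdef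
  have hδ0 : 0 < δ := lt_min (by linarith) (by linarith)
  have hδτ : δ < τ₀ := lt_of_le_of_lt (min_le_right _ _) (by linarith)
  have hP : ∀ u ∈ Icc (τ₀ - δ) (τ₀ + δ), ainf * Real.sqrt M < a u := by
    intro u hu
    apply hdom'
    rw [Real.dist_eq]
    have h3 : |u - τ₀| ≤ δ := abs_le.2 ⟨by linarith [hu.1], by linarith [hu.2]⟩
    have h4 : δ ≤ ε₂ / 2 := min_le_left _ _
    linarith
  have hPpos : ∀ u ∈ Icc (τ₀ - δ) (τ₀ + δ), (0:ℝ) < u := fun u hu => by linarith [hu.1]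
  have h1M : (1:ℝ) ≤ M := by linarith
  have hsqrtM : (0:ℝ) < Real.sqrt M := Real.sqrt_pos.2 (by linarith)
  set m₁ := a (τ₀ - δ) / Real.sqrt M with hm₁def
  set m₂ := a (τ₀ + δ) with hm₂def
  have hτmδ : τ₀ - δ ∈ Icc (τ₀ - δ) (τ₀ + δ) := ⟨le_refl _, by linarith⟩
  have hτpδ : τ₀ + δ ∈ Icc (τ₀ - δ) (τ₀ + δ) := ⟨by linarith, le_refl _⟩
  have hτ₀P : τ₀ ∈ Icc (τ₀ - δ) (τ₀ + δ) := ⟨by linarith, by linarith⟩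
  have ham : 0 < a (τ₀ - δ) :=
    lt_of_le_of_lt (mul_nonneg hainf_nonneg (Real.sqrt_nonneg _)) (hP _ hτmδ)
  have hm₁ainf : ainf < m₁ := by
    rw [hm₁def, lt_div_iff₀ hsqrtM]; exact hP _ hτmδ
  have hval : ∀ u ∈ Icc (τ₀ - δ) (τ₀ + δ), ∀ s ∈ Icc (1:ℝ) M,
      a u / Real.sqrt s ∈ Icc m₁ m₂ := by
    intro u hu s hs
    have hs1 : (1:ℝ) ≤ Real.sqrt s := Real.one_le_sqrt.2 hs.1
    have hssM : Real.sqrt s ≤ Real.sqrt M := Real.sqrt_le_sqrt hs.2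
    have hau : a (τ₀ - δ) ≤ a u :=
      ha_mono.monotoneOn (hPpos _ hτmδ) (hPpos _ hu) hu.1
    have hau2 : a u ≤ a (τ₀ + δ) :=
      ha_mono.monotoneOn (hPpos _ hu) (hPpos _ hτpδ) hu.2
    have haupos : 0 < a u := lt_of_lt_of_le ham hau
    constructor
    · exact div_le_div₀ (le_of_lt haupos) hau (by linarith) hssM
    · exact le_trans (div_le_self (le_of_lt haupos) hs1) hau2
  have hvalIoi : ∀ u ∈ Icc (τ₀ - δ) (τ₀ + δ), ∀ s ∈ Icc (1:ℝ) M,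
      a u / Real.sqrt s ∈ Ioi ainf :=
    fun u hu s hs => lt_of_lt_of_le hm₁ainf (hval u hu s hs).1
  have hm₁m₂ : m₁ ≤ m₂ := by
    have h := hval τ₀ hτ₀P 1 ⟨le_refl _, h1M⟩
    exact le_trans h.1 h.2
  have hIccsub : Icc m₁ m₂ ⊆ Ioi ainf := fun x hx => lt_of_lt_of_le hm₁ainf hx.1
  have hPsub : Icc (τ₀ - δ) (τ₀ + δ) ⊆ Ioi (0:ℝ) := fun u hu => hPpos u hu
  -- bounds
  obtain ⟨Cb, hCb⟩ := isCompact_Icc.exists_bound_of_continuousOn (hdb_cont.mono hIccsub)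
  obtain ⟨Cd, hCd⟩ := isCompact_Icc.exists_bound_of_continuousOn (hddb_cont.mono hIccsub)
  obtain ⟨Ca, hCa⟩ := isCompact_Icc.exists_bound_of_continuousOn (hda_cont.mono hPsub)
  obtain ⟨Cφ, hCφ⟩ := isCompact_Icc.exists_bound_of_continuousOn
    (hφ.mono (fun s (hs : s ∈ Icc (1:ℝ) M) => hs.1))
  have hCb0 : 0 ≤ Cb := le_trans (norm_nonneg _) (hCb m₁ ⟨le_refl _, hm₁m₂⟩)
  have hCd0 : 0 ≤ Cd := le_trans (norm_nonneg _) (hCd m₁ ⟨le_refl _, hm₁m₂⟩)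
  have hCa0 : 0 ≤ Ca := le_trans (norm_nonneg _) (hCa τ₀ hτ₀P)
  have hCφ0 : 0 ≤ Cφ := le_trans (norm_nonneg _) (hCφ 1 ⟨le_refl _, h1M⟩)
  -- differentiability
  have haD : ∀ u ∈ Icc (τ₀ - δ) (τ₀ + δ), HasDerivAt a (deriv a u) u := fun u hu =>
    ((ha_smooth.contDiffAt (hIoi.mem_nhds (hPpos u hu))).differentiableAt (by simp)).hasDerivAt
  have hdbD : ∀ y ∈ Ioi ainf, HasDerivAt (deriv b) (deriv (deriv b) y) y := fun y hy =>
    ((hdb_smooth.contDiffAt (isOpen_Ioi.mem_nhds hy)).differentiableAt (by simp)).hasDerivAt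
  -- the integrands
  set F : ℝ → ℝ → ℝ := fun u s =>
    deriv b (a u / Real.sqrt s) * (φ s / Real.sqrt (s - 1)) with hFdef
  set F' : ℝ → ℝ → ℝ := fun u s =>
    deriv (deriv b) (a u / Real.sqrt s) * (deriv a u / Real.sqrt s) *
      (φ s / Real.sqrt (s - 1)) with hF'def
  have hsub1M : ∀ s ∈ Ioc (1:ℝ) M, s ∈ Icc (1:ℝ) M := fun s hs => ⟨le_of_lt hs.1, hs.2⟩
  have hFcont : ∀ u ∈ Icc (τ₀ - δ) (τ₀ + δ), ContinuousOn (F u) (Ioc 1 M) := by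
    intro u hu
    rw [hFdef]
    apply ContinuousOn.mul
    · apply hdb_cont.comp
      · exact continuousOn_const.div Real.continuous_sqrt.continuousOn
          (fun s hs => ne_of_gt (Real.sqrt_pos.2 (by linarith [hs.1])))
      · intro s hs; exact hvalIoi u hu s (hsub1M s hs)
    · exact ContinuousOn.div (hφ.mono (fun s hs => le_of_lt hs.1))
        ((Real.continuous_sqrt.comp (continuous_id.sub continuous_const)).continuousOn)
        (fun s hs => ne_of_gt (Real.sqrt_pos.2 (by simp; linarith [hs.1])))
  have hF'cont : ∀ u ∈ Icc (τ₀ - δ) (τ₀ + δ), ContinuousOn (F' u) (Ioc 1 M) := by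
    intro u hu
    rw [hF'def]
    apply ContinuousOn.mul
    · apply ContinuousOn.mul
      · apply hddb_cont.comp
        · exact continuousOn_const.div Real.continuous_sqrt.continuousOn
            (fun s hs => ne_of_gt (Real.sqrt_pos.2 (by linarith [hs.1])))
        · intro s hs; exact hvalIoi u hu s (hsub1M s hs)
      · exact continuousOn_const.div Real.continuous_sqrt.continuousOn
          (fun s hs => ne_of_gt (Real.sqrt_pos.2 (by linarith [hs.1])))
    · exact ContinuousOn.div (hφ.mono (fun s hs => le_of_lt hs.1))
        ((Real.continuous_sqrt.comp (continuous_id.sub continuous_const)).continuousOn)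
        (fun s hs => ne_of_gt (Real.sqrt_pos.2 (by simp; linarith [hs.1])))
  -- interval inclusion
  have hΙsub : ∀ c₁ ∈ Icc (1:ℝ) M, ∀ c₂ ∈ Icc (1:ℝ) M, Set.uIoc c₁ c₂ ⊆ Ioc 1 M := by
    intro c₁ h₁ c₂ h₂ s hs
    replace hs : s ∈ Ioc (min c₁ c₂) (max c₁ c₂) := hs
    exact ⟨lt_of_le_of_lt (le_min h₁.1 h₂.1) hs.1, le_trans hs.2 (max_le h₁.2 h₂.2)⟩
  have hbnd_int : ∀ (C : ℝ) (c₁ c₂ : ℝ),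
      IntervalIntegrable (fun s => C * (s - 1) ^ (-(1/2) : ℝ)) volume c₁ c₂ :=
    fun C c₁ c₂ => (aux_rint c₁ c₂).const_mul C
  -- integrability of F u on subintervals of [1, M]
  have hFint : ∀ u ∈ Icc (τ₀ - δ) (τ₀ + δ), ∀ c₁ ∈ Icc (1:ℝ) M, ∀ c₂ ∈ Icc (1:ℝ) M,
      IntervalIntegrable (F u) volume c₁ c₂ := by
    intro u hu c₁ h₁ c₂ h₂
    apply IntervalIntegrable.mono_fun' (hbnd_int (Cb * Cφ) c₁ c₂)
    · exact ((hFcont u hu).mono (hΙsub c₁ h₁ c₂ h₂)).aestronglyMeasurable measurableSet_uIoc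
    · apply (ae_restrict_iff' measurableSet_uIoc).2 (Filter.Eventually.of_forall ?_)
      intro s hs
      have hs' := hΙsub c₁ h₁ c₂ h₂ hs
      have hspos : (0:ℝ) < Real.sqrt (s - 1) := Real.sqrt_pos.2 (by linarith [hs'.1])
      have hmem : a u / Real.sqrt s ∈ Icc m₁ m₂ := hval u hu s (hsub1M s hs')
      calc ‖F u s‖
          = ‖deriv b (a u / Real.sqrt s)‖ * (‖φ s‖ / Real.sqrt (s - 1)) := by
            rw [hFdef]
            simp [Real.norm_eq_abs, abs_mul, abs_div, abs_of_nonneg (Real.sqrt_nonneg (s-1))]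
        _ ≤ Cb * (Cφ / Real.sqrt (s - 1)) := by
            apply mul_le_mul (hCb _ hmem)
              ((div_le_div_iff_of_pos_right hspos).2 (hCφ s ⟨le_of_lt hs'.1, hs'.2⟩))
              (by positivity) hCb0
        _ = Cb * Cφ * ((s - 1) ^ (-(1/2) : ℝ)) := by
            rw [aux_sqrt_rpow hs'.1]; ring
  have hσsM : σ₀ τ₀ ∈ Icc (1:ℝ) M := ⟨le_of_lt hσ₀_lb, le_of_lt hMσ⟩
  have hone : (1:ℝ) ∈ Icc (1:ℝ) M := ⟨le_refl _, h1M⟩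
  have hballP : Metric.ball τ₀ δ ⊆ Icc (τ₀ - δ) (τ₀ + δ) := by
    rw [Real.ball_eq_Ioo]; exact Ioo_subset_Icc_self
  -- Part A : differentiation under the integral sign on the fixed interval [1, σ₀ τ₀]
  have partA : HasDerivAt (fun u => ∫ s in (1:ℝ)..σ₀ τ₀, F u s)
      (∫ s in (1:ℝ)..σ₀ τ₀, F' τ₀ s) τ₀ := by
    refine (intervalIntegral.hasDerivAt_integral_of_dominated_loc_of_deriv_le (Metric.ball_mem_nhds τ₀ hδ0)
      ?_ (hFint τ₀ hτ₀P 1 hone _ hσsM) ?_ ?_ (hbnd_int (Cd * Ca * Cφ) 1 (σ₀ τ₀)) ?_).2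
    · filter_upwards [Metric.ball_mem_nhds τ₀ hδ0] with u hu
      exact ((hFcont u (hballP hu)).mono
        (hΙsub 1 hone _ hσsM)).aestronglyMeasurable measurableSet_uIoc
    · exact ((hF'cont τ₀ hτ₀P).mono
        (hΙsub 1 hone _ hσsM)).aestronglyMeasurable measurableSet_uIoc
    · apply Filter.Eventually.of_forall
      intro s hs u hu
      have hs' := hΙsub 1 hone _ hσsM hs
      have hu' := hballP hu
      have hspos : (0:ℝ) < Real.sqrt (s - 1) := Real.sqrt_pos.2 (by linarith [hs'.1])
      have hsp1 : (1:ℝ) ≤ Real.sqrt s := Real.one_le_sqrt.2 (le_of_lt hs'.1)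
      have hmem : a u / Real.sqrt s ∈ Icc m₁ m₂ := hval u hu' s (hsub1M s hs')
      calc ‖F' u s‖
          = ‖deriv (deriv b) (a u / Real.sqrt s)‖ * (‖deriv a u‖ / Real.sqrt s) *
              (‖φ s‖ / Real.sqrt (s - 1)) := by
            rw [hF'def]
            simp [Real.norm_eq_abs, abs_mul, abs_div, abs_of_nonneg (Real.sqrt_nonneg (s-1)),
              abs_of_nonneg (Real.sqrt_nonneg s)]
            try ring
        _ ≤ Cd * Ca * (Cφ / Real.sqrt (s - 1)) := by
            have e1 : ‖deriv (deriv b) (a u / Real.sqrt s)‖ ≤ Cd := hCd _ hmem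
            have e2 : ‖deriv a u‖ / Real.sqrt s ≤ Ca :=
              le_trans (div_le_self (norm_nonneg _) hsp1) (hCa u hu')
            have e3 : ‖φ s‖ / Real.sqrt (s - 1) ≤ Cφ / Real.sqrt (s - 1) :=
              (div_le_div_iff_of_pos_right hspos).2 (hCφ s ⟨le_of_lt hs'.1, hs'.2⟩)
            apply mul_le_mul (mul_le_mul e1 e2 (by positivity) hCd0) e3
              (by positivity) (mul_nonneg hCd0 hCa0)
        _ = Cd * Ca * Cφ * ((s - 1) ^ (-(1/2) : ℝ)) := by
            rw [aux_sqrt_rpow hs'.1]; ring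
    · apply Filter.Eventually.of_forall
      intro s hs u hu
      have hs' := hΙsub 1 hone _ hσsM hs
      have hu' := hballP hu
      have hinner : HasDerivAt (fun v => a v / Real.sqrt s) (deriv a u / Real.sqrt s) u :=
        (haD u hu').div_const _
      have houter := hdbD _ (hvalIoi u hu' s (hsub1M s hs'))
      have hcomp := (houter.comp u hinner).mul_const (φ s / Real.sqrt (s - 1))
      exact hcomp
  -- a small closed interval J around σ₀ τ₀ inside (1, M)
  set κ := min ((σ₀ τ₀ - 1) / 2) ((M - σ₀ τ₀) / 2) with hκdef
  have hκ0 : 0 < κ := lt_min (by linarith) (by linarith)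
  have hκ1 : 1 < σ₀ τ₀ - κ := by
    have := min_le_left ((σ₀ τ₀ - 1) / 2) ((M - σ₀ τ₀) / 2); rw [hκdef]; linarith
  have hκM : σ₀ τ₀ + κ < M := by
    have := min_le_right ((σ₀ τ₀ - 1) / 2) ((M - σ₀ τ₀) / 2); rw [hκdef]; linarith
  have hJsub : Icc (σ₀ τ₀ - κ) (σ₀ τ₀ + κ) ⊆ Ioc 1 M :=
    fun s hs => ⟨by linarith [hs.1], by linarith [hs.2]⟩
  have hσsJ : σ₀ τ₀ ∈ Icc (σ₀ τ₀ - κ) (σ₀ τ₀ + κ) := ⟨by linarith, by linarith⟩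
  obtain ⟨W, hW⟩ := isCompact_Icc.exists_bound_of_continuousOn
    (s := Icc (σ₀ τ₀ - κ) (σ₀ τ₀ + κ))
    (ContinuousOn.div (hφ.mono (fun s hs => le_of_lt (hJsub hs).1))
      ((Real.continuous_sqrt.comp (continuous_sub_right (1:ℝ))).continuousOn)
      (fun s hs => ne_of_gt (Real.sqrt_pos.2 (by
        have := (hJsub hs).1; dsimp only; linarith))))
  have hW0 : 0 ≤ W := le_trans (norm_nonneg _) (hW (σ₀ τ₀) hσsJ)
  -- Part B : fundamental theorem of calculus + chain rule
  have hfIcontIoo : ContinuousOn (F τ₀) (Ioo 1 M) := (hFcont τ₀ hτ₀P).mono Ioo_subset_Ioc_self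
  have hIooMem : Ioo (1:ℝ) M ∈ 𝓝 (σ₀ τ₀) := Ioo_mem_nhds hσ₀_lb hMσ
  have hΨ : HasDerivAt (fun σ => ∫ s in (σ₀ τ₀)..σ, F τ₀ s) (F τ₀ (σ₀ τ₀)) (σ₀ τ₀) :=
    intervalIntegral.integral_hasDerivAt_right (IntervalIntegrable.refl)
      ⟨Ioo 1 M, hIooMem, hfIcontIoo.aestronglyMeasurable measurableSet_Ioo⟩
      (hfIcontIoo.continuousAt hIooMem)
  have hσ₀D : HasDerivAt σ₀ (deriv σ₀ τ₀) τ₀ := hσ₀_diff.hasDerivAt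
  have partB : HasDerivAt (fun u => ∫ s in (σ₀ τ₀)..σ₀ u, F τ₀ s)
      (F τ₀ (σ₀ τ₀) * deriv σ₀ τ₀) τ₀ := hΨ.comp τ₀ hσ₀D
  -- Part R : the remainder term has derivative 0
  set R : ℝ → ℝ := fun u => ∫ s in (σ₀ τ₀)..σ₀ u, (F u s - F τ₀ s) with hRdef
  have hLip : ∀ s ∈ Icc (σ₀ τ₀ - κ) (σ₀ τ₀ + κ), ∀ u ∈ Icc (τ₀ - δ) (τ₀ + δ),
      ‖deriv b (a u / Real.sqrt s) - deriv b (a τ₀ / Real.sqrt s)‖ ≤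
        Cd * Ca * ‖u - τ₀‖ := by
    intro s hs u hu
    have hsmem : s ∈ Icc (1:ℝ) M := hsub1M s (hJsub hs)
    have hsp1 : (1:ℝ) ≤ Real.sqrt s := Real.one_le_sqrt.2 hsmem.1
    apply (convex_Icc (τ₀ - δ) (τ₀ + δ)).norm_image_sub_le_of_norm_hasDerivWithin_le
      (f' := fun v => deriv (deriv b) (a v / Real.sqrt s) * (deriv a v / Real.sqrt s))
      (fun v hv => ((hdbD _ (hvalIoi v hv s hsmem)).comp v
        ((haD v hv).div_const _)).hasDerivWithinAt)
      (fun v hv => ?_) hτ₀P hu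
    rw [norm_mul]
    have e2 : ‖deriv a v / Real.sqrt s‖ ≤ Ca := by
      rw [norm_div, Real.norm_eq_abs (Real.sqrt s), abs_of_nonneg (Real.sqrt_nonneg s)]
      exact le_trans (div_le_self (norm_nonneg _) hsp1) (hCa v hv)
    exact mul_le_mul (hCd _ (hval v hv s hsmem)) e2 (norm_nonneg _) hCd0
  obtain ⟨c, hc⟩ := hσ₀D.hasFDerivAt.isBigO_sub.bound
  have hJev : ∀ᶠ u in 𝓝 τ₀, σ₀ u ∈ Icc (σ₀ τ₀ - κ) (σ₀ τ₀ + κ) :=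
    hσ₀D.continuousAt (Icc_mem_nhds (by linarith) (by linarith))
  have hRbound : ∀ᶠ u in 𝓝 τ₀,
      ‖R u‖ ≤ (Cd * Ca * W * |c|) * (‖u - τ₀‖ * ‖u - τ₀‖) := by
    filter_upwards [hJev, hc, Metric.ball_mem_nhds τ₀ hδ0] with u huJ huc hub'
    have huP := hballP hub'
    have key : ∀ s ∈ Set.uIoc (σ₀ τ₀) (σ₀ u), ‖F u s - F τ₀ s‖ ≤ Cd * Ca * ‖u - τ₀‖ * W := by
      intro s hs
      replace hs : s ∈ Ioc (min (σ₀ τ₀) (σ₀ u)) (max (σ₀ τ₀) (σ₀ u)) := hs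
      have hsJ : s ∈ Icc (σ₀ τ₀ - κ) (σ₀ τ₀ + κ) := by
        constructor
        · exact le_of_lt (lt_of_le_of_lt (le_min (by linarith) huJ.1) hs.1)
        · exact le_trans hs.2 (max_le (by linarith) huJ.2)
      have factored : F u s - F τ₀ s =
          (deriv b (a u / Real.sqrt s) - deriv b (a τ₀ / Real.sqrt s)) *
            (φ s / Real.sqrt (s - 1)) := by rw [hFdef]; ring
      rw [factored, norm_mul]
      exact mul_le_mul (hLip s hsJ u huP) (hW s hsJ) (norm_nonneg _)
        (mul_nonneg (mul_nonneg hCd0 hCa0) (norm_nonneg _))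
    have h1 := intervalIntegral.norm_integral_le_of_norm_le_const key
    rw [hRdef]
    refine le_trans h1 ?_
    have h2 : |σ₀ u - σ₀ τ₀| ≤ |c| * ‖u - τ₀‖ := by
      refine le_trans ?_ (mul_le_mul_of_nonneg_right (le_abs_self c) (norm_nonneg _))
      simpa using huc
    calc Cd * Ca * ‖u - τ₀‖ * W * |σ₀ u - σ₀ τ₀|
        ≤ Cd * Ca * ‖u - τ₀‖ * W * (|c| * ‖u - τ₀‖) := by
          apply mul_le_mul_of_nonneg_left h2
          exact mul_nonneg (mul_nonneg (mul_nonneg hCd0 hCa0) (norm_nonneg _)) hW0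
      _ = (Cd * Ca * W * |c|) * (‖u - τ₀‖ * ‖u - τ₀‖) := by ring
  have hRat0 : R τ₀ = 0 := by rw [hRdef]; simp
  have hR : HasDerivAt R 0 τ₀ := by
    rw [hasDerivAt_iff_isLittleO, hRat0]
    simp only [sub_zero, smul_zero]
    have h0 : Tendsto (fun u : ℝ => u - τ₀) (𝓝 τ₀) (𝓝 0) := by
      simpa using (continuous_sub_right τ₀).tendsto τ₀
    have hsq2 : (fun u : ℝ => ‖u - τ₀‖ * ‖u - τ₀‖) =o[𝓝 τ₀] fun u => u - τ₀ := by
      rw [Asymptotics.isLittleO_iff]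
      intro ε hε
      have hev : ∀ᶠ u in 𝓝 τ₀, ‖u - τ₀‖ ≤ ε := by
        have h3 := h0 (Metric.closedBall_mem_nhds (0:ℝ) hε)
        filter_upwards [h3] with u h4
        simpa [Real.dist_eq] using h4
      filter_upwards [hev] with u h4
      rw [Real.norm_eq_abs (‖u - τ₀‖ * ‖u - τ₀‖),
        abs_of_nonneg (mul_nonneg (norm_nonneg _) (norm_nonneg _))]
      exact mul_le_mul_of_nonneg_right h4 (norm_nonneg _)
    refine Asymptotics.IsBigO.trans_isLittleO (Asymptotics.isBigO_iff.2
      ⟨Cd * Ca * W * |c|, ?_⟩) hsq2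
    filter_upwards [hRbound] with u h4
    rw [Real.norm_eq_abs (‖u - τ₀‖ * ‖u - τ₀‖),
      abs_of_nonneg (mul_nonneg (norm_nonneg _) (norm_nonneg _))]
    exact h4
  -- assemble
  have hsum := partA.add (partB.add hR)
  have hEq : (fun u => ∫ s in (1:ℝ)..σ₀ u, F u s)
      =ᶠ[𝓝 τ₀] (fun u => (∫ s in (1:ℝ)..σ₀ τ₀, F u s) +
        ((∫ s in (σ₀ τ₀)..σ₀ u, F τ₀ s) + R u)) := by
    filter_upwards [hJev, Metric.ball_mem_nhds τ₀ hδ0] with u huJ hub'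
    have huP := hballP hub'
    have hσuM : σ₀ u ∈ Icc (1:ℝ) M := ⟨by linarith [huJ.1], by linarith [huJ.2]⟩
    have i1 : IntervalIntegrable (F u) volume 1 (σ₀ τ₀) := hFint u huP 1 hone _ hσsM
    have i2 : IntervalIntegrable (F u) volume (σ₀ τ₀) (σ₀ u) := hFint u huP _ hσsM _ hσuM
    have i3 : IntervalIntegrable (F τ₀) volume (σ₀ τ₀) (σ₀ u) := hFint τ₀ hτ₀P _ hσsM _ hσuM
    have e1 : (∫ s in (1:ℝ)..σ₀ u, F u s) =
        (∫ s in (1:ℝ)..σ₀ τ₀, F u s) + ∫ s in (σ₀ τ₀)..σ₀ u, F u s :=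
      (intervalIntegral.integral_add_adjacent_intervals i1 i2).symm
    have e2 : (∫ s in (σ₀ τ₀)..σ₀ u, F u s) =
        (∫ s in (σ₀ τ₀)..σ₀ u, F τ₀ s) + R u := by
      rw [hRdef, ← intervalIntegral.integral_add i3 (i2.sub i3)]
      congr 1
      funext s
      ring
    rw [e1, e2]
  have hfinal := hsum.congr_of_eventuallyEq hEq
  refine hfinal.congr_deriv ?_
  rw [hFdef, hF'def]
  ring

/-- the Fermi relative speed of a comoving test particle with fixed
comoving coordinate χ₀ exists and equals the stated integral expression. -/
theorem fermi_speed_of_comoving_particle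
    (a b : ℝ → ℝ) (ainf : ℝ)
    (ha_smooth : ContDiffOn ℝ (⊤ : ℕ∞) a (Set.Ioi 0))
    (ha_pos : ∀ t, 0 < t → 0 < a t)
    (ha_mono : StrictMonoOn a (Set.Ioi 0))
    (ha_deriv_pos : ∀ t, 0 < t → 0 < deriv a t)
    (hainf_nonneg : 0 ≤ ainf)
    (hainf : Tendsto a (nhdsWithin 0 (Set.Ioi 0)) (nhds ainf))
    (hba : ∀ t, 0 < t → b (a t) = t)
    (hab : ∀ y, ainf < y → 0 < b y ∧ a (b y) = y)
    (hb_smooth : ContDiffOn ℝ (⊤ : ℕ∞) b (Set.Ioi ainf))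
    (hb_deriv : ∀ t, 0 < t → deriv b (a t) = 1 / deriv a t)
    (χ₀ : ℝ) (hχ₀ : 0 < χ₀) (σ₀ : ℝ → ℝ)
    (hσ₀_diff : ∀ τ, 0 < τ → DifferentiableAt ℝ σ₀ τ)
    (hσ₀_lb : ∀ τ, 0 < τ → 1 < σ₀ τ)
    (hσ₀_ub : ∀ τ, 0 < τ → 0 < ainf → σ₀ τ < (a τ / ainf) ^ 2)
    (hσ₀_chi : ∀ τ, 0 < τ → chiF a b τ (σ₀ τ) = χ₀) :
    ∀ τ, 0 < τ → HasDerivAt (fun u => rhoF a b u (σ₀ u)) (vFgen a b τ (σ₀ τ)) τ := by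
  intro τ hτ
  have hσlb := hσ₀_lb τ hτ
  have hub : ainf * Real.sqrt (σ₀ τ) < a τ := by
    rcases eq_or_lt_of_le hainf_nonneg with h0 | h0
    · rw [← h0]; simpa using ha_pos τ hτ
    · have h1 := hσ₀_ub τ hτ h0
      have h2 : Real.sqrt (σ₀ τ) < a τ / ainf := by
        have h3 := Real.sqrt_lt_sqrt (by linarith : (0:ℝ) ≤ σ₀ τ) h1
        rwa [Real.sqrt_sq (le_of_lt (div_pos (ha_pos τ hτ) h0))] at h3
      calc ainf * Real.sqrt (σ₀ τ) < ainf * (a τ / ainf) := by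
            exact mul_lt_mul_of_pos_left h2 h0
        _ = a τ := by field_simp
  -- the two weights
  have hφ₁ : ContinuousOn (fun s : ℝ => 1 / Real.sqrt s) (Set.Ici 1) :=
    continuousOn_const.div Real.continuous_sqrt.continuousOn
      (fun s hs => ne_of_gt (Real.sqrt_pos.2 (by simp only [Set.mem_Ici] at hs; linarith)))
  have hφ₃ : ContinuousOn (fun s : ℝ => 1 / (s * Real.sqrt s)) (Set.Ici 1) := by
    apply continuousOn_const.div (continuousOn_id.mul Real.continuous_sqrt.continuousOn)
    intro s hs
    simp only [Set.mem_Ici] at hs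
    have : (0:ℝ) < Real.sqrt s := Real.sqrt_pos.2 (by linarith)
    have hs0 : (0:ℝ) < s := by linarith
    exact ne_of_gt (mul_pos hs0 this)
  have h1 : HasDerivAt (fun u => ∫ s in (1:ℝ)..σ₀ u,
        deriv b (a u / Real.sqrt s) * ((1 / Real.sqrt s) / Real.sqrt (s - 1)))
      ((∫ s in (1:ℝ)..σ₀ τ,
          deriv (deriv b) (a τ / Real.sqrt s) * (deriv a τ / Real.sqrt s) *
            ((1 / Real.sqrt s) / Real.sqrt (s - 1)))
        + deriv b (a τ / Real.sqrt (σ₀ τ)) *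
            ((1 / Real.sqrt (σ₀ τ)) / Real.sqrt (σ₀ τ - 1)) * deriv σ₀ τ) τ :=
    master a b ainf ha_smooth ha_mono hainf_nonneg hb_smooth σ₀ τ hτ
      (hσ₀_diff τ hτ) hσlb hub (fun s => 1 / Real.sqrt s) hφ₁
  have h3 : HasDerivAt (fun u => ∫ s in (1:ℝ)..σ₀ u,
        deriv b (a u / Real.sqrt s) * ((1 / (s * Real.sqrt s)) / Real.sqrt (s - 1)))
      ((∫ s in (1:ℝ)..σ₀ τ,
          deriv (deriv b) (a τ / Real.sqrt s) * (deriv a τ / Real.sqrt s) *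
            ((1 / (s * Real.sqrt s)) / Real.sqrt (s - 1)))
        + deriv b (a τ / Real.sqrt (σ₀ τ)) *
            ((1 / (σ₀ τ * Real.sqrt (σ₀ τ))) / Real.sqrt (σ₀ τ - 1)) * deriv σ₀ τ) τ :=
    master a b ainf ha_smooth ha_mono hainf_nonneg hb_smooth σ₀ τ hτ
      (hσ₀_diff τ hτ) hσlb hub (fun s => 1 / (s * Real.sqrt s)) hφ₃
  -- the constancy of χ along the trajectory
  have hfunχ : (fun u => chiF a b u (σ₀ u)) =
      fun u => (1/2 : ℝ) * ∫ s in (1:ℝ)..σ₀ u,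
        deriv b (a u / Real.sqrt s) * ((1 / Real.sqrt s) / Real.sqrt (s - 1)) := by
    funext u
    unfold chiF
    congr 1
    apply intervalIntegral.integral_congr
    intro s _
    ring
  have hχder : HasDerivAt (fun u => chiF a b u (σ₀ u))
      ((1/2 : ℝ) * ((∫ s in (1:ℝ)..σ₀ τ,
          deriv (deriv b) (a τ / Real.sqrt s) * (deriv a τ / Real.sqrt s) *
            ((1 / Real.sqrt s) / Real.sqrt (s - 1)))
        + deriv b (a τ / Real.sqrt (σ₀ τ)) *
            ((1 / Real.sqrt (σ₀ τ)) / Real.sqrt (σ₀ τ - 1)) * deriv σ₀ τ)) τ := by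
    rw [hfunχ]
    exact h1.const_mul (1/2 : ℝ)
  have hχconst : (fun u => chiF a b u (σ₀ u)) =ᶠ[𝓝 τ] fun _ => χ₀ := by
    filter_upwards [Ioi_mem_nhds hτ] with u hu using hσ₀_chi u hu
  have hzero : (1/2 : ℝ) * ((∫ s in (1:ℝ)..σ₀ τ,
          deriv (deriv b) (a τ / Real.sqrt s) * (deriv a τ / Real.sqrt s) *
            ((1 / Real.sqrt s) / Real.sqrt (s - 1)))
        + deriv b (a τ / Real.sqrt (σ₀ τ)) *
            ((1 / Real.sqrt (σ₀ τ)) / Real.sqrt (σ₀ τ - 1)) * deriv σ₀ τ) = 0 :=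
    hχder.unique ((hasDerivAt_const τ χ₀).congr_of_eventuallyEq hχconst)
  -- derivative of ρ along the trajectory
  have hfunρ : (fun u => rhoF a b u (σ₀ u)) =
      fun u => (a u / 2) * ∫ s in (1:ℝ)..σ₀ u,
        deriv b (a u / Real.sqrt s) * ((1 / (s * Real.sqrt s)) / Real.sqrt (s - 1)) := by
    funext u
    unfold rhoF
    congr 1
    apply intervalIntegral.integral_congr
    intro s _
    ring
  have haτD : HasDerivAt (fun u => a u / 2) (deriv a τ / 2) τ :=
    (((ha_smooth.contDiffAt (isOpen_Ioi.mem_nhds hτ)).differentiableAt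
      (by simp)).hasDerivAt).div_const 2
  have hmul := haτD.mul h3
  have hρder : HasDerivAt (fun u => rhoF a b u (σ₀ u))
      (deriv a τ / 2 * (∫ s in (1:ℝ)..σ₀ τ,
          deriv b (a τ / Real.sqrt s) * ((1 / (s * Real.sqrt s)) / Real.sqrt (s - 1))) +
        a τ / 2 * ((∫ s in (1:ℝ)..σ₀ τ,
          deriv (deriv b) (a τ / Real.sqrt s) * (deriv a τ / Real.sqrt s) *
            ((1 / (s * Real.sqrt s)) / Real.sqrt (s - 1)))
        + deriv b (a τ / Real.sqrt (σ₀ τ)) *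
            ((1 / (σ₀ τ * Real.sqrt (σ₀ τ))) / Real.sqrt (σ₀ τ - 1)) * deriv σ₀ τ)) τ := by
    rw [hfunρ]
    exact hmul
  -- algebraic identities between the integrals
  have hIoc1 : ∀ {s : ℝ}, s ∈ Set.uIoc (1:ℝ) (σ₀ τ) → 1 < s := by
    intro s hs
    replace hs : s ∈ Ioc (min (1:ℝ) (σ₀ τ)) (max (1:ℝ) (σ₀ τ)) := hs
    have : min (1:ℝ) (σ₀ τ) = 1 := min_eq_left (by linarith)
    rw [this] at hs
    exact hs.1
  have eqI : (∫ s in (1:ℝ)..σ₀ τ,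
        deriv b (a τ / Real.sqrt s) * ((1 / (s * Real.sqrt s)) / Real.sqrt (s - 1)))
      = ∫ s in (1:ℝ)..σ₀ τ,
        deriv b (a τ / Real.sqrt s) / (s * Real.sqrt s * Real.sqrt (s - 1)) := by
    apply intervalIntegral.integral_congr
    intro s _
    ring
  have eqA3 : (∫ s in (1:ℝ)..σ₀ τ,
        deriv (deriv b) (a τ / Real.sqrt s) * (deriv a τ / Real.sqrt s) *
          ((1 / (s * Real.sqrt s)) / Real.sqrt (s - 1)))
      = deriv a τ * ∫ s in (1:ℝ)..σ₀ τ,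
          deriv (deriv b) (a τ / Real.sqrt s) / (s ^ 2 * Real.sqrt (s - 1)) := by
    rw [← intervalIntegral.integral_const_mul]
    apply intervalIntegral.integral_congr_ae
    apply Filter.Eventually.of_forall
    intro s hs
    have h1s : (1:ℝ) < s := hIoc1 hs
    have hss : Real.sqrt s * Real.sqrt s = s := Real.mul_self_sqrt (by linarith)
    have key : Real.sqrt s * (s * Real.sqrt s) = s ^ 2 := by
      calc Real.sqrt s * (s * Real.sqrt s) = (Real.sqrt s * Real.sqrt s) * s := by ring
        _ = s * s := by rw [hss]
        _ = s ^ 2 := (sq s).symm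
    calc deriv (deriv b) (a τ / Real.sqrt s) * (deriv a τ / Real.sqrt s) *
          ((1 / (s * Real.sqrt s)) / Real.sqrt (s - 1))
        = deriv a τ * (deriv (deriv b) (a τ / Real.sqrt s) /
            ((Real.sqrt s * (s * Real.sqrt s)) * Real.sqrt (s - 1))) := by ring
      _ = deriv a τ * (deriv (deriv b) (a τ / Real.sqrt s) /
            (s ^ 2 * Real.sqrt (s - 1))) := by rw [key]
  have eqA1 : (∫ s in (1:ℝ)..σ₀ τ,
        deriv (deriv b) (a τ / Real.sqrt s) * (deriv a τ / Real.sqrt s) *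
          ((1 / Real.sqrt s) / Real.sqrt (s - 1)))
      = deriv a τ * ∫ s in (1:ℝ)..σ₀ τ,
          deriv (deriv b) (a τ / Real.sqrt s) / (s * Real.sqrt (s - 1)) := by
    rw [← intervalIntegral.integral_const_mul]
    apply intervalIntegral.integral_congr_ae
    apply Filter.Eventually.of_forall
    intro s hs
    have h1s : (1:ℝ) < s := hIoc1 hs
    have hss : Real.sqrt s * Real.sqrt s = s := Real.mul_self_sqrt (by linarith)
    calc deriv (deriv b) (a τ / Real.sqrt s) * (deriv a τ / Real.sqrt s) *
          ((1 / Real.sqrt s) / Real.sqrt (s - 1))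
        = deriv a τ * (deriv (deriv b) (a τ / Real.sqrt s) /
            ((Real.sqrt s * Real.sqrt s) * Real.sqrt (s - 1))) := by ring
      _ = deriv a τ * (deriv (deriv b) (a τ / Real.sqrt s) /
            (s * Real.sqrt (s - 1))) := by rw [hss]
  rw [eqA1] at hzero
  rw [eqI, eqA3] at hρder
  convert hρder using 1
  unfold vFgen
  linear_combination (-(a τ / σ₀ τ)) * hzero
end
end

section
/- Fix τ > 0 and define, for σ₀ ∈ (1, σ∞(τ)), the Fermi-speed expression V(σ₀) = (ȧ(τ)/2)·[ ∫₁^{σ₀} ḃ(a(τ)/√σ)·σ^{−3/2}(σ−1)^{−1/2} dσ + a(τ)∫₁^{σ₀} b̈(a(τ)/√σ)·σ^{−2}(σ−1)^{−1/2} dσ − (a(τ)/σ₀)∫₁^{σ₀} b̈(a(τ)/√σ)·σ^{−1}(σ−1)^{−1/2} dσ ]. Then V is differentiable with V′(σ₀) = (ȧ(τ)/(2σ₀²))·[ √(σ₀/(σ₀−1))·ḃ(a(τ)/√σ₀) + a(τ)∫₁^{σ₀} b̈(a(τ)/√σ)·σ^{−1}(σ−1)^{−1/2} dσ ] > 0;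 in particular V is strictly increasing, so the Fermi relative speed of a comoving test particle is a monotone increasing function of its comoving coordinate χ₀. -/
open Real MeasureTheory Filter Set intervalIntegral

noncomputable section

/-- the Fermi-speed expression V(σ₀) is differentiable with the stated
positive derivative, hence strictly increasing in the comoving coordinate. -/
theorem fermi_speed_strict_mono
    (a b : ℝ → ℝ) (ainf : ℝ)
    (ha_smooth : ContDiffOn ℝ (⊤ : ℕ∞) a (Set.Ioi 0))
    (ha_pos : ∀ t, 0 < t → 0 < a t)
    (ha_mono : StrictMonoOn a (Set.Ioi 0))
    (ha_deriv_pos : ∀ t, 0 < t → 0 < deriv a t)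
    (hainf_nonneg : 0 ≤ ainf)
    (hainf : Tendsto a (nhdsWithin 0 (Set.Ioi 0)) (nhds ainf))
    (hba : ∀ t, 0 < t → b (a t) = t)
    (hab : ∀ y, ainf < y → 0 < b y ∧ a (b y) = y)
    (hb_smooth : ContDiffOn ℝ (⊤ : ℕ∞) b (Set.Ioi ainf))
    (hb_deriv : ∀ t, 0 < t → deriv b (a t) = 1 / deriv a t)
    (hb2_nonneg : ∀ t, 0 < t → 0 ≤ deriv (deriv b) t)
    (τ : ℝ) (hτ : 0 < τ) :
    (∀ σ₀ : ℝ, 1 < σ₀ → (0 < ainf → σ₀ < (a τ / ainf) ^ 2) →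
      HasDerivAt (vFgen a b τ)
        ((deriv a τ / (2 * σ₀ ^ 2)) *
          (Real.sqrt (σ₀ / (σ₀ - 1)) * deriv b (a τ / Real.sqrt σ₀) +
            a τ *
              ∫ σ in (1:ℝ)..σ₀,
                deriv (deriv b) (a τ / Real.sqrt σ) / (σ * Real.sqrt (σ - 1)))) σ₀ ∧
      0 < (deriv a τ / (2 * σ₀ ^ 2)) *
          (Real.sqrt (σ₀ / (σ₀ - 1)) * deriv b (a τ / Real.sqrt σ₀) +
            a τ *
              ∫ σ in (1:ℝ)..σ₀,
                deriv (deriv b) (a τ / Real.sqrt σ) / (σ * Real.sqrt (σ - 1)))) ∧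
    StrictMonoOn (vFgen a b τ) {σ₀ : ℝ | 1 < σ₀ ∧ (0 < ainf → σ₀ < (a τ / ainf) ^ 2)} := by
  -- Basic positivity facts
  have hA0 : 0 < a τ := ha_pos τ hτ
  set A := a τ with hAdef
  set D := deriv a τ with hDdef
  have hD0 : 0 < D := ha_deriv_pos τ hτ
  -- ainf < A
  have hainfA : ainf < A := by
    have hτ2 : (0:ℝ) < τ / 2 := by linarith
    have hle : ainf ≤ a (τ / 2) := by
      refine le_of_tendsto hainf ?_
      filter_upwards [Ioo_mem_nhdsGT_of_mem (Set.left_mem_Ico.mpr hτ2)] with s hs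
      exact (ha_mono hs.1 hτ2 hs.2).le
    exact lt_of_le_of_lt hle (ha_mono hτ2 hτ (by linarith))
  -- key bound: arguments of b-derivatives stay above ainf
  have key : ∀ σ₀ : ℝ, 1 < σ₀ → (0 < ainf → σ₀ < (A / ainf) ^ 2) →
      ∀ σ, 1 ≤ σ → σ ≤ σ₀ → ainf < A / Real.sqrt σ := by
    intro σ₀ h1 h2 σ hσ1 hσ2
    have hσ0 : (0:ℝ) < σ := by linarith
    have hs : 0 < Real.sqrt σ := Real.sqrt_pos.mpr hσ0
    rcases eq_or_lt_of_le hainf_nonneg with h0 | h0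
    · rw [← h0]; positivity
    · have hc := h2 h0
      have h4 : Real.sqrt σ ≤ Real.sqrt σ₀ := Real.sqrt_le_sqrt hσ2
      have h5 : Real.sqrt σ₀ < A / ainf := by
        have := Real.sqrt_lt_sqrt (by positivity) hc
        rwa [Real.sqrt_sq (le_of_lt (div_pos hA0 h0))] at this
      have h6 : Real.sqrt σ₀ * ainf < A := (lt_div_iff₀ h0).mp h5
      rw [lt_div_iff₀ hs]
      nlinarith
  -- continuity of the derivatives of b
  have hdb1 : ContDiffOn ℝ (⊤ : ℕ∞) (deriv b) (Set.Ioi ainf) :=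
    hb_smooth.deriv_of_isOpen isOpen_Ioi (by simp)
  have hdb2 : ContDiffOn ℝ (⊤ : ℕ∞) (deriv (deriv b)) (Set.Ioi ainf) :=
    hdb1.deriv_of_isOpen isOpen_Ioi (by simp)
  have hdbc : ContinuousOn (deriv b) (Set.Ioi ainf) := hdb1.continuousOn
  have hddbc : ContinuousOn (deriv (deriv b)) (Set.Ioi ainf) := hdb2.continuousOn
  -- generic continuity of σ ↦ f (A / √σ)
  have hcomp : ∀ f : ℝ → ℝ, ContinuousOn f (Set.Ioi ainf) → ∀ σ : ℝ, 0 < σ →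
      ainf < A / Real.sqrt σ → ContinuousAt (fun x => f (A / Real.sqrt x)) σ := by
    intro f hf σ hσ hlt
    have hs : Real.sqrt σ ≠ 0 := ne_of_gt (Real.sqrt_pos.mpr hσ)
    have hin : ContinuousAt (fun x : ℝ => A / Real.sqrt x) σ :=
      ContinuousAt.div continuousAt_const
        (Real.continuous_sqrt.continuousAt : ContinuousAt Real.sqrt σ) hs
    exact ContinuousAt.comp (g := f) (f := fun x : ℝ => A / Real.sqrt x)
      (hf.continuousAt (isOpen_Ioi.mem_nhds hlt)) hin
  -- positivity of deriv b on (ainf, ∞)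
  have hdb_pos : ∀ y, ainf < y → 0 < deriv b y := by
    intro y hy
    obtain ⟨hby, haby⟩ := hab y hy
    have h := hb_deriv (b y) hby
    rw [haby] at h
    rw [h]
    exact one_div_pos.mpr (ha_deriv_pos (b y) hby)
  -- the admissible set
  set U : Set ℝ := {x : ℝ | 1 < x ∧ (0 < ainf → x < (A / ainf) ^ 2)} with hUdef
  have hUcases : U = Set.Ioo 1 ((A / ainf) ^ 2) ∨ U = Set.Ioi 1 := by
    by_cases h : 0 < ainf
    · left; ext x; simp [hUdef, Set.mem_Ioo, h]
    · right; ext x; simp [hUdef, h]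
  have hUopen : IsOpen U := by
    rcases hUcases with h | h <;> rw [h]
    exacts [isOpen_Ioo, isOpen_Ioi]
  have hUconv : Convex ℝ U := by
    rcases hUcases with h | h <;> rw [h]
    exacts [convex_Ioo _ _, convex_Ioi _]
  -- continuity of the integrands at points of U
  have hgcont : ∀ f : ℝ → ℝ, ContinuousOn f (Set.Ioi ainf) → ∀ den : ℝ → ℝ,
      Continuous den → ∀ σ ∈ U, den σ ≠ 0 →
      ContinuousAt (fun x => f (A / Real.sqrt x) / (den x * Real.sqrt (x - 1))) σ := by
    intro f hf den hden σ hσ hne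
    have h1 : (1:ℝ) < σ := hσ.1
    have hlt := key σ h1 hσ.2 σ h1.le le_rfl
    have hwne : Real.sqrt (σ - 1) ≠ 0 := ne_of_gt (Real.sqrt_pos.mpr (by linarith))
    exact (hcomp f hf σ (by linarith) hlt).div
      ((hden.continuousAt).mul
        ((Real.continuous_sqrt.comp (continuous_id.sub continuous_const)).continuousAt))
      (mul_ne_zero hne hwne)
  -- the main derivative computation
  have main : ∀ σ₀ : ℝ, 1 < σ₀ → (0 < ainf → σ₀ < (A / ainf) ^ 2) →
      HasDerivAt (vFgen a b τ)
        ((D / (2 * σ₀ ^ 2)) *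
          (Real.sqrt (σ₀ / (σ₀ - 1)) * deriv b (A / Real.sqrt σ₀) +
            A * ∫ σ in (1:ℝ)..σ₀,
                deriv (deriv b) (A / Real.sqrt σ) / (σ * Real.sqrt (σ - 1)))) σ₀ ∧
      0 < (D / (2 * σ₀ ^ 2)) *
          (Real.sqrt (σ₀ / (σ₀ - 1)) * deriv b (A / Real.sqrt σ₀) +
            A * ∫ σ in (1:ℝ)..σ₀,
                deriv (deriv b) (A / Real.sqrt σ) / (σ * Real.sqrt (σ - 1))) := by
    intro σ₀ h1 h2
    have hσ₀U : σ₀ ∈ U := ⟨h1, h2⟩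
    have hσ0 : (0:ℝ) < σ₀ := by linarith
    have hUsub : Set.Ioc (1:ℝ) σ₀ ⊆ U := by
      intro σ hσ
      exact ⟨hσ.1, fun h => lt_of_le_of_lt hσ.2 (h2 h)⟩
    -- integrability of the integrands
    have hInt : ∀ f den : ℝ → ℝ, ContinuousOn f (Set.Ioi ainf) → Continuous den →
        (∀ x : ℝ, 1 ≤ x → den x ≠ 0) →
        IntervalIntegrable
          (fun x => f (A / Real.sqrt x) / (den x * Real.sqrt (x - 1))) volume 1 σ₀ := by
      intro f den hf hden hdne
      rw [intervalIntegrable_iff_integrableOn_Ioc_of_le h1.le]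
      have hh : ContinuousOn (fun x => f (A / Real.sqrt x) / den x) (Set.Icc 1 σ₀) := by
        intro x hx
        exact ((hcomp f hf x (by linarith [hx.1]) (key σ₀ h1 h2 x hx.1 hx.2)).div
          hden.continuousAt (hdne x hx.1)).continuousWithinAt
      obtain ⟨M, hM⟩ := isCompact_Icc.exists_bound_of_continuousOn hh
      have hφ : IntegrableOn (fun x => M * (Real.sqrt (x - 1))⁻¹) (Set.Ioc 1 σ₀) := by
        have h1' : IntervalIntegrable (fun x : ℝ => x ^ (-(1/2) : ℝ)) volume 0 (σ₀ - 1) :=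
          intervalIntegral.intervalIntegrable_rpow' (by norm_num)
        have h2' := h1'.comp_sub_right 1
        rw [show (0:ℝ) + 1 = 1 by ring, show σ₀ - 1 + 1 = σ₀ by ring] at h2'
        have h3' := (intervalIntegrable_iff_integrableOn_Ioc_of_le h1.le).mp h2'
        have h4' : IntegrableOn (fun x => (Real.sqrt (x - 1))⁻¹) (Set.Ioc 1 σ₀) := by
          refine h3'.congr_fun ?_ measurableSet_Ioc
          intro x hx
          show (x - 1) ^ (-(1/2) : ℝ) = (Real.sqrt (x - 1))⁻¹
          rw [Real.sqrt_eq_rpow, ← Real.rpow_neg (by linarith [hx.1] : (0:ℝ) ≤ x - 1)]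
        exact h4'.const_mul M
      refine hφ.mono' ?_ ?_
      · refine ContinuousOn.aestronglyMeasurable ?_ measurableSet_Ioc
        intro x hx
        exact (hgcont f hf den hden x (hUsub hx) (hdne x hx.1.le)).continuousWithinAt
      · filter_upwards [MeasureTheory.ae_restrict_mem measurableSet_Ioc] with x hx
        have hx' : x ∈ Set.Icc (1:ℝ) σ₀ := ⟨hx.1.le, hx.2⟩
        have hw : (0:ℝ) ≤ (Real.sqrt (x - 1))⁻¹ := by positivity
        have heq : f (A / Real.sqrt x) / (den x * Real.sqrt (x - 1)) =
            f (A / Real.sqrt x) / den x * (Real.sqrt (x - 1))⁻¹ := by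
          rw [← div_div, div_eq_mul_inv]
        rw [heq, norm_mul, Real.norm_eq_abs (Real.sqrt (x - 1))⁻¹, abs_of_nonneg hw]
        exact mul_le_mul_of_nonneg_right (hM x hx') hw
    -- FTC for each integrand
    have hFTC : ∀ f den : ℝ → ℝ, ContinuousOn f (Set.Ioi ainf) → Continuous den →
        (∀ x : ℝ, 1 ≤ x → den x ≠ 0) →
        HasDerivAt
          (fun x => ∫ σ in (1:ℝ)..x, f (A / Real.sqrt σ) / (den σ * Real.sqrt (σ - 1)))
          (f (A / Real.sqrt σ₀) / (den σ₀ * Real.sqrt (σ₀ - 1))) σ₀ := by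
      intro f den hf hden hdne
      refine intervalIntegral.integral_hasDerivAt_right (hInt f den hf hden hdne) ?_ ?_
      · exact ContinuousAt.stronglyMeasurableAtFilter hUopen
          (fun x hx => hgcont f hf den hden x hx (hdne x hx.1.le)) σ₀ hσ₀U
      · exact hgcont f hf den hden σ₀ hσ₀U (hdne σ₀ h1.le)
    -- the three concrete FTC statements
    have hF1 : HasDerivAt
        (fun x => ∫ σ in (1:ℝ)..x,
          deriv b (A / Real.sqrt σ) / (σ * Real.sqrt σ * Real.sqrt (σ - 1)))
        (deriv b (A / Real.sqrt σ₀) / (σ₀ * Real.sqrt σ₀ * Real.sqrt (σ₀ - 1))) σ₀ := by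
      exact hFTC (deriv b) (fun x => x * Real.sqrt x) hdbc
        (continuous_id.mul Real.continuous_sqrt)
        (fun x hx => by positivity)
    have hF2 : HasDerivAt
        (fun x => ∫ σ in (1:ℝ)..x,
          deriv (deriv b) (A / Real.sqrt σ) / (σ ^ 2 * Real.sqrt (σ - 1)))
        (deriv (deriv b) (A / Real.sqrt σ₀) / (σ₀ ^ 2 * Real.sqrt (σ₀ - 1))) σ₀ := by
      exact hFTC (deriv (deriv b)) (fun x => x ^ 2) hddbc
        (continuous_pow 2) (fun x hx => by positivity)
    have hF3 : HasDerivAt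
        (fun x => ∫ σ in (1:ℝ)..x,
          deriv (deriv b) (A / Real.sqrt σ) / (σ * Real.sqrt (σ - 1)))
        (deriv (deriv b) (A / Real.sqrt σ₀) / (σ₀ * Real.sqrt (σ₀ - 1))) σ₀ := by
      exact hFTC (deriv (deriv b)) (fun x => x) hddbc
        continuous_id (fun x hx => by positivity)
    -- derivative of A / x
    have hq : HasDerivAt (fun x : ℝ => A / x) (A * -(σ₀ ^ 2)⁻¹) σ₀ := by
      have := (hasDerivAt_inv (ne_of_gt hσ0)).const_mul A
      simpa [div_eq_mul_inv] using this
    have hprod := hq.mul hF3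
    have hsum := ((hF1.add (hF2.const_mul A)).sub hprod).const_mul (D / 2)
    -- positivity facts for the final expression
    have hsw : (0:ℝ) < Real.sqrt σ₀ := Real.sqrt_pos.mpr hσ0
    have hw : (0:ℝ) < Real.sqrt (σ₀ - 1) := Real.sqrt_pos.mpr (by linarith)
    have hIpos : 0 ≤ ∫ σ in (1:ℝ)..σ₀,
        deriv (deriv b) (A / Real.sqrt σ) / (σ * Real.sqrt (σ - 1)) := by
      refine intervalIntegral.integral_nonneg h1.le ?_
      intro u hu
      have hu0 : (0:ℝ) < u := by linarith [hu.1]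
      refine div_nonneg ?_ (by positivity)
      exact hb2_nonneg _ (div_pos hA0 (Real.sqrt_pos.mpr hu0))
    have hp : 0 < deriv b (A / Real.sqrt σ₀) :=
      hdb_pos _ (key σ₀ h1 h2 σ₀ h1.le le_rfl)
    constructor
    · -- identify vFgen with the function differentiated above
      have hfun : vFgen a b τ = fun x => (D / 2) *
          ((∫ σ in (1:ℝ)..x,
              deriv b (A / Real.sqrt σ) / (σ * Real.sqrt σ * Real.sqrt (σ - 1))) +
            A * (∫ σ in (1:ℝ)..x,
              deriv (deriv b) (A / Real.sqrt σ) / (σ ^ 2 * Real.sqrt (σ - 1))) -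
            (A / x) * (∫ σ in (1:ℝ)..x,
              deriv (deriv b) (A / Real.sqrt σ) / (σ * Real.sqrt (σ - 1)))) := rfl
      rw [hfun]
      convert hsum using 1
      case e'_4 => rfl
      case e'_5 => rfl
      case e'_8 => rfl
      -- equality of the two derivative expressions
      rw [Real.sqrt_div hσ0.le]
      have hss : Real.sqrt σ₀ * Real.sqrt σ₀ = σ₀ := Real.mul_self_sqrt hσ0.le
      set s := Real.sqrt σ₀ with hs
      set w := Real.sqrt (σ₀ - 1) with hwdef
      set I := ∫ σ in (1:ℝ)..σ₀,
        deriv (deriv b) (A / Real.sqrt σ) / (σ * Real.sqrt (σ - 1)) with hI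
      set p := deriv b (A / s) with hpdef
      set q := deriv (deriv b) (A / s) with hqdef
      rw [← hss]
      have hsne : s ≠ 0 := ne_of_gt hsw
      have hwne : w ≠ 0 := ne_of_gt hw
      field_simp
      ring
    · -- positivity
      refine mul_pos (by positivity) ?_
      refine add_pos_of_pos_of_nonneg ?_ (mul_nonneg hA0.le hIpos)
      exact mul_pos (Real.sqrt_pos.mpr (div_pos hσ0 (by linarith))) hp
  refine ⟨fun σ₀ h1 h2 => main σ₀ h1 h2, ?_⟩
  have hmono : StrictMonoOn (vFgen a b τ) U := by
    refine strictMonoOn_of_deriv_pos hUconv ?_ ?_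
    · intro x hx
      exact ((main x hx.1 hx.2).1.differentiableAt.continuousAt).continuousWithinAt
    · intro x hx
      rw [hUopen.interior_eq] at hx
      rw [(main x hx.1 hx.2).1.deriv]
      exact (main x hx.1 hx.2).2
  exact hmono
end
end

section
/- For a(t) = t^α with 0 < α ≤ 1 (so b(t) = t^{1/α}, ḃ(t) = (1/α)t^{1/α−1}, b̈(t) = (1/α)(1/α−1)t^{1/α−2}), the general Fermi-speed expression (ȧ(τ)/2)·[ ∫₁^{σ₀} ḃ(a(τ)/√σ)·σ^{−3/2}(σ−1)^{−1/2} dσ + a(τ)∫₁^{σ₀} b̈(a(τ)/√σ)·σ^{−2}(σ−1)^{−1/2} dσ − (a(τ)/σ₀)∫₁^{σ₀} b̈(a(τ)/√σ)·σ^{−1}(σ−1)^{−1/2} dσ ] equals, for every τ > 0 and σ₀ ∈ (1,∞), (1/(2α))·[ ∫₁^{σ₀} σ^{−(1/(2α)+1)}(σ−1)^{−1/2} dσ + ((α−1)/σ₀)∫₁^{σ₀} σ^{−1/(2α)}(σ−1)^{−1/2} dσ ]; in particular the Fermi relative speed of a comoving test particle is independent of τ. -/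
/-!
For `b(t) = t ^ p` the derivatives `ḃ` and `b̈` are again power functions, so at `a(τ)/√σ` they
split into a power of `a(τ)` times a power of `σ`. Each integral in `vFgen` thus factors into a
power of `a(τ)` times a `τ`-free integral of `σ ^ r / √(σ - 1)`, and the three together carry the
common factor `a(τ) ^ (p - 1)`. For `a(τ) = τ ^ α` and `p = 1 / α` this factor is `τ ^ (1 - α)`,
which cancels against `ȧ(τ) = α τ ^ (α - 1)`.
-/

open Real MeasureTheory Filter Set intervalIntegral

noncomputable section

lemma deriv_deriv_rpow_const (p x : ℝ) :
    deriv (deriv fun t : ℝ => t ^ p) x = p * (p - 1) * x ^ (p - 2) := by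
  rw [deriv_rpow_const', deriv_const_mul_field, Real.deriv_rpow_const]
  ring_nf

lemma div_sqrt_rpow_div_rpow {x σ : ℝ} (hx : 0 ≤ x) (hσ : 0 < σ) (q k : ℝ) :
    (x / √σ) ^ q / σ ^ k = x ^ q * σ ^ (-(q / 2) - k) := by
  rw [sqrt_eq_rpow, div_rpow hx (by positivity), ← rpow_mul hσ.le, div_div, ← rpow_add hσ,
    div_eq_mul_inv, ← rpow_neg hσ.le]
  ring_nf

lemma integral_div_mul_sqrt_sub_one {f g : ℝ → ℝ} {c r σ₀ : ℝ} (hσ₀ : 0 < σ₀)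
    (h : ∀ σ, 0 < σ → f σ / g σ = c * σ ^ r) :
    ∫ σ in (1:ℝ)..σ₀, f σ / (g σ * √(σ - 1)) = c * ∫ σ in (1:ℝ)..σ₀, σ ^ r / √(σ - 1) := by
  rw [← intervalIntegral.integral_const_mul]
  refine integral_congr fun σ hσ => ?_
  have hσ_pos : 0 < σ := (lt_min one_pos hσ₀).trans_le hσ.1
  simp only [← div_div, h σ hσ_pos, mul_div_assoc]

section

variable {p x σ : ℝ} (hx : 0 < x) (hσ : 0 < σ)
include hx hσ

lemma deriv_rpow_const_div_sqrt_div :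
    deriv (fun t : ℝ => t ^ p) (x / √σ) / (σ * √σ) = p * x ^ (p - 1) * σ ^ (-(p / 2 + 1)) := by
  have : σ * √σ = σ ^ (3 / 2 : ℝ) := by
    rw [sqrt_eq_rpow, ← rpow_one_add' hσ.le (by norm_num)]; norm_num
  rw [Real.deriv_rpow_const, this, mul_div_assoc, div_sqrt_rpow_div_rpow hx.le hσ]
  ring_nf

lemma deriv_deriv_rpow_const_div_sqrt_div_sq :
    deriv (deriv fun t : ℝ => t ^ p) (x / √σ) / σ ^ 2 =
      p * (p - 1) * x ^ (p - 2) * σ ^ (-(p / 2 + 1)) := by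
  rw [deriv_deriv_rpow_const, ← rpow_natCast, mul_div_assoc, div_sqrt_rpow_div_rpow hx.le hσ]
  ring_nf

lemma deriv_deriv_rpow_const_div_sqrt_div :
    deriv (deriv fun t : ℝ => t ^ p) (x / √σ) / σ =
      p * (p - 1) * x ^ (p - 2) * σ ^ (-(p / 2)) := by
  have h := div_sqrt_rpow_div_rpow hx.le hσ (p - 2) 1
  rw [rpow_one] at h
  rw [deriv_deriv_rpow_const, mul_div_assoc, h]
  ring_nf

end

lemma vFgen_rpow_const {a : ℝ → ℝ} {p τ σ₀ : ℝ} (ha : 0 < a τ) (hσ₀ : 0 < σ₀) :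
    vFgen a (fun t : ℝ => t ^ p) τ σ₀ =
      deriv a τ / 2 * p * a τ ^ (p - 1) *
        (p * (∫ σ in (1:ℝ)..σ₀, σ ^ (-(p / 2 + 1)) / √(σ - 1)) -
          (p - 1) / σ₀ * ∫ σ in (1:ℝ)..σ₀, σ ^ (-(p / 2)) / √(σ - 1)) := by
  rw [vFgen, integral_div_mul_sqrt_sub_one hσ₀ fun σ hσ => deriv_rpow_const_div_sqrt_div ha hσ,
    integral_div_mul_sqrt_sub_one hσ₀ fun σ hσ => deriv_deriv_rpow_const_div_sqrt_div_sq ha hσ,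
    integral_div_mul_sqrt_sub_one hσ₀ fun σ hσ => deriv_deriv_rpow_const_div_sqrt_div ha hσ]
  have h : a τ ^ (p - 2) = a τ ^ (p - 1) / a τ := by
    rw [← rpow_sub_one ha.ne']; ring_nf
  rw [h]
  field_simp
  ring

theorem fermi_speed_power_law_general
    (α : ℝ) (hα0 : 0 < α) (τ σ₀ : ℝ) (hτ : 0 < τ) (hσ₀ : 1 < σ₀) :
    vFgen (fun t : ℝ => t ^ α) (fun t : ℝ => t ^ (1 / α)) τ σ₀ =
      (1 / (2 * α)) *
        ((∫ σ in (1:ℝ)..σ₀, σ ^ (-(1 / (2 * α) + 1)) / Real.sqrt (σ - 1)) +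
          ((α - 1) / σ₀) * ∫ σ in (1:ℝ)..σ₀, σ ^ (-(1 / (2 * α))) / Real.sqrt (σ - 1)) := by
  have hτ_cancel : τ ^ (α - 1) * τ ^ (1 - α) = 1 := by
    rw [← rpow_add hτ, sub_add_sub_cancel', sub_self, rpow_zero]
  rw [vFgen_rpow_const (a := fun t => t ^ α) (rpow_pos_of_pos hτ α) (zero_lt_one.trans hσ₀),
    Real.deriv_rpow_const, ← rpow_mul hτ.le, show α * (1 / α - 1) = 1 - α by field_simp,
    show 1 / α / 2 = 1 / (2 * α) by ring]
  field_simp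
  rw [hτ_cancel]
  ring

/-- for a(t) = t^α (0 < α ≤ 1), the general Fermi-speed expression
reduces to the stated τ-independent formula. -/
theorem fermi_speed_power_law
    (α : ℝ) (hα0 : 0 < α) (hα1 : α ≤ 1) (τ σ₀ : ℝ) (hτ : 0 < τ) (hσ₀ : 1 < σ₀) :
    vFgen (fun t : ℝ => t ^ α) (fun t : ℝ => t ^ (1 / α)) τ σ₀ =
      (1 / (2 * α)) *
        ((∫ σ in (1:ℝ)..σ₀, σ ^ (-(1 / (2 * α) + 1)) / Real.sqrt (σ - 1)) +
          ((α - 1) / σ₀) * ∫ σ in (1:ℝ)..σ₀, σ ^ (-(1 / (2 * α))) / Real.sqrt (σ - 1)) :=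
  fermi_speed_power_law_general α hα0 τ σ₀ hτ hσ₀
end
end

section
/- For a(t) = t^α with 0 < α ≤ 1, the proper distance from the Fermi observer at proper time τ to the comoving particle at parameter σ₀ satisfies ρ_τ(σ₀) = (τ/(2α))∫₁^{σ₀} σ^{−(1/(2α)+1)}(σ−1)^{−1/2} dσ for all τ > 0 and σ₀ ≥ 1; consequently the Fermi relative speed satisfies the identity v_F(σ₀) = ρ_τ(σ₀)/τ + ((α−1)/(2α·σ₀))∫₁^{σ₀} σ^{−1/(2α)}(σ−1)^{−1/2} dσ. -/
open Real MeasureTheory Filter Set intervalIntegral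

noncomputable section

/-- The Fermi relative speed of a comoving test particle at parameter σ₀ for a(t) = t^α. -/
def vFpow (α σ₀ : ℝ) : ℝ :=
  (1 / (2 * α)) *
    ((∫ σ in (1:ℝ)..σ₀, σ ^ (-(1 / (2 * α) + 1)) / Real.sqrt (σ - 1)) +
      ((α - 1) / σ₀) * ∫ σ in (1:ℝ)..σ₀, σ ^ (-(1 / (2 * α))) / Real.sqrt (σ - 1))

/-!
Since `ḃ(x) = x^(1/α - 1)/α`, at `x = τ^α/√s` one gets `ḃ = τ^(1-α) s^((α-1)/(2α))/α`. Together with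
the factor `s^(-3/2)` this leaves the single power `s^(-(1/(2α)+1))` under the integral, and the prefactor
`a(τ) τ^(1-α) = τ` comes out. The formula for `v_F` is then its definition with the first integral
recognised as `2α ρ_τ(σ₀)/τ`.
-/

lemma deriv_rpow_inv_rpow_div_sqrt {α τ s : ℝ} (hα : α ≠ 0) (hτ : 0 < τ) (hs : 0 < s) :
    deriv (fun t : ℝ => t ^ (1 / α)) (τ ^ α / √s) =
      τ ^ (1 - α) / α * s ^ ((α - 1) / (2 * α)) := by
  have hpow : (τ ^ α / √s) ^ (1 / α - 1) = τ ^ (1 - α) * s ^ ((α - 1) / (2 * α)) := by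
    rw [div_rpow (rpow_pos_of_pos hτ α).le (sqrt_nonneg s), ← rpow_mul hτ.le, sqrt_eq_rpow,
      ← rpow_mul hs.le, div_eq_mul_inv, ← rpow_neg hs.le]
    congr 2
    · field_simp
    · field_simp
      ring
  rw [Real.deriv_rpow_const, hpow]
  ring

lemma rpow_div_mul_sqrt {s : ℝ} (hs : 0 < s) (p : ℝ) : s ^ p / (s * √s) = s ^ (p - 3 / 2) := by
  rw [rpow_sub hs, sqrt_eq_rpow, ← rpow_one_add' hs.le (by norm_num)]
  norm_num

lemma rhoF_rpow_integrand {α τ s : ℝ} (hα : α ≠ 0) (hτ : 0 < τ) (hs : 0 < s) :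
    deriv (fun t : ℝ => t ^ (1 / α)) (τ ^ α / √s) / (s * √s * √(s - 1)) =
      τ ^ (1 - α) / α * (s ^ (-(1 / (2 * α) + 1)) / √(s - 1)) := by
  have hexp : (α - 1) / (2 * α) - 3 / 2 = -(1 / (2 * α) + 1) := by
    field_simp
    ring
  rw [deriv_rpow_inv_rpow_div_sqrt hα hτ hs, ← hexp, ← rpow_div_mul_sqrt hs]
  ring

theorem rhoF_rpow {α τ σ₀ : ℝ} (hα : α ≠ 0) (hτ : 0 < τ) (hσ₀ : 0 < σ₀) :
    rhoF (fun t : ℝ => t ^ α) (fun t : ℝ => t ^ (1 / α)) τ σ₀ =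
      (τ / (2 * α)) * ∫ σ in (1:ℝ)..σ₀, σ ^ (-(1 / (2 * α) + 1)) / √(σ - 1) := by
  have hpos : ∀ s ∈ uIcc (1:ℝ) σ₀, 0 < s := fun s hs =>
    lt_of_lt_of_le (lt_min one_pos hσ₀) hs.1
  rw [rhoF, integral_congr fun s hs => rhoF_rpow_integrand hα hτ (hpos s hs),
    intervalIntegral.integral_const_mul]
  have hτ_split : τ ^ α * τ ^ (1 - α) = τ := by
    rw [← rpow_add hτ, add_sub_cancel, rpow_one]
  conv_rhs => rw [← hτ_split]
  ring

theorem fermi_distance_and_speed_power_law_general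
    (α : ℝ) (hα0 : 0 < α) (τ : ℝ) (hτ : 0 < τ) :
    (∀ σ₀ : ℝ, 1 ≤ σ₀ →
      rhoF (fun t : ℝ => t ^ α) (fun t : ℝ => t ^ (1 / α)) τ σ₀ =
        (τ / (2 * α)) * ∫ σ in (1:ℝ)..σ₀, σ ^ (-(1 / (2 * α) + 1)) / Real.sqrt (σ - 1)) ∧
    (∀ σ₀ : ℝ, 1 < σ₀ →
      vFpow α σ₀ =
        rhoF (fun t : ℝ => t ^ α) (fun t : ℝ => t ^ (1 / α)) τ σ₀ / τ +
          ((α - 1) / (2 * α * σ₀)) *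
            ∫ σ in (1:ℝ)..σ₀, σ ^ (-(1 / (2 * α))) / Real.sqrt (σ - 1)) := by
  refine ⟨fun σ₀ hσ₀ => rhoF_rpow hα0.ne' hτ (by linarith), fun σ₀ hσ₀ => ?_⟩
  rw [rhoF_rpow hα0.ne' hτ (by linarith), vFpow]
  field_simp

/-- for a(t) = t^α, ρ_τ(σ₀) = (τ/(2α))∫₁^{σ₀} σ^{-(1/(2α)+1)}(σ-1)^{-1/2} dσ,
and consequently v_F(σ₀) = ρ_τ(σ₀)/τ + ((α-1)/(2ασ₀))∫₁^{σ₀} σ^{-1/(2α)}(σ-1)^{-1/2} dσ. -/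
theorem fermi_distance_and_speed_power_law
    (α : ℝ) (hα0 : 0 < α) (hα1 : α ≤ 1) (τ : ℝ) (hτ : 0 < τ) :
    (∀ σ₀ : ℝ, 1 ≤ σ₀ →
      rhoF (fun t : ℝ => t ^ α) (fun t : ℝ => t ^ (1 / α)) τ σ₀ =
        (τ / (2 * α)) * ∫ σ in (1:ℝ)..σ₀, σ ^ (-(1 / (2 * α) + 1)) / Real.sqrt (σ - 1)) ∧
    (∀ σ₀ : ℝ, 1 < σ₀ →
      vFpow α σ₀ =
        rhoF (fun t : ℝ => t ^ α) (fun t : ℝ => t ^ (1 / α)) τ σ₀ / τ +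
          ((α - 1) / (2 * α * σ₀)) *
            ∫ σ in (1:ℝ)..σ₀, σ ^ (-(1 / (2 * α))) / Real.sqrt (σ - 1)) :=
  fermi_distance_and_speed_power_law_general α hα0 τ hτ
end
end

section
/- For a(t) = t^α with 0 < α ≤ 1, the proper radius of the Fermi space slice M_τ of τ-simultaneous events is ρ_{M_τ} = τ·√π·Γ(1/(2α)+1/2)/(2α·Γ(1/(2α)+1)) for every τ > 0; in particular ρ_{M_τ} is a linear function of the Fermi observer's proper time τ. -/
/-!
With `b(t) = t^(1/α)` the integrand is `τ^(1-α)/α · s^(-1/(2α)-1) (s-1)^(-1/2)`, so the radius is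
`τ^α τ^(1-α)/(2α) = τ/(2α)` times `∫₁^∞ s^(-(a+b)) (s-1)^(b-1) ds` with `a = 1/(2α) + 1/2`,
`b = 1/2`. The substitution `s = 1/x` turns this integral into Euler's Beta integral
`∫₀¹ x^(a-1) (1-x)^(b-1) dx = Γ(a)Γ(b)/Γ(a+b)`, and `Γ(1/2) = √π`.
-/

open Real MeasureTheory Set

theorem integral_Ioo_zero_one_rpow_mul_one_sub_rpow {u v : ℝ} (hu : 0 < u) (hv : 0 < v) :
    ∫ x in Ioo (0:ℝ) 1, x ^ (u - 1) * (1 - x) ^ (v - 1) =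
      Gamma u * Gamma v / Gamma (u + v) := by
  have hβ := Complex.betaIntegral_eq_Gamma_mul_div u v (by simpa) (by simpa)
  rw [Complex.betaIntegral, intervalIntegral.integral_of_le zero_le_one,
    integral_Ioc_eq_integral_Ioo] at hβ
  rw [← Complex.ofReal_add, Complex.Gamma_ofReal, Complex.Gamma_ofReal, Complex.Gamma_ofReal]
    at hβ
  apply Complex.ofReal_injective
  rw [← integral_complex_ofReal]
  push_cast
  rw [← hβ]
  refine setIntegral_congr_fun measurableSet_Ioo fun x ⟨hx0, hx1⟩ => ?_
  rw [Complex.ofReal_cpow hx0.le, Complex.ofReal_cpow (by linarith)]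
  push_cast
  rfl

theorem integral_Ioi_one_rpow_mul_sub_one_rpow {a b : ℝ} (ha : 0 < a) (hb : 0 < b) :
    ∫ s in Ioi (1:ℝ), s ^ (-(a + b)) * (s - 1) ^ (b - 1) =
      Gamma a * Gamma b / Gamma (a + b) := by
  have hinv : (·⁻¹) '' Ioo (0:ℝ) 1 = Ioi 1 := by
    rw [image_inv_eq_inv, inv_Ioo_0_left one_pos, inv_one]
  rw [← hinv, integral_image_eq_integral_abs_deriv_smul measurableSet_Ioo
      (fun x hx => (hasDerivAt_inv hx.1.ne').hasDerivWithinAt) inv_injective.injOn,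
    ← integral_Ioo_zero_one_rpow_mul_one_sub_rpow ha hb]
  refine setIntegral_congr_fun measurableSet_Ioo fun x ⟨hx0, hx1⟩ => ?_
  have hsub : x⁻¹ - 1 = (1 - x) / x := by field_simp
  rw [smul_eq_mul, abs_neg, abs_inv, abs_sq, inv_rpow hx0.le, rpow_neg hx0.le, inv_inv, hsub,
    div_rpow (by linarith) hx0.le, show a - 1 = (a + b) - (b - 1) - 2 by ring,
    rpow_sub hx0 _ 2, rpow_sub hx0 (a + b), rpow_two]
  field_simp

-- The exponents are written as `-(a + b)` and `b - 1` with `a = 1/(2α) + 1/2`, `b = 1/2`.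
theorem fermi_radius_integrand_power_law {α τ s : ℝ} (hα : 0 < α) (hτ : 0 < τ) (hs : 1 < s) :
    deriv (fun t : ℝ => t ^ (1 / α)) (τ ^ α / √s) / (s * √s * √(s - 1)) =
      τ ^ (1 - α) / α * (s ^ (-((1 / (2 * α) + 1 / 2) + 1 / 2)) * (s - 1) ^ ((1:ℝ) / 2 - 1)) := by
  have hs0 : 0 < s := by linarith
  rw [Real.deriv_rpow_const, div_rpow (by positivity) (sqrt_nonneg s), ← rpow_mul hτ.le,
    sqrt_eq_rpow, sqrt_eq_rpow, ← rpow_mul hs0.le, show (1:ℝ) / 2 - 1 = -(1 / 2) by norm_num,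
    rpow_neg hs0.le, rpow_neg (sub_nonneg.2 hs.le),
    show (1 / (2 * α) + 1 / 2) + 1 / 2 = 1 / 2 * (1 / α - 1) + 1 / 2 + 1 by field_simp; ring,
    rpow_add hs0, rpow_add hs0, rpow_one, show α * (1 / α - 1) = 1 - α by field_simp]
  field_simp

theorem fermi_slice_radius_power_law_general (α : ℝ) (hα0 : 0 < α) :
    ∀ τ : ℝ, 0 < τ →
      (τ ^ α / 2) *
          (∫ s in Set.Ioi (1:ℝ),
            deriv (fun t : ℝ => t ^ (1 / α)) (τ ^ α / Real.sqrt s) /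
              (s * Real.sqrt s * Real.sqrt (s - 1))) =
        τ * (Real.sqrt π * Real.Gamma (1 / (2 * α) + 1 / 2) /
          (2 * α * Real.Gamma (1 / (2 * α) + 1))) := by
  intro τ hτ
  have hτ_pow : τ ^ α * τ ^ (1 - α) = τ := by rw [← rpow_add hτ, add_sub_cancel, rpow_one]
  rw [setIntegral_congr_fun measurableSet_Ioi
      fun s hs => fermi_radius_integrand_power_law hα0 hτ hs,
    integral_const_mul, integral_Ioi_one_rpow_mul_sub_one_rpow (by positivity) one_half_pos,
    Gamma_one_half_eq, add_assoc, add_halves]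
  conv_rhs => rw [← hτ_pow]
  field_simp

/-- for a(t) = t^α (0 < α ≤ 1), the proper radius of the Fermi space slice
M_τ equals τ·√π·Γ(1/(2α)+1/2)/(2α·Γ(1/(2α)+1)); in particular it is linear in τ. -/
theorem fermi_slice_radius_power_law (α : ℝ) (hα0 : 0 < α) (hα1 : α ≤ 1) :
    ∀ τ : ℝ, 0 < τ →
      (τ ^ α / 2) *
          (∫ s in Set.Ioi (1:ℝ),
            deriv (fun t : ℝ => t ^ (1 / α)) (τ ^ α / Real.sqrt s) /
              (s * Real.sqrt s * Real.sqrt (s - 1))) =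
        τ * (Real.sqrt π * Real.Gamma (1 / (2 * α) + 1 / 2) /
          (2 * α * Real.Gamma (1 / (2 * α) + 1))) :=
  fermi_slice_radius_power_law_general α hα0
end

section
/- The function g(α) = √π·Γ(1/(2α)+1/2)/(2α·Γ(1/(2α)+1)) is monotone decreasing on (0,1], and g(α) → ∞ as α → 0⁺. Consequently, at any fixed proper time τ > 0, the proper radii ρ_{M_τ} = τ·g(α) of the Fermi space slices in Robertson–Walker spacetimes with scale factor a(t) = t^α decrease as α increases on (0,1], and ρ_{M_τ} → ∞ as α → 0⁺. -/
/-!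
Writing `y = 1/(2α)` and using `Γ(y + 1) = y Γ(y)`, `g(α)` becomes `√π · Γ(y + 1/2) / Γ(y)`,
and `y` decreases from `∞` to `1/2` as `α` runs over `(0, 1]`. Log-convexity of `Γ` makes
`y ↦ Γ(y + s) / Γ(y)` increasing for every `s > 0`; for `s = 1/2` this ratio `r` satisfies
`r(y - 1/2) · r(y) = y - 1/2`, so `r(y) ≥ √(y - 1/2)` and `r(y) → ∞`.
-/

open Real Filter Set Topology

namespace Real

theorem Gamma_add_mul_Gamma_le_Gamma_mul_Gamma_add {x y s : ℝ} (hx : 0 < x) (hxy : x ≤ y)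
    (hs : 0 < s) : Gamma (x + s) * Gamma y ≤ Gamma x * Gamma (y + s) := by
  rcases hxy.eq_or_lt with rfl | hlt
  · rw [mul_comm]
  -- `x + s` and `y` are convex combinations of `x` and `y + s` with swapped weights.
  set t := s / (y - x + s) with ht
  have hd : 0 < y - x + s := by linarith
  have ht₀ : 0 < t := by positivity
  have ht₁ : 0 < 1 - t := by rw [sub_pos, ht, div_lt_one hd]; linarith
  have hys : 0 < y + s := by linarith
  have hΓx := Gamma_pos_of_pos hx
  have hΓys := Gamma_pos_of_pos hys
  have h₁ : Gamma (x + s) ≤ Gamma x ^ (1 - t) * Gamma (y + s) ^ t := by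
    convert Gamma_mul_add_mul_le_rpow_Gamma_mul_rpow_Gamma hx hys ht₁ ht₀ (by ring) using 2
    rw [ht]; field_simp; ring
  have h₂ : Gamma y ≤ Gamma x ^ t * Gamma (y + s) ^ (1 - t) := by
    convert Gamma_mul_add_mul_le_rpow_Gamma_mul_rpow_Gamma hx hys ht₀ ht₁ (by ring) using 2
    rw [ht]; field_simp; ring
  calc Gamma (x + s) * Gamma y
      ≤ (Gamma x ^ (1 - t) * Gamma (y + s) ^ t) * (Gamma x ^ t * Gamma (y + s) ^ (1 - t)) :=
        mul_le_mul h₁ h₂ (Gamma_pos_of_pos (hx.trans hlt)).le (by positivity)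
    _ = Gamma x * Gamma (y + s) := by
        rw [mul_mul_mul_comm, ← rpow_add hΓx, ← rpow_add hΓys, sub_add_cancel, add_sub_cancel,
          rpow_one, rpow_one]

theorem monotoneOn_Gamma_add_div_Gamma {s : ℝ} (hs : 0 < s) :
    MonotoneOn (fun x ↦ Gamma (x + s) / Gamma x) (Ioi 0) := by
  intro x hx y hy hxy
  rw [div_le_div_iff₀ (Gamma_pos_of_pos hx) (Gamma_pos_of_pos hy), mul_comm (Gamma (y + s))]
  exact Gamma_add_mul_Gamma_le_Gamma_mul_Gamma_add hx hxy hs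

theorem sqrt_sub_half_le_Gamma_add_half_div_Gamma {y : ℝ} (hy : 1 / 2 < y) :
    √(y - 1 / 2) ≤ Gamma (y + 1 / 2) / Gamma y := by
  obtain ⟨x, hx, rfl⟩ : ∃ x, 0 < x ∧ y = x + 1 / 2 := ⟨y - 1 / 2, by linarith, by ring⟩
  have hxh : 0 < x + 1 / 2 := by linarith
  have hΓxh := Gamma_pos_of_pos hxh
  have hr : 0 < Gamma (x + 1) / Gamma (x + 1 / 2) := div_pos (Gamma_pos_of_pos (by linarith)) hΓxh
  have hmono : Gamma (x + 1 / 2) / Gamma x ≤ Gamma (x + 1) / Gamma (x + 1 / 2) := by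
    have h : Gamma (x + 1 / 2) / Gamma x ≤ Gamma (x + 1 / 2 + 1 / 2) / Gamma (x + 1 / 2) :=
      monotoneOn_Gamma_add_div_Gamma one_half_pos hx hxh (by linarith)
    rwa [add_assoc, add_halves] at h
  have hprod : Gamma (x + 1 / 2) / Gamma x * (Gamma (x + 1) / Gamma (x + 1 / 2)) = x := by
    rw [Gamma_add_one hx.ne']
    field_simp
  rw [add_sub_cancel_right, add_assoc, add_halves, sqrt_le_left hr.le, sq]
  calc x = _ := hprod.symm
    _ ≤ _ := mul_le_mul_of_nonneg_right hmono hr.le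

theorem tendsto_Gamma_add_half_div_Gamma_atTop :
    Tendsto (fun y ↦ Gamma (y + 1 / 2) / Gamma y) atTop atTop := by
  refine tendsto_atTop_mono' atTop ?_
    (tendsto_sqrt_atTop.comp (tendsto_atTop_add_const_right _ (-(1 / 2)) tendsto_id))
  filter_upwards [eventually_gt_atTop (1 / 2 : ℝ)] with y hy
  simpa [sub_eq_add_neg] using sqrt_sub_half_le_Gamma_add_half_div_Gamma hy

end Real

noncomputable def fermiRadiusFactor (α : ℝ) : ℝ :=
  √π * Gamma (1 / (2 * α) + 1 / 2) / (2 * α * Gamma (1 / (2 * α) + 1))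

theorem fermiRadiusFactor_eq {α : ℝ} (hα : 0 < α) :
    fermiRadiusFactor α = √π * (Gamma (1 / (2 * α) + 1 / 2) / Gamma (1 / (2 * α))) := by
  have hy : 0 < 1 / (2 * α) := by positivity
  rw [fermiRadiusFactor, Gamma_add_one hy.ne']
  field_simp

theorem antitoneOn_fermiRadiusFactor : AntitoneOn fermiRadiusFactor (Ioi 0) := by
  intro a ha b hb hab
  rw [fermiRadiusFactor_eq ha, fermiRadiusFactor_eq hb]
  have ha' : 0 < 2 * a := mul_pos two_pos ha
  have hb' : 0 < 2 * b := mul_pos two_pos hb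
  gcongr _ * ?_
  exact monotoneOn_Gamma_add_div_Gamma one_half_pos (one_div_pos.2 hb') (one_div_pos.2 ha')
    (one_div_le_one_div_of_le ha' (by linarith))

theorem tendsto_fermiRadiusFactor_nhdsGT_zero :
    Tendsto fermiRadiusFactor (𝓝[>] 0) atTop := by
  have hy : Tendsto (fun α : ℝ ↦ 1 / (2 * α)) (𝓝[>] 0) atTop :=
    (tendsto_inv_nhdsGT_zero.const_mul_atTop (one_half_pos (α := ℝ))).congr fun α ↦ by
      simp only [one_div, mul_inv]
  refine ((tendsto_Gamma_add_half_div_Gamma_atTop.comp hy).const_mul_atTop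
    (sqrt_pos.2 pi_pos)).congr' ?_
  filter_upwards [self_mem_nhdsWithin] with α hα
  exact (fermiRadiusFactor_eq hα).symm

/-- g(α) = √π·Γ(1/(2α)+1/2)/(2α·Γ(1/(2α)+1)) is monotone decreasing on
(0,1] and tends to ∞ as α → 0⁺; consequently the proper radii ρ_{M_τ} = τ·g(α) decrease
in α and tend to ∞ as α → 0⁺, at any fixed τ > 0. -/
theorem fermi_slice_radius_antitone :
    AntitoneOn
      (fun α : ℝ =>
        Real.sqrt π * Real.Gamma (1 / (2 * α) + 1 / 2) /
          (2 * α * Real.Gamma (1 / (2 * α) + 1)))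
      (Set.Ioc 0 1) ∧
    Tendsto
      (fun α : ℝ =>
        Real.sqrt π * Real.Gamma (1 / (2 * α) + 1 / 2) /
          (2 * α * Real.Gamma (1 / (2 * α) + 1)))
      (nhdsWithin 0 (Set.Ioi 0)) atTop ∧
    (∀ τ : ℝ, 0 < τ →
      AntitoneOn
        (fun α : ℝ =>
          τ * (Real.sqrt π * Real.Gamma (1 / (2 * α) + 1 / 2) /
            (2 * α * Real.Gamma (1 / (2 * α) + 1))))
        (Set.Ioc 0 1) ∧
      Tendsto
        (fun α : ℝ =>
          τ * (Real.sqrt π * Real.Gamma (1 / (2 * α) + 1 / 2) /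
            (2 * α * Real.Gamma (1 / (2 * α) + 1))))
        (nhdsWithin 0 (Set.Ioi 0)) atTop) := by
  have hanti : AntitoneOn fermiRadiusFactor (Ioc 0 1) :=
    antitoneOn_fermiRadiusFactor.mono Ioc_subset_Ioi_self
  refine ⟨hanti, tendsto_fermiRadiusFactor_nhdsGT_zero, fun τ hτ ↦ ⟨?_, ?_⟩⟩
  · exact fun a ha b hb hab ↦ mul_le_mul_of_nonneg_left (hanti ha hb hab) hτ.le
  · exact tendsto_fermiRadiusFactor_nhdsGT_zero.const_mul_atTop hτ
end
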